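/- arXiv:2201.08073 — 6 statements merged into one kernel-verified Lean document; each statement's English description precedes it below -/
import Mathlib

section
/- Let G be a finite group and H a subgroup of G. Then H admits a Cayley transversal in G (an inverse-closed left transversal of H in G containing the identity) if and only if H is a perfect code of G. -/
namespace CayleyCodeAux

variable {G : Type*} [Group G] {H : Subgroup G}

/-- The double coset `HaH`. -/
def dc (H : Subgroup G) (a : G) : Set G := {x | ∃ h ∈ H, ∃ k ∈ H, x = h * a * k}

lemma mem_dc_self (a : G) : a ∈ dc H a :=
  ⟨1, H.one_mem, 1, H.one_mem, by simp⟩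

lemma dc_eq_of_mem {a b : G} (hb : b ∈ dc H a) : dc H b = dc H a := by
  obtain ⟨h, hh, k, hk, rfl⟩ := hb
  ext x
  constructor
  · rintro ⟨p, hp, q, hq, rfl⟩
    exact ⟨p * h, H.mul_mem hp hh, k * q, H.mul_mem hk hq, by group⟩
  · rintro ⟨p, hp, q, hq, rfl⟩
    exact ⟨p * h⁻¹, H.mul_mem hp (H.inv_mem hh), k⁻¹ * q, H.mul_mem (H.inv_mem hk) hq, by group⟩

lemma mul_mem_dc {a p x : G} (hp : p ∈ H) (hx : x ∈ dc H a) : p * x ∈ dc H a := by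
  obtain ⟨h, hh, k, hk, rfl⟩ := hx
  exact ⟨p * h, H.mul_mem hp hh, k, hk, by group⟩

lemma dc_mul_mem {a q x : G} (hx : x ∈ dc H a) (hq : q ∈ H) : x * q ∈ dc H a := by
  obtain ⟨h, hh, k, hk, rfl⟩ := hx
  exact ⟨h, hh, k * q, H.mul_mem hk hq, by group⟩

lemma dc_inv (a : G) : (dc H a)⁻¹ = dc H a⁻¹ := by
  ext x
  simp only [Set.mem_inv, dc, Set.mem_setOf_eq]
  constructor
  · rintro ⟨h, hh, k, hk, hx⟩
    refine ⟨k⁻¹, H.inv_mem hk, h⁻¹, H.inv_mem hh, ?_⟩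
    have hx' : x = (h * a * k)⁻¹ := by rw [← hx]; simp
    rw [hx']; group
  · rintro ⟨h, hh, k, hk, rfl⟩
    exact ⟨k⁻¹, H.inv_mem hk, h⁻¹, H.inv_mem hh, by group⟩

lemma mem_H_of_dc {a x : G} (hx : x ∈ dc H a) (hxH : x ∈ H) : a ∈ H := by
  obtain ⟨h, hh, k, hk, rfl⟩ := hx
  have ha : a = h⁻¹ * (h * a * k) * k⁻¹ := by group
  rw [ha]
  exact H.mul_mem (H.mul_mem (H.inv_mem hh) hxH) (H.inv_mem hk)

/-- The set of left cosets contained in the double coset `HaH`. -/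
def cs (H : Subgroup G) (a : G) : Set (G ⧸ H) := {C | ∃ x : G, (x : G ⧸ H) = C ∧ x ∈ dc H a}

lemma mk_mem_cs {a x : G} : (x : G ⧸ H) ∈ cs H a ↔ x ∈ dc H a := by
  constructor
  · rintro ⟨y, hy, hyd⟩
    have hyx : y⁻¹ * x ∈ H := QuotientGroup.eq.mp hy
    have hx : x = y * (y⁻¹ * x) := by group
    rw [hx]
    exact dc_mul_mem hyd hyx
  · exact fun h => ⟨x, rfl, h⟩

lemma cs_congr {a b : G} (h : dc H a = dc H b) : cs H a = cs H b := by
  unfold cs; rw [h]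

lemma dc_eq_of_cs_mem {a b : G} {C : G ⧸ H} (ha : C ∈ cs H a) (hb : C ∈ cs H b) :
    dc H a = dc H b := by
  obtain ⟨x, hx, hxd⟩ := ha
  obtain ⟨y, hy, hyd⟩ := hb
  have hxy : x⁻¹ * y ∈ H := QuotientGroup.eq.mp (hx.trans hy.symm)
  have hya : y ∈ dc H a := by
    have h' : y = x * (x⁻¹ * y) := by group
    rw [h']
    exact dc_mul_mem hxd hxy
  exact (dc_eq_of_mem hya).symm.trans (dc_eq_of_mem hyd)

lemma not_mem_cs_of_ne {x c : G} (h : dc H x ≠ dc H c) : (x : G ⧸ H) ∉ cs H c :=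
  fun hm => h (dc_eq_of_cs_mem (mk_mem_cs.mpr (mem_dc_self x)) hm)

lemma dc_eq_of_mk_mem_cs {x c : G} (h : (x : G ⧸ H) ∈ cs H c) : dc H x = dc H c :=
  dc_eq_of_cs_mem (mk_mem_cs.mpr (mem_dc_self x)) h

lemma dc_eq_preimage (a : G) : dc H a = QuotientGroup.mk ⁻¹' (cs H a) :=
  Set.ext fun _ => mk_mem_cs.symm

lemma card_dc [Finite G] (a : G) :
    Nat.card (dc H a) = Nat.card H * (cs H a).ncard := by
  have e := Nat.card_congr (QuotientGroup.preimageMkEquivSubgroupProdSet H (cs H a))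
  rw [← dc_eq_preimage] at e
  rw [e, Nat.card_prod, Nat.card_coe_set_eq]

lemma ncard_cs_inv [Finite G] (a : G) : (cs H a).ncard = (cs H a⁻¹).ncard := by
  have h1 : Nat.card (dc H a) = Nat.card (dc H a⁻¹) := by
    rw [← dc_inv, Nat.card_coe_set_eq, Nat.card_coe_set_eq, Set.ncard_inv]
  have h2 := card_dc (H := H) a
  have h3 := card_dc (H := H) a⁻¹
  have hpos : 0 < Nat.card H := Nat.card_pos
  exact Nat.eq_of_mul_eq_mul_left hpos (by rw [← h2, ← h3, h1])

lemma even_ncard_of_fpf [Finite G] :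
    ∀ n (B : Set G), B.ncard ≤ n → B⁻¹ = B → (∀ x ∈ B, x⁻¹ ≠ x) → Even B.ncard := by
  intro n
  induction n with
  | zero =>
    intro B hB _ _
    simp [Nat.le_zero.mp hB]
  | succ n ih =>
    intro B hB hsym hfpf
    rcases Set.eq_empty_or_nonempty B with rfl | ⟨x, hx⟩
    · simp
    have hxi : x⁻¹ ∈ B := by
      rw [← hsym]; simpa using hx
    have hne : x⁻¹ ≠ x := hfpf x hx
    have hsub : ({x, x⁻¹} : Set G) ⊆ B := by
      rintro y (rfl | rfl) <;> assumption
    have h2 : ({x, x⁻¹} : Set G).ncard = 2 := Set.ncard_pair hne.symm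
    have hle : ({x, x⁻¹} : Set G).ncard ≤ B.ncard := Set.ncard_le_ncard hsub (Set.toFinite _)
    have hdiff : (B \ {x, x⁻¹}).ncard = B.ncard - 2 := by
      rw [Set.ncard_diff hsub (Set.toFinite _), h2]
    have hcard : B.ncard = (B \ {x, x⁻¹}).ncard + 2 := by omega
    have hsym' : (B \ {x, x⁻¹})⁻¹ = B \ {x, x⁻¹} := by
      ext y
      simp only [Set.mem_inv, Set.mem_diff, Set.mem_insert_iff, Set.mem_singleton_iff]
      have e1 : y⁻¹ ∈ B ↔ y ∈ B := by
        conv_rhs => rw [← hsym]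
        exact (Set.mem_inv).symm
      have e2 : y⁻¹ = x ↔ y = x⁻¹ := by
        constructor
        · intro h; rw [← h]; simp
        · intro h; rw [h]; simp
      have e3 : y⁻¹ = x⁻¹ ↔ y = x := inv_inj
      rw [e1, e2, e3]; tauto
    have hfpf' : ∀ y ∈ B \ {x, x⁻¹}, y⁻¹ ≠ y := fun y hy => hfpf y hy.1
    have hle' : (B \ {x, x⁻¹}).ncard ≤ n := by omega
    have := ih (B \ {x, x⁻¹}) hle' hsym' hfpf'
    rw [hcard]
    exact this.add even_two


/-- The invariant maintained through the matching construction. -/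
def Inv' (H : Subgroup G) (𝒜 : Set (G ⧸ H)) : Prop :=
  ∀ a : G, (a : G ⧸ H) ∈ 𝒜 →
    (((dc H a)⁻¹ = dc H a →
        Even (𝒜 ∩ cs H a).ncard ∨
          ∃ τ : G, τ * τ = 1 ∧ (τ : G ⧸ H) ∈ 𝒜 ∧ τ ∈ dc H a) ∧
      ((dc H a)⁻¹ ≠ dc H a → (𝒜 ∩ cs H a).ncard = (𝒜 ∩ cs H a⁻¹).ncard))

lemma inter_cs_diff (𝒜 R : Set (G ⧸ H)) (b : G) :
    (𝒜 \ R) ∩ cs H b = (𝒜 ∩ cs H b) \ R := by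
  ext C
  simp only [Set.mem_diff, Set.mem_inter_iff]
  tauto

lemma inter_cs_of_disjoint {R : Set (G ⧸ H)} {b : G} (𝒜 : Set (G ⧸ H))
    (h : ∀ C ∈ R, C ∉ cs H b) :
    (𝒜 \ R) ∩ cs H b = 𝒜 ∩ cs H b := by
  rw [inter_cs_diff]
  ext C
  simp only [Set.mem_diff, Set.mem_inter_iff]
  constructor
  · tauto
  · rintro ⟨h1, h2⟩
    exact ⟨⟨h1, h2⟩, fun hC => h C hC h2⟩

lemma diff_pair_eq_diff_singleton {α : Type*} (s : Set α) {x y : α} (hy : y ∉ s) :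
    s \ {x, y} = s \ {x} := by
  ext z
  simp only [Set.mem_diff, Set.mem_insert_iff, Set.mem_singleton_iff]
  constructor
  · rintro ⟨hz, hn⟩; exact ⟨hz, fun h => hn (Or.inl h)⟩
  · rintro ⟨hz, hn⟩
    refine ⟨hz, ?_⟩
    rintro (rfl | rfl)
    · exact hn rfl
    · exact hy hz

lemma count_remove_one [Finite G] {𝒜 : Set (G ⧸ H)} {x y : G ⧸ H} {c : G}
    (hx : x ∈ 𝒜 ∩ cs H c) (hy : y ∉ cs H c) :
    ((𝒜 \ {x, y}) ∩ cs H c).ncard = (𝒜 ∩ cs H c).ncard - 1 := by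
  rw [inter_cs_diff]
  have hy' : y ∉ 𝒜 ∩ cs H c := fun h => hy h.2
  rw [diff_pair_eq_diff_singleton _ hy']
  exact Set.ncard_diff_singleton_of_mem hx

lemma count_remove_two [Finite G] {𝒜 : Set (G ⧸ H)} {x y : G ⧸ H} {c : G}
    (hx : x ∈ 𝒜 ∩ cs H c) (hy : y ∈ 𝒜 ∩ cs H c) (hxy : x ≠ y) :
    ((𝒜 \ {x, y}) ∩ cs H c).ncard = (𝒜 ∩ cs H c).ncard - 2 := by
  rw [inter_cs_diff]
  have hsub : ({x, y} : Set (G ⧸ H)) ⊆ 𝒜 ∩ cs H c := by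
    rintro z (rfl | rfl) <;> assumption
  rw [Set.ncard_diff hsub (Set.toFinite _), Set.ncard_pair hxy]

lemma count_remove_single [Finite G] {𝒜 : Set (G ⧸ H)} {x : G ⧸ H} {c : G}
    (hx : x ∈ 𝒜 ∩ cs H c) :
    ((𝒜 \ {x}) ∩ cs H c).ncard = (𝒜 ∩ cs H c).ncard - 1 := by
  rw [inter_cs_diff]
  exact Set.ncard_diff_singleton_of_mem hx

lemma extend_pair {𝒜 : Set (G ⧸ H)} {T' : Set G} {t : G} {A B : G ⧸ H}
    (hAB : A ≠ B) (hA : A ∈ 𝒜) (hB : B ∈ 𝒜)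
    (htA : (t : G ⧸ H) = A) (htB' : ((t⁻¹ : G) : G ⧸ H) = B)
    (hT'inv : T'⁻¹ = T') (hT'mem : ∀ u ∈ T', (u : G ⧸ H) ∈ 𝒜 \ {A, B})
    (hT'cov : ∀ C ∈ 𝒜 \ {A, B}, ∃! u : G, u ∈ T' ∧ (u : G ⧸ H) = C) :
    ∃ T : Set G, T⁻¹ = T ∧ (∀ u ∈ T, (u : G ⧸ H) ∈ 𝒜) ∧
      ∀ C ∈ 𝒜, ∃! u : G, u ∈ T ∧ (u : G ⧸ H) = C := by
  refine ⟨T' ∪ {t, t⁻¹}, ?_, ?_, ?_⟩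
  · ext u
    simp only [Set.mem_inv, Set.mem_union, Set.mem_insert_iff, Set.mem_singleton_iff]
    have e1 : u⁻¹ ∈ T' ↔ u ∈ T' := by
      conv_rhs => rw [← hT'inv]
      exact (Set.mem_inv).symm
    have e2 : u⁻¹ = t ↔ u = t⁻¹ := by
      constructor
      · intro h; rw [← h]; simp
      · intro h; rw [h]; simp
    have e3 : u⁻¹ = t⁻¹ ↔ u = t := inv_inj
    rw [e1, e2, e3]
    tauto
  · rintro u (hu | rfl | rfl)
    · exact (hT'mem u hu).1
    · rw [htA]; exact hA
    · rw [htB']; exact hB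
  · intro C hC
    by_cases hCA : C = A
    · subst hCA
      refine ⟨t, ⟨Or.inr (Or.inl rfl), htA⟩, ?_⟩
      rintro u ⟨(hu | rfl | rfl), hmk⟩
      · exact absurd hmk (by
          have := (hT'mem u hu).2
          simp only [Set.mem_insert_iff, Set.mem_singleton_iff] at this
          tauto)
      · rfl
      · exact absurd (htB'.symm.trans hmk) (Ne.symm hAB)
    by_cases hCB : C = B
    · subst hCB
      refine ⟨t⁻¹, ⟨Or.inr (Or.inr rfl), htB'⟩, ?_⟩
      rintro u ⟨(hu | rfl | rfl), hmk⟩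
      · exact absurd hmk (by
          have := (hT'mem u hu).2
          simp only [Set.mem_insert_iff, Set.mem_singleton_iff] at this
          tauto)
      · exact absurd (htA.symm.trans hmk) hAB
      · rfl
    · obtain ⟨u₀, hu₀, huniq⟩ := hT'cov C ⟨hC, by
        simp only [Set.mem_insert_iff, Set.mem_singleton_iff]
        tauto⟩
      refine ⟨u₀, ⟨Or.inl hu₀.1, hu₀.2⟩, ?_⟩
      rintro u ⟨(hu | rfl | rfl), hmk⟩
      · exact huniq u ⟨hu, hmk⟩
      · exact absurd (htA.symm.trans hmk) (Ne.symm hCA)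
      · exact absurd (htB'.symm.trans hmk) (Ne.symm hCB)

lemma extend_invol {𝒜 : Set (G ⧸ H)} {T' : Set G} {τ : G} {A : G ⧸ H}
    (hA : A ∈ 𝒜) (hτ : τ⁻¹ = τ) (hτA : (τ : G ⧸ H) = A)
    (hT'inv : T'⁻¹ = T') (hT'mem : ∀ u ∈ T', (u : G ⧸ H) ∈ 𝒜 \ {A})
    (hT'cov : ∀ C ∈ 𝒜 \ {A}, ∃! u : G, u ∈ T' ∧ (u : G ⧸ H) = C) :
    ∃ T : Set G, T⁻¹ = T ∧ (∀ u ∈ T, (u : G ⧸ H) ∈ 𝒜) ∧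
      ∀ C ∈ 𝒜, ∃! u : G, u ∈ T ∧ (u : G ⧸ H) = C := by
  refine ⟨T' ∪ {τ}, ?_, ?_, ?_⟩
  · ext u
    simp only [Set.mem_inv, Set.mem_union, Set.mem_singleton_iff]
    have e1 : u⁻¹ ∈ T' ↔ u ∈ T' := by
      conv_rhs => rw [← hT'inv]
      exact (Set.mem_inv).symm
    have e2 : u⁻¹ = τ ↔ u = τ := by
      constructor
      · intro h; rw [← hτ, ← h, inv_inv]
      · intro h; rw [h, hτ]
    rw [e1, e2]
  · rintro u (hu | rfl)
    · exact (hT'mem u hu).1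
    · rw [hτA]; exact hA
  · intro C hC
    by_cases hCA : C = A
    · subst hCA
      refine ⟨τ, ⟨Or.inr rfl, hτA⟩, ?_⟩
      rintro u ⟨(hu | rfl), hmk⟩
      · exact absurd hmk (by
          have := (hT'mem u hu).2
          simp only [Set.mem_singleton_iff] at this
          exact this)
      · rfl
    · obtain ⟨u₀, hu₀, huniq⟩ := hT'cov C ⟨hC, by simpa using hCA⟩
      refine ⟨u₀, ⟨Or.inl hu₀.1, hu₀.2⟩, ?_⟩
      rintro u ⟨(hu | rfl), hmk⟩
      · exact huniq u ⟨hu, hmk⟩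
      · exact absurd (hτA.symm.trans hmk) (Ne.symm hCA)


lemma count_remove_one' [Finite G] {𝒜 : Set (G ⧸ H)} {x y : G ⧸ H} {c : G}
    (hx : x ∉ cs H c) (hy : y ∈ 𝒜 ∩ cs H c) :
    ((𝒜 \ {x, y}) ∩ cs H c).ncard = (𝒜 ∩ cs H c).ncard - 1 := by
  rw [Set.pair_comm x y]
  exact count_remove_one hy hx

lemma pair_elt {a b : G} (hb : b ∈ dc H a⁻¹) :
    ∃ t : G, (t : G ⧸ H) = (a : G ⧸ H) ∧ ((t⁻¹ : G) : G ⧸ H) = (b : G ⧸ H) := by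
  obtain ⟨h, hh, k, hk, rfl⟩ := hb
  refine ⟨a * h⁻¹, ?_, ?_⟩
  · rw [QuotientGroup.eq]
    have e : (a * h⁻¹)⁻¹ * a = h := by group
    rw [e]; exact hh
  · rw [QuotientGroup.eq]
    have e : ((a * h⁻¹)⁻¹)⁻¹ * (h * a⁻¹ * k) = k := by group
    rw [e]; exact hk

lemma dc_inv_ne {a c : G} (hself : (dc H a)⁻¹ = dc H a) (hne : dc H c ≠ dc H a) :
    dc H c⁻¹ ≠ dc H a := by
  intro h
  apply hne
  have h2 : dc H c = (dc H c⁻¹)⁻¹ := by rw [← dc_inv, inv_inv]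
  rw [h2, h, hself]

lemma IND [Finite G] :
    ∀ n (𝒜 : Set (G ⧸ H)), 𝒜.ncard ≤ n → Inv' H 𝒜 →
      ∃ T : Set G, T⁻¹ = T ∧ (∀ t ∈ T, (t : G ⧸ H) ∈ 𝒜) ∧
        ∀ C ∈ 𝒜, ∃! t : G, t ∈ T ∧ (t : G ⧸ H) = C := by
  intro n
  induction n with
  | zero =>
    intro 𝒜 h𝒜 _
    have hA : 𝒜 = ∅ := by
      rcases Set.eq_empty_or_nonempty 𝒜 with h | h
      · exact h
      · exfalso
        have := (Set.ncard_pos (Set.toFinite _)).mpr h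
        omega
    subst hA
    exact ⟨∅, by simp, by simp, by simp⟩
  | succ n ih =>
    intro 𝒜 h𝒜 hInv
    rcases Set.eq_empty_or_nonempty 𝒜 with rfl | ⟨C₀, hC₀⟩
    · exact ⟨∅, by simp, by simp, by simp⟩
    obtain ⟨a, rfl⟩ := QuotientGroup.mk_surjective C₀
    have haA : (a : G ⧸ H) ∈ 𝒜 := hC₀
    have hmka : (a : G ⧸ H) ∈ 𝒜 ∩ cs H a := ⟨haA, mk_mem_cs.mpr (mem_dc_self a)⟩
    by_cases hself : (dc H a)⁻¹ = dc H a
    · by_cases heven : Even ((𝒜 ∩ cs H a).ncard)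
      · -- even number of cosets in the class of a : pair two of them
        have h1lt : 1 < (𝒜 ∩ cs H a).ncard := by
          have hpos : 0 < (𝒜 ∩ cs H a).ncard :=
            (Set.ncard_pos (Set.toFinite _)).mpr ⟨_, hmka⟩
          obtain ⟨k, hk⟩ := heven
          omega
        obtain ⟨D, hD, hDne⟩ := Set.exists_ne_of_one_lt_ncard h1lt (a : G ⧸ H)
        obtain ⟨b, hbD, hbd⟩ := hD.2
        subst hbD
        have hbA : (b : G ⧸ H) ∈ 𝒜 := hD.1
        have hbcs : (b : G ⧸ H) ∈ cs H a := hD.2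
        have hdcb : dc H b = dc H a := dc_eq_of_mem hbd
        have hbd' : b ∈ dc H a⁻¹ := by rw [← dc_inv, hself]; exact hbd
        obtain ⟨t, htA, htB⟩ := pair_elt hbd'
        have hss : 𝒜 \ {(a : G ⧸ H), (b : G ⧸ H)} ⊂ 𝒜 := by
          rw [Set.ssubset_def]
          refine ⟨Set.diff_subset, fun hsub => ?_⟩
          have := hsub haA
          simp at this
        have hlt : (𝒜 \ {(a : G ⧸ H), (b : G ⧸ H)}).ncard < 𝒜.ncard :=
          Set.ncard_lt_ncard hss (Set.toFinite _)
        have hInv' : Inv' H (𝒜 \ {(a : G ⧸ H), (b : G ⧸ H)}) := by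
          intro c hc
          have hcA : (c : G ⧸ H) ∈ 𝒜 := hc.1
          by_cases hca : dc H c = dc H a
          · constructor
            · intro _
              left
              rw [cs_congr hca, count_remove_two hmka ⟨hbA, hbcs⟩ (Ne.symm hDne)]
              obtain ⟨k, hk⟩ := heven
              exact ⟨k - 1, by omega⟩
            · intro hne
              exact absurd (by rw [hca]; exact hself) hne
          · have hdisj : ∀ C ∈ ({(a : G ⧸ H), (b : G ⧸ H)} : Set (G ⧸ H)), C ∉ cs H c := by
              rintro C hC
              simp only [Set.mem_insert_iff, Set.mem_singleton_iff] at hC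
              rcases hC with rfl | rfl
              · exact not_mem_cs_of_ne (fun h => hca h.symm)
              · exact not_mem_cs_of_ne (fun h => hca (h.symm.trans hdcb))
            have hca' : dc H c⁻¹ ≠ dc H a := dc_inv_ne hself hca
            have hdisj' : ∀ C ∈ ({(a : G ⧸ H), (b : G ⧸ H)} : Set (G ⧸ H)), C ∉ cs H c⁻¹ := by
              rintro C hC
              simp only [Set.mem_insert_iff, Set.mem_singleton_iff] at hC
              have hac : dc H a ≠ dc H c⁻¹ := by
                intro h
                exact hca' h.symm
              rcases hC with rfl | rfl
              · exact not_mem_cs_of_ne hac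
              · exact not_mem_cs_of_ne (fun h => hac (hdcb.symm.trans h))
            constructor
            · intro hcself
              rcases (hInv c hcA).1 hcself with he | ⟨τ, hτ2, hτA, hτd⟩
              · left
                rw [inter_cs_of_disjoint 𝒜 hdisj]
                exact he
              · right
                exact ⟨τ, hτ2, ⟨hτA, fun hm => hdisj _ hm (mk_mem_cs.mpr hτd)⟩, hτd⟩
            · intro hne
              rw [inter_cs_of_disjoint 𝒜 hdisj, inter_cs_of_disjoint 𝒜 hdisj']
              exact (hInv c hcA).2 hne
        obtain ⟨T', hT'inv, hT'mem, hT'cov⟩ :=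
          ih (𝒜 \ {(a : G ⧸ H), (b : G ⧸ H)}) (by omega) hInv'
        exact extend_pair (Ne.symm hDne) haA hbA htA htB hT'inv hT'mem hT'cov
      · -- odd : use an involution
        obtain ⟨τ, hτ2, hτA, hτd⟩ := ((hInv a haA).1 hself).resolve_left heven
        have hτinv : τ⁻¹ = τ := inv_eq_of_mul_eq_one_right hτ2
        have hτcs : (τ : G ⧸ H) ∈ cs H a := mk_mem_cs.mpr hτd
        have hdcτ : dc H τ = dc H a := dc_eq_of_mem hτd
        have hmkτ : (τ : G ⧸ H) ∈ 𝒜 ∩ cs H a := ⟨hτA, hτcs⟩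
        have hss : 𝒜 \ {(τ : G ⧸ H)} ⊂ 𝒜 := by
          rw [Set.ssubset_def]
          refine ⟨Set.diff_subset, fun hsub => ?_⟩
          have := hsub hτA
          simp at this
        have hlt : (𝒜 \ {(τ : G ⧸ H)}).ncard < 𝒜.ncard :=
          Set.ncard_lt_ncard hss (Set.toFinite _)
        have hInv' : Inv' H (𝒜 \ {(τ : G ⧸ H)}) := by
          intro c hc
          have hcA : (c : G ⧸ H) ∈ 𝒜 := hc.1
          by_cases hca : dc H c = dc H a
          · constructor
            · intro _
              left
              rw [cs_congr hca, count_remove_single hmkτ]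
              exact Nat.Odd.sub_odd (Nat.not_even_iff_odd.mp heven) odd_one
            · intro hne
              exact absurd (by rw [hca]; exact hself) hne
          · have hdisj : ∀ C ∈ ({(τ : G ⧸ H)} : Set (G ⧸ H)), C ∉ cs H c := by
              rintro C hC
              simp only [Set.mem_singleton_iff] at hC
              subst hC
              exact not_mem_cs_of_ne (fun h => hca (h.symm.trans hdcτ))
            have hca' : dc H c⁻¹ ≠ dc H a := dc_inv_ne hself hca
            have hdisj' : ∀ C ∈ ({(τ : G ⧸ H)} : Set (G ⧸ H)), C ∉ cs H c⁻¹ := by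
              rintro C hC
              simp only [Set.mem_singleton_iff] at hC
              subst hC
              exact not_mem_cs_of_ne (fun h => hca' (hdcτ.symm.trans h).symm)
            constructor
            · intro hcself
              rcases (hInv c hcA).1 hcself with he | ⟨τ', hτ'2, hτ'A, hτ'd⟩
              · left
                rw [inter_cs_of_disjoint 𝒜 hdisj]
                exact he
              · right
                exact ⟨τ', hτ'2, ⟨hτ'A, fun hm => hdisj _ hm (mk_mem_cs.mpr hτ'd)⟩, hτ'd⟩
            · intro hne
              rw [inter_cs_of_disjoint 𝒜 hdisj, inter_cs_of_disjoint 𝒜 hdisj']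
              exact (hInv c hcA).2 hne
        obtain ⟨T', hT'inv, hT'mem, hT'cov⟩ := ih (𝒜 \ {(τ : G ⧸ H)}) (by omega) hInv'
        exact extend_invol hτA hτinv rfl hT'inv hT'mem hT'cov
    · -- the class of a is not self-inverse
      have hcnt := (hInv a haA).2 hself
      have hadc : dc H a ≠ dc H a⁻¹ := by
        intro h
        exact hself (by rw [dc_inv]; exact h.symm)
      have hpos : 0 < (𝒜 ∩ cs H a⁻¹).ncard := by
        rw [← hcnt]
        exact (Set.ncard_pos (Set.toFinite _)).mpr ⟨_, hmka⟩
      obtain ⟨D, hD⟩ := (Set.ncard_pos (Set.toFinite _)).mp hpos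
      obtain ⟨b, hbD, hbd⟩ := hD.2
      subst hbD
      have hbA : (b : G ⧸ H) ∈ 𝒜 := hD.1
      have hbcs : (b : G ⧸ H) ∈ cs H a⁻¹ := hD.2
      have hdcb : dc H b = dc H a⁻¹ := dc_eq_of_mem hbd
      have hneq : (b : G ⧸ H) ≠ (a : G ⧸ H) := by
        intro h
        have h1 : (b : G ⧸ H) ∈ cs H a := by
          rw [h]; exact mk_mem_cs.mpr (mem_dc_self a)
        exact hadc (dc_eq_of_cs_mem h1 hbcs)
      obtain ⟨t, htA, htB⟩ := pair_elt hbd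
      have hacs' : (a : G ⧸ H) ∉ cs H a⁻¹ := not_mem_cs_of_ne hadc
      have hbcs'' : (b : G ⧸ H) ∉ cs H a := not_mem_cs_of_ne (fun h => hadc (h.symm.trans hdcb))
      have hss : 𝒜 \ {(a : G ⧸ H), (b : G ⧸ H)} ⊂ 𝒜 := by
        rw [Set.ssubset_def]
        refine ⟨Set.diff_subset, fun hsub => ?_⟩
        have := hsub haA
        simp at this
      have hlt : (𝒜 \ {(a : G ⧸ H), (b : G ⧸ H)}).ncard < 𝒜.ncard :=
        Set.ncard_lt_ncard hss (Set.toFinite _)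
      have hinvinv : (dc H a⁻¹)⁻¹ = dc H a := by rw [← dc_inv, inv_inv]
      have hInv' : Inv' H (𝒜 \ {(a : G ⧸ H), (b : G ⧸ H)}) := by
        intro c hc
        have hcA : (c : G ⧸ H) ∈ 𝒜 := hc.1
        by_cases hca : dc H c = dc H a
        · constructor
          · intro hcself
            exact absurd (by rw [← hca]; exact hcself) hself
          · intro _
            have hcinv : dc H c⁻¹ = dc H a⁻¹ := by
              rw [← dc_inv, ← dc_inv, hca]
            rw [cs_congr hca, cs_congr hcinv,
              count_remove_one hmka hbcs'', count_remove_one' hacs' ⟨hbA, hbcs⟩, hcnt]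
        · by_cases hca' : dc H c = dc H a⁻¹
          · constructor
            · intro hcself
              have h1 : (dc H a⁻¹)⁻¹ = dc H a⁻¹ := by rw [← hca']; exact hcself
              exact absurd (hinvinv.symm.trans h1) hadc
            · intro _
              have hcinv : dc H c⁻¹ = dc H a := by
                rw [← dc_inv, hca']
                exact hinvinv
              rw [cs_congr hca', cs_congr hcinv,
                count_remove_one' hacs' ⟨hbA, hbcs⟩, count_remove_one hmka hbcs'', hcnt]
          · have hd1 : dc H c⁻¹ ≠ dc H a := by
              intro h
              apply hca'
              have h2 : dc H c = (dc H c⁻¹)⁻¹ := by rw [← dc_inv, inv_inv]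
              rw [h2, h, dc_inv]
            have hd2 : dc H c⁻¹ ≠ dc H a⁻¹ := by
              intro h
              apply hca
              have h2 : dc H c = (dc H c⁻¹)⁻¹ := by rw [← dc_inv, inv_inv]
              rw [h2, h]
              exact hinvinv
            have hdisj : ∀ C ∈ ({(a : G ⧸ H), (b : G ⧸ H)} : Set (G ⧸ H)), C ∉ cs H c := by
              rintro C hC
              simp only [Set.mem_insert_iff, Set.mem_singleton_iff] at hC
              rcases hC with rfl | rfl
              · exact not_mem_cs_of_ne (fun h => hca h.symm)
              · exact not_mem_cs_of_ne (fun h => hca' (h.symm.trans hdcb).symm.symm)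
            have hdisj' : ∀ C ∈ ({(a : G ⧸ H), (b : G ⧸ H)} : Set (G ⧸ H)), C ∉ cs H c⁻¹ := by
              rintro C hC
              simp only [Set.mem_insert_iff, Set.mem_singleton_iff] at hC
              rcases hC with rfl | rfl
              · exact not_mem_cs_of_ne (fun h => hd1 h.symm)
              · exact not_mem_cs_of_ne (fun h => hd2 (h.symm.trans hdcb).symm.symm)
            constructor
            · intro hcself
              rcases (hInv c hcA).1 hcself with he | ⟨τ', hτ'2, hτ'A, hτ'd⟩
              · left
                rw [inter_cs_of_disjoint 𝒜 hdisj]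
                exact he
              · right
                exact ⟨τ', hτ'2, ⟨hτ'A, fun hm => hdisj _ hm (mk_mem_cs.mpr hτ'd)⟩, hτ'd⟩
            · intro hne
              rw [inter_cs_of_disjoint 𝒜 hdisj, inter_cs_of_disjoint 𝒜 hdisj']
              exact (hInv c hcA).2 hne
      obtain ⟨T', hT'inv, hT'mem, hT'cov⟩ :=
        ih (𝒜 \ {(a : G ⧸ H), (b : G ⧸ H)}) (by omega) hInv'
      exact extend_pair (Ne.symm hneq) haA hbA htA htB hT'inv hT'mem hT'cov


lemma mem_S_inv {S : Set G} (hS2 : S⁻¹ = S) {s : G} (hs : s ∈ S) : s⁻¹ ∈ S := by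
  rw [← hS2]
  simpa using hs

lemma card_inter_S [Finite G] {S : Set G} (hS2 : S⁻¹ = S)
    (hS4 : ∀ g : G, g ∉ H → ∃! h, h ∈ H ∧ g⁻¹ * h ∈ S)
    {a : G} (ha : a ∉ H) :
    Nat.card H * Nat.card (dc H a ∩ S : Set G) = Nat.card (dc H a) := by
  have hnotH : ∀ x ∈ dc H a, x ∉ H := fun x hx hxH => ha (mem_H_of_dc hx hxH)
  let f : H × (dc H a ∩ S : Set G) → (dc H a : Set G) :=
    fun p => ⟨(p.1 : G) * (p.2 : G), mul_mem_dc p.1.2 p.2.2.1⟩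
  have hbij : Function.Bijective f := by
    constructor
    · rintro ⟨⟨h₁, hh₁⟩, ⟨s₁, hs₁d, hs₁S⟩⟩ ⟨⟨h₂, hh₂⟩, ⟨s₂, hs₂d, hs₂S⟩⟩ heq
      have heq' : h₁ * s₁ = h₂ * s₂ := congrArg Subtype.val heq
      have hgd : h₁ * s₁ ∈ dc H a := mul_mem_dc hh₁ hs₁d
      obtain ⟨h₀, _, huniq⟩ := hS4 (h₁ * s₁) (hnotH _ hgd)
      have e1 : h₁ = h₀ := huniq h₁ ⟨hh₁, by
        have e : (h₁ * s₁)⁻¹ * h₁ = s₁⁻¹ := by group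
        rw [e]; exact mem_S_inv hS2 hs₁S⟩
      have e2 : h₂ = h₀ := huniq h₂ ⟨hh₂, by
        have e : (h₁ * s₁)⁻¹ * h₂ = s₂⁻¹ := by rw [heq']; group
        rw [e]; exact mem_S_inv hS2 hs₂S⟩
      have eh : h₁ = h₂ := e1.trans e2.symm
      subst eh
      have es : s₁ = s₂ := mul_left_cancel heq'
      subst es
      rfl
    · rintro ⟨g, hgd⟩
      obtain ⟨h₀, ⟨hh₀, hgS⟩, _⟩ := hS4 g (hnotH g hgd)
      have hsd : (g⁻¹ * h₀)⁻¹ ∈ dc H a := by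
        have e : (g⁻¹ * h₀)⁻¹ = h₀⁻¹ * g := by group
        rw [e]
        exact mul_mem_dc (H.inv_mem hh₀) hgd
      refine ⟨⟨⟨h₀, hh₀⟩, ⟨(g⁻¹ * h₀)⁻¹, hsd, mem_S_inv hS2 hgS⟩⟩, ?_⟩
      apply Subtype.ext
      show h₀ * (g⁻¹ * h₀)⁻¹ = g
      group
  calc Nat.card H * Nat.card (dc H a ∩ S : Set G)
      = Nat.card (H × (dc H a ∩ S : Set G)) := (Nat.card_prod _ _).symm
    _ = Nat.card (dc H a) := Nat.card_congr (Equiv.ofBijective f hbij)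

lemma exists_invol [Finite G] {S : Set G} (hS2 : S⁻¹ = S)
    (hS4 : ∀ g : G, g ∉ H → ∃! h, h ∈ H ∧ g⁻¹ * h ∈ S)
    {a : G} (ha : a ∉ H)
    (hself : (dc H a)⁻¹ = dc H a) (hodd : ¬ Even ((cs H a).ncard)) :
    ∃ τ ∈ dc H a, τ * τ = 1 := by
  by_contra hcon
  push_neg at hcon
  apply hodd
  have hBsym : (dc H a ∩ S)⁻¹ = dc H a ∩ S := by
    ext x
    simp only [Set.mem_inv, Set.mem_inter_iff]
    constructor
    · rintro ⟨h1, h2⟩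
      constructor
      · have : x ∈ (dc H a)⁻¹ := h1
        rwa [hself] at this
      · have : x ∈ S⁻¹ := h2
        rwa [hS2] at this
    · rintro ⟨h1, h2⟩
      constructor
      · rw [← hself] at h1
        exact h1
      · rw [← hS2] at h2
        exact h2
  have hfpf : ∀ x ∈ dc H a ∩ S, x⁻¹ ≠ x := by
    rintro x ⟨hxd, _⟩ hx
    apply hcon x hxd
    calc x * x = x * x⁻¹ := by rw [hx]
      _ = 1 := mul_inv_cancel x
  have heven : Even ((dc H a ∩ S).ncard) :=
    even_ncard_of_fpf _ _ le_rfl hBsym hfpf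
  have hcard : (cs H a).ncard = (dc H a ∩ S).ncard := by
    have h1 := card_inter_S hS2 hS4 ha
    have h2 := card_dc (H := H) a
    have hpos : 0 < Nat.card H := Nat.card_pos
    have : Nat.card H * (dc H a ∩ S : Set G).ncard = Nat.card H * (cs H a).ncard := by
      rw [← Nat.card_coe_set_eq, h1, h2]
    exact (Nat.eq_of_mul_eq_mul_left hpos this).symm
  rw [hcard]
  exact heven

lemma mk_eq_one_iff {a : G} : (a : G ⧸ H) = ((1 : G) : G ⧸ H) ↔ a ∈ H := by
  rw [QuotientGroup.eq]
  simp


end CayleyCodeAux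

open CayleyCodeAux in
theorem cayley_transversal_iff_perfect_code {G : Type*} [Group G] [Finite G]
    (H : Subgroup G) :
    (∃ T : Set G, (1 : G) ∈ T ∧ T⁻¹ = T ∧ ∀ g : G, ∃! t, t ∈ T ∧ g⁻¹ * t ∈ H) ↔
    (∃ S : Set G, (1 : G) ∉ S ∧ S⁻¹ = S ∧
      (∀ h₁ h₂ : G, h₁ ∈ H → h₂ ∈ H → h₁ ≠ h₂ → h₁⁻¹ * h₂ ∉ S) ∧
      (∀ g : G, g ∉ H → ∃! h, h ∈ H ∧ g⁻¹ * h ∈ S)) := by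
  constructor
  · rintro ⟨T, hT1, hTinv, hTuniq⟩
    refine ⟨T \ {1}, by simp, ?_, ?_, ?_⟩
    · ext x
      simp only [Set.mem_inv, Set.mem_diff, Set.mem_singleton_iff]
      have e1 : x⁻¹ ∈ T ↔ x ∈ T := by
        conv_rhs => rw [← hTinv]
        exact (Set.mem_inv).symm
      rw [e1, inv_eq_one]
    · intro h₁ h₂ hh₁ hh₂ _ hmem
      have hmemT : h₁⁻¹ * h₂ ∈ T := hmem.1
      have hne1 : h₁⁻¹ * h₂ ≠ 1 := hmem.2
      obtain ⟨t₀, _, huniq⟩ := hTuniq 1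
      have e1 : (1 : G) = t₀ := huniq 1 ⟨hT1, by simp [H.one_mem]⟩
      have e2 : h₁⁻¹ * h₂ = t₀ := huniq _ ⟨hmemT, by
        simpa using H.mul_mem (H.inv_mem hh₁) hh₂⟩
      exact hne1 (e2.trans e1.symm)
    · intro g hg
      obtain ⟨t, ⟨htT, htH⟩, huniq⟩ := hTuniq g⁻¹
      have hgt : g * t ∈ H := by simpa using htH
      refine ⟨g * t, ⟨hgt, ?_⟩, ?_⟩
      · have e : g⁻¹ * (g * t) = t := by group
        rw [e]
        refine ⟨htT, ?_⟩
        simp only [Set.mem_singleton_iff]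
        intro h1
        subst h1
        apply hg
        simpa using hgt
      · rintro h' ⟨hh'H, hmem⟩
        have hT' : g⁻¹ * h' ∈ T := hmem.1
        have he : g⁻¹ * h' = t := huniq _ ⟨hT', by
          have e : (g⁻¹)⁻¹ * (g⁻¹ * h') = h' := by group
          rw [e]; exact hh'H⟩
        calc h' = g * (g⁻¹ * h') := by group
          _ = g * t := by rw [he]
  · rintro ⟨S, hS1, hS2, hS3, hS4⟩
    classical
    set 𝒜₀ : Set (G ⧸ H) := {C | C ≠ ((1 : G) : G ⧸ H)} with h𝒜₀
    have hmemA : ∀ a : G, (a : G ⧸ H) ∈ 𝒜₀ ↔ a ∉ H := by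
      intro a
      rw [h𝒜₀]
      simp only [Set.mem_setOf_eq, ne_eq, mk_eq_one_iff]
    have hcs_sub : ∀ a : G, a ∉ H → 𝒜₀ ∩ cs H a = cs H a := by
      intro a ha
      apply Set.inter_eq_self_of_subset_right
      rintro C ⟨x, hx, hxd⟩
      rw [h𝒜₀, ← hx]
      simp only [Set.mem_setOf_eq, ne_eq, mk_eq_one_iff]
      exact fun hxH => ha (mem_H_of_dc hxd hxH)
    have hInv0 : Inv' H 𝒜₀ := by
      intro a haA
      have ha : a ∉ H := (hmemA a).mp haA
      have ha' : a⁻¹ ∉ H := fun h => ha (by simpa using H.inv_mem h)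
      constructor
      · intro hself
        by_cases he : Even ((𝒜₀ ∩ cs H a).ncard)
        · exact Or.inl he
        · rw [hcs_sub a ha] at he
          obtain ⟨τ, hτd, hτ2⟩ := exists_invol hS2 hS4 ha hself he
          exact Or.inr ⟨τ, hτ2,
            (hmemA τ).mpr (fun hτH => ha (mem_H_of_dc hτd hτH)), hτd⟩
      · intro _
        rw [hcs_sub a ha, hcs_sub a⁻¹ ha']
        exact ncard_cs_inv a
    obtain ⟨T₀, hT₀inv, hT₀mem, hT₀cov⟩ := IND 𝒜₀.ncard 𝒜₀ le_rfl hInv0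
    refine ⟨{1} ∪ T₀, Or.inl rfl, ?_, ?_⟩
    · ext x
      simp only [Set.mem_inv, Set.mem_union, Set.mem_singleton_iff]
      have e1 : x⁻¹ ∈ T₀ ↔ x ∈ T₀ := by
        conv_rhs => rw [← hT₀inv]
        exact (Set.mem_inv).symm
      rw [e1, inv_eq_one]
    · intro g
      by_cases hg : g ∈ H
      · refine ⟨1, ⟨Or.inl rfl, by simpa using H.inv_mem hg⟩, ?_⟩
        rintro t ⟨(rfl | htT), htH⟩
        · rfl
        · exfalso
          have h1 : (t : G ⧸ H) ∈ 𝒜₀ := hT₀mem t htT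
          have htH' : t ∈ H := by
            have e : t = g * (g⁻¹ * t) := by group
            rw [e]; exact H.mul_mem hg htH
          exact (hmemA t).mp h1 htH'
      · have hgA : (g : G ⧸ H) ∈ 𝒜₀ := (hmemA g).mpr hg
        obtain ⟨t, ⟨htT, htmk⟩, huniq⟩ := hT₀cov _ hgA
        refine ⟨t, ⟨Or.inr htT, ?_⟩, ?_⟩
        · rw [← QuotientGroup.eq]
          exact htmk.symm
        · rintro t' ⟨(rfl | ht'T), ht'H⟩
          · exfalso
            apply hg
            simpa using ht'H
          · exact huniq t' ⟨ht'T, QuotientGroup.eq.mpr (by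
              have e : t'⁻¹ * g = (g⁻¹ * t')⁻¹ := by group
              rw [e]; exact H.inv_mem ht'H)⟩
end

section
/- Let G be a finite group and H a subgroup of G. If H is a perfect code of G, then for every g ∈ G the conjugate subgroup g^{-1}Hg is a perfect code of G. -/
/-- A subgroup `H` of `G` is a perfect code of `G` if there is a left transversal `T`
of `H` in `G` with `T = T⁻¹` and `1 ∈ T` (a Cayley transversal). -/
def IsPerfectCode {G : Type*} [Group G] (H : Subgroup G) : Prop :=
  ∃ T : Set G, (1 : G) ∈ T ∧ T⁻¹ = T ∧ ∀ g : G, ∃! t, t ∈ T ∧ g⁻¹ * t ∈ H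

theorem perfect_code_conj {G : Type*} [Group G] [Finite G]
    (H : Subgroup G) (hH : IsPerfectCode H) (g : G) :
    IsPerfectCode (H.map (MulAut.conj g⁻¹).toMonoidHom) := by
  obtain ⟨T, h1, hinv, huniq⟩ := hH
  have memK : ∀ x : G, x ∈ H.map (MulAut.conj g⁻¹).toMonoidHom ↔ g * x * g⁻¹ ∈ H := by
    intro x
    constructor
    · rintro ⟨h, hh, rfl⟩
      simpa [MulAut.conj, mul_assoc] using hh
    · intro hx
      exact ⟨g * x * g⁻¹, hx, by simp [MulAut.conj]; group⟩
  refine ⟨(fun t => g⁻¹ * t * g) '' T, ⟨1, h1, by group⟩, ?_, ?_⟩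
  · ext x
    simp only [Set.mem_inv, Set.mem_image]
    constructor
    · rintro ⟨t, ht, heq⟩
      refine ⟨t⁻¹, by rw [← hinv]; simpa using ht, ?_⟩
      have : x⁻¹ = g⁻¹ * t * g := heq.symm
      rw [← inv_inv x, this]; group
    · rintro ⟨t, ht, rfl⟩
      exact ⟨t⁻¹, by rw [← hinv]; simpa using ht, by group⟩
  · intro x
    obtain ⟨t, ⟨htT, htH⟩, huni⟩ := huniq (g * x * g⁻¹)
    refine ⟨g⁻¹ * t * g, ⟨⟨t, htT, rfl⟩, ?_⟩, ?_⟩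
    · rw [memK]
      have : g * (x⁻¹ * (g⁻¹ * t * g)) * g⁻¹ = (g * x * g⁻¹)⁻¹ * t := by group
      rw [this]; exact htH
    · rintro s ⟨⟨u, huT, rfl⟩, hs⟩
      rw [memK] at hs
      have h2 : (g * x * g⁻¹)⁻¹ * u ∈ H := by
        have : (g * x * g⁻¹)⁻¹ * u = g * (x⁻¹ * (g⁻¹ * u * g)) * g⁻¹ := by group
        rw [this]; exact hs
      rw [huni u ⟨huT, h2⟩]
end

section
/- Let G be a finite group and H a normal subgroup of G. Then H is a perfect code of G if and only if for all x ∈ G, x² ∈ H implies that there exists h ∈ H with (xh)² = 1. -/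
lemma aux_section {G : Type*} [Group G] (H : Subgroup G) [H.Normal]
    (hcond : ∀ x : G, x ^ 2 ∈ H → ∃ h ∈ H, (x * h) ^ 2 = 1) :
    ∃ r : G ⧸ H → G, (∀ c, (QuotientGroup.mk (r c) : G ⧸ H) = c) ∧
      (∀ c, r c⁻¹ = (r c)⁻¹) ∧ r 1 = 1 := by
  classical
  letI : LinearOrder (G ⧸ H) := IsWellOrder.linearOrder WellOrderingRel
  set f : G ⧸ H → G := fun c => Quotient.out c with hfdef
  have hf : ∀ c, (QuotientGroup.mk (f c) : G ⧸ H) = c := fun c => Quotient.out_eq' c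
  have hsq : ∀ c : G ⧸ H, c⁻¹ = c → (f c) ^ 2 ∈ H := by
    intro c hc
    have h2 : (QuotientGroup.mk ((f c)⁻¹) : G ⧸ H) = QuotientGroup.mk (f c) := by
      rw [QuotientGroup.mk_inv, hf, hc]
    have := QuotientGroup.eq.mp h2
    simpa [sq] using this
  refine ⟨fun c => if c = 1 then 1 else if hc : c⁻¹ = c then
      f c * Classical.choose (hcond (f c) (hsq c hc))
    else if c < c⁻¹ then f c else (f (c⁻¹))⁻¹, ?_, ?_, ?_⟩
  · intro c
    beta_reduce
    by_cases h1 : c = 1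
    · rw [if_pos h1, h1]; simp
    by_cases hc : c⁻¹ = c
    · rw [if_neg h1, dif_pos hc]
      have hh := (Classical.choose_spec (hcond (f c) (hsq c hc))).1
      rw [QuotientGroup.mk_mul, (QuotientGroup.eq_one_iff _).mpr hh, mul_one, hf]
    by_cases hlt : c < c⁻¹
    · rw [if_neg h1, dif_neg hc, if_pos hlt]; exact hf c
    · rw [if_neg h1, dif_neg hc, if_neg hlt, QuotientGroup.mk_inv, hf, inv_inv]
  · intro c
    beta_reduce
    by_cases h1 : c = 1
    · rw [h1]; simp
    have h1' : c⁻¹ ≠ 1 := fun h => h1 (by simpa using congrArg Inv.inv h)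
    by_cases hc : c⁻¹ = c
    · have hcc : (c⁻¹)⁻¹ = c⁻¹ := congrArg Inv.inv hc
      rw [if_neg h1', dif_pos hcc, if_neg h1, dif_pos hc]
      simp only [hc]
      have hh := (Classical.choose_spec (hcond (f c) (hsq c hc))).2
      exact eq_inv_of_mul_eq_one_left (by rw [← sq]; exact hh)
    have hc' : (c⁻¹)⁻¹ ≠ c⁻¹ := by rw [inv_inv]; exact fun h => hc h.symm
    by_cases hlt : c < c⁻¹
    · have hlt' : ¬ c⁻¹ < (c⁻¹)⁻¹ := by rw [inv_inv]; exact not_lt_of_gt hlt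
      rw [if_neg h1', dif_neg hc', if_neg hlt', if_neg h1, dif_neg hc, if_pos hlt, inv_inv]
    · have hlt2 : c⁻¹ < c := lt_of_le_of_ne (not_lt.mp hlt) (fun h => hc h)
      have hlt' : c⁻¹ < (c⁻¹)⁻¹ := by rw [inv_inv]; exact hlt2
      rw [if_neg h1', dif_neg hc', if_pos hlt', if_neg h1, dif_neg hc, if_neg hlt, inv_inv]
  · simp

theorem normal_perfect_code_iff {G : Type*} [Group G] [Finite G]
    (H : Subgroup G) [H.Normal] :
    IsPerfectCode H ↔ ∀ x : G, x ^ 2 ∈ H → ∃ h ∈ H, (x * h) ^ 2 = 1 := by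
  constructor
  · rintro ⟨T, h1T, hinv, huniq⟩ x hx
    obtain ⟨t, ⟨htT, htH⟩, huni⟩ := huniq x
    have htinvT : t⁻¹ ∈ T := by
      rw [← hinv]; simpa using htT
    have h2 : x⁻¹ * t⁻¹ ∈ H := by
      have hmem : (x⁻¹ * t)⁻¹ ∈ H := inv_mem htH
      have hconj : x * (x⁻¹ * t)⁻¹ * x⁻¹ ∈ H :=
        Subgroup.Normal.conj_mem ‹H.Normal› _ hmem x
      have := mul_mem (inv_mem hx) hconj
      convert this using 1
      group
    have ht2 : t⁻¹ = t := huni t⁻¹ ⟨htinvT, h2⟩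
    refine ⟨x⁻¹ * t, htH, ?_⟩
    have hxt : x * (x⁻¹ * t) = t := by group
    rw [hxt, sq]
    nth_rewrite 1 [← ht2]
    exact inv_mul_cancel t
  · intro hcond
    obtain ⟨r, hr, hrinv, hr1⟩ := aux_section H hcond
    refine ⟨Set.range r, ⟨1, hr1⟩, ?_, ?_⟩
    · ext g
      simp only [Set.mem_inv, Set.mem_range]
      constructor
      · rintro ⟨c, hc⟩
        exact ⟨c⁻¹, by rw [hrinv, hc, inv_inv]⟩
      · rintro ⟨c, hc⟩
        exact ⟨c⁻¹, by rw [hrinv, hc]⟩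
    · intro g
      refine ⟨r (QuotientGroup.mk g), ⟨⟨_, rfl⟩, ?_⟩, ?_⟩
      · exact QuotientGroup.eq.mp (hr (QuotientGroup.mk g)).symm
      · rintro t' ⟨⟨c, rfl⟩, ht'⟩
        have hcg : (QuotientGroup.mk g : G ⧸ H) = c := by
          rw [← hr c]; exact QuotientGroup.eq.mpr ht'
        rw [hcg]
end

section
/- Let G be a finite group and H a subgroup of G such that either H is a 2-group, or |H| is odd, or the index |G : H| is odd. Then H is a perfect code of G if and only if H is a perfect code of its normalizer N_G(H). -/
open scoped Classical
set_option linter.unusedSectionVars false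

namespace PCProof

variable {G : Type*} [Group G] [Finite G] (H : Subgroup G)

/-- double coset relation: `b ∈ H a H`. -/
def DC (a b : G) : Prop := ∃ h₁ ∈ H, ∃ h₂ ∈ H, b = h₁ * a * h₂

variable {H}

lemma dc_refl (a : G) : DC H a a := ⟨1, one_mem _, 1, one_mem _, by group⟩

lemma dc_symm {a b : G} (h : DC H a b) : DC H b a := by
  obtain ⟨h₁, m₁, h₂, m₂, rfl⟩ := h
  exact ⟨h₁⁻¹, inv_mem m₁, h₂⁻¹, inv_mem m₂, by group⟩

lemma dc_trans {a b c : G} (h : DC H a b) (h' : DC H b c) : DC H a c := by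
  obtain ⟨h₁, m₁, h₂, m₂, rfl⟩ := h
  obtain ⟨k₁, n₁, k₂, n₂, rfl⟩ := h'
  exact ⟨k₁ * h₁, mul_mem n₁ m₁, h₂ * k₂, mul_mem m₂ n₂, by group⟩

lemma dc_inv {a b : G} (h : DC H a b) : DC H a⁻¹ b⁻¹ := by
  obtain ⟨h₁, m₁, h₂, m₂, rfl⟩ := h
  exact ⟨h₂⁻¹, inv_mem m₂, h₁⁻¹, inv_mem m₁, by group⟩

lemma dc_of_mk_eq {a b : G} (h : (a : G ⧸ H) = b) : DC H a b := by
  rw [QuotientGroup.eq] at h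
  exact ⟨1, one_mem _, a⁻¹ * b, h, by group⟩

lemma mem_of_dc {a b : G} (h : DC H a b) (hb : b ∈ H) : a ∈ H := by
  obtain ⟨h₁, m₁, h₂, m₂, he⟩ := h
  have : a = h₁⁻¹ * b * h₂⁻¹ := by rw [he]; group
  rw [this]
  exact mul_mem (mul_mem (inv_mem m₁) hb) (inv_mem m₂)

/-- key witness lemma -/
lemma witness {u v : G} (h : DC H u v⁻¹) : ∃ x : G, (x : G ⧸ H) = u ∧ ((x⁻¹ : G) : G ⧸ H) = v := by
  obtain ⟨h₁, m₁, h₂, m₂, he⟩ := h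
  refine ⟨u * h₂, ?_, ?_⟩
  · rw [QuotientGroup.eq]
    simpa using inv_mem m₂
  · rw [QuotientGroup.eq]
    have hv : v = h₂⁻¹ * u⁻¹ * h₁⁻¹ := by
      rw [← inv_inv v, he]; group
    have h3 : (u * h₂)⁻¹⁻¹ * (h₂⁻¹ * u⁻¹ * h₁⁻¹) = h₁⁻¹ := by group
    rw [hv, h3]
    exact inv_mem m₁

noncomputable instance : Fintype (G ⧸ H) := Fintype.ofFinite _

variable (H) in
/-- The set of left cosets inside the double coset `H a H`, i.e. the `H`-orbit of `⟦a⟧`. -/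
noncomputable def cls (a : G) : Finset (G ⧸ H) :=
  (MulAction.orbit H ((a : G ⧸ H))).toFinset

lemma mem_cls {a : G} {C : G ⧸ H} : C ∈ cls H a ↔ ∃ h ∈ H, ((h * a : G) : G ⧸ H) = C := by
  simp only [cls, Set.mem_toFinset, MulAction.mem_orbit_iff]
  constructor
  · rintro ⟨⟨h, hh⟩, rfl⟩
    exact ⟨h, hh, rfl⟩
  · rintro ⟨h, hh, rfl⟩
    exact ⟨⟨h, hh⟩, rfl⟩

lemma mk_mem_cls {a b : G} : ((b : G ⧸ H) ∈ cls H a) ↔ DC H a b := by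
  rw [mem_cls]
  constructor
  · rintro ⟨h, hh, he⟩
    exact dc_trans ⟨h, hh, 1, one_mem _, by group⟩ (dc_of_mk_eq he)
  · rintro ⟨h₁, m₁, h₂, m₂, rfl⟩
    refine ⟨h₁, m₁, ?_⟩
    rw [QuotientGroup.eq]
    have : (h₁ * a)⁻¹ * (h₁ * a * h₂) = h₂ := by group
    rw [this]; exact m₂

lemma self_mem_cls {a : G} : ((a : G ⧸ H) ∈ cls H a) := mk_mem_cls.2 (dc_refl a)

lemma mem_cls_out {a : G} {C : G ⧸ H} : C ∈ cls H a ↔ DC H a C.out := by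
  conv_lhs => rw [← QuotientGroup.out_eq' C]
  exact mk_mem_cls

lemma cls_eq_of_dc {a b : G} (h : DC H a b) : cls H a = cls H b := by
  ext C
  rw [mem_cls_out, mem_cls_out]
  exact ⟨fun h' => dc_trans (dc_symm h) h', fun h' => dc_trans h h'⟩

lemma one_mem_cls_iff {a : G} : ((1 : G) : G ⧸ H) ∈ cls H a ↔ a ∈ H := by
  rw [mk_mem_cls]
  constructor
  · intro h; exact mem_of_dc h (one_mem _)
  · intro h; exact ⟨a⁻¹, inv_mem h, 1, one_mem _, by group⟩


section Pairing

variable {Q : Type*} [Fintype Q] [DecidableEq Q]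

/-- every finset of even cardinality has a fixed-point-free involution on it -/
lemma exists_fpf : ∀ (n : ℕ) (s : Finset Q), s.card = n → Even n →
    ∃ f : Q → Q, ∀ C ∈ s, f C ∈ s ∧ f C ≠ C ∧ f (f C) = C := by
  intro n
  induction n using Nat.strong_induction_on with
  | _ n ih =>
    intro s hcard heven
    rcases Nat.eq_zero_or_pos n with h0 | hpos
    · subst h0
      have : s = ∅ := Finset.card_eq_zero.mp hcard
      exact ⟨id, by simp [this]⟩
    · have h2 : 1 < s.card := by
        rw [hcard]
        rcases heven with ⟨k, hk⟩
        omega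
      obtain ⟨a, ha⟩ := Finset.card_pos.mp (by omega : 0 < s.card)
      obtain ⟨b, hb, hba⟩ := Finset.exists_mem_ne h2 a
      set s' := (s.erase a).erase b with hs'
      have hbs : b ∈ s.erase a := Finset.mem_erase.mpr ⟨hba, hb⟩
      have hcard' : s'.card = n - 2 := by
        rw [hs', Finset.card_erase_of_mem hbs, Finset.card_erase_of_mem ha, hcard]
        omega
      have hlt : n - 2 < n := by omega
      have heven' : Even (n - 2) := by
        rcases heven with ⟨k, hk⟩
        exact ⟨k - 1, by omega⟩
      obtain ⟨f', hf'⟩ := ih (n - 2) hlt s' hcard' heven'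
      have hmem : ∀ D ∈ s', D ∈ s ∧ D ≠ a ∧ D ≠ b := by
        intro D hD
        rw [hs'] at hD
        simp only [Finset.mem_erase] at hD
        exact ⟨hD.2.2, hD.2.1, hD.1⟩
      set f : Q → Q := fun C => if C = a then b else if C = b then a else f' C with hfdef
      have hfa : f a = b := by rw [hfdef]; simp
      have hfb : f b = a := by rw [hfdef]; simp [hba]
      have hfo : ∀ D ∈ s', f D = f' D := by
        intro D hD
        obtain ⟨_, h1, h2⟩ := hmem D hD
        rw [hfdef]; simp [h1, h2]
      refine ⟨f, ?_⟩
      intro C hC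
      by_cases hCa : C = a
      · subst hCa
        rw [hfa, hfb]
        exact ⟨hb, hba, rfl⟩
      · by_cases hCb : C = b
        · subst hCb
          rw [hfb, hfa]
          exact ⟨ha, fun h => hba h.symm, rfl⟩
        · have hCs' : C ∈ s' := by
            rw [hs']; exact Finset.mem_erase.mpr ⟨hCb, Finset.mem_erase.mpr ⟨hCa, hC⟩⟩
          obtain ⟨h1, h2', h3⟩ := hf' C hCs'
          rw [hfo C hCs', hfo _ h1, h3]
          exact ⟨(hmem _ h1).1, h2', rfl⟩

end Pairing

section Build

variable {G : Type*} [Group G] [Finite G] {H : Subgroup G}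

/-- build coherent witnesses from a fixed-point-free pairing -/
lemma build (U : Finset (G ⧸ H)) (f : (G ⧸ H) → (G ⧸ H))
    (hf : ∀ C ∈ U, f C ∈ U ∧ f C ≠ C ∧ f (f C) = C)
    (hP : ∀ C ∈ U, ∃ x : G, (x : G ⧸ H) = C ∧ ((x⁻¹ : G) : G ⧸ H) = f C) :
    ∃ w : (G ⧸ H) → G, ∀ C ∈ U,
      ((w C : G) : G ⧸ H) = C ∧ (((w C)⁻¹ : G) : G ⧸ H) ∈ U ∧
        w (((w C)⁻¹ : G) : G ⧸ H) = (w C)⁻¹ := by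
  classical
  letI : LinearOrder (G ⧸ H) := LinearOrder.lift' (fun C => (Fintype.equivFin (G ⧸ H) C : ℕ))
    (fun C D h => by
      apply (Fintype.equivFin (G ⧸ H)).injective
      exact Fin.ext h)
  set P : (G ⧸ H) → Prop := fun C => ∃ x : G, (x : G ⧸ H) = C ∧ ((x⁻¹ : G) : G ⧸ H) = f C with hPdef
  set ch : (G ⧸ H) → G := fun C => if h : P C then Classical.choose h else 1 with hch
  have chspec : ∀ C ∈ U, ((ch C : G) : G ⧸ H) = C ∧ (((ch C)⁻¹ : G) : G ⧸ H) = f C := by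
    intro C hC
    have hp : P C := hP C hC
    rw [hch]
    simp only [dif_pos hp]
    exact Classical.choose_spec hp
  set w : (G ⧸ H) → G := fun C => if C < f C then ch C else (ch (f C))⁻¹ with hw
  have hwlt : ∀ C, C < f C → w C = ch C := by
    intro C h; rw [hw]; simp only [if_pos h]
  have hwge : ∀ C, ¬ (C < f C) → w C = (ch (f C))⁻¹ := by
    intro C h; rw [hw]; simp only [if_neg h]
  refine ⟨w, ?_⟩
  intro C hC
  obtain ⟨hfm, hfne, hff⟩ := hf C hC
  obtain ⟨hc1, hc2⟩ := chspec C hC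
  obtain ⟨hd1, hd2⟩ := chspec (f C) hfm
  rw [hff] at hd2
  rcases lt_or_gt_of_ne (Ne.symm hfne) with hlt | hgt
  · rw [hwlt C hlt, hc2]
    refine ⟨hc1, hfm, ?_⟩
    have hnl : ¬ (f C < f (f C)) := by rw [hff]; exact not_lt_of_gt hlt
    rw [hwge _ hnl, hff]
  · have hnl : ¬ (C < f C) := not_lt_of_gt hgt
    rw [hwge C hnl, inv_inv, hd1]
    refine ⟨hd2, hfm, ?_⟩
    have hl2 : f C < f (f C) := by rw [hff]; exact hgt
    rw [hwlt _ hl2]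

end Build

section Counting

variable {G : Type*} [Group G] [Finite G] {H : Subgroup G}

noncomputable instance : Fintype G := Fintype.ofFinite _

lemma card_fiber (C : G ⧸ H) :
    (Finset.univ.filter (fun g : G => (g : G ⧸ H) = C)).card = Nat.card H := by
  classical
  have h1 : (Finset.univ.filter (fun g : G => g ∈ H)).card = Nat.card H := by
    rw [Nat.card_eq_fintype_card]
    exact (Fintype.card_subtype _).symm
  rw [← h1]
  refine Finset.card_bij' (fun g _ => (C.out)⁻¹ * g) (fun h _ => C.out * h) ?_ ?_ ?_ ?_
  · intro g hg
    simp only [Finset.mem_filter, Finset.mem_univ, true_and] at hg ⊢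
    exact QuotientGroup.eq.mp ((QuotientGroup.out_eq' C).trans hg.symm)
  · intro h hh
    simp only [Finset.mem_filter, Finset.mem_univ, true_and] at hh ⊢
    have h2 : ((C.out * h : G) : G ⧸ H) = ((C.out : G) : G ⧸ H) :=
      QuotientGroup.eq.mpr (by
        have : (C.out * h)⁻¹ * C.out = h⁻¹ := by group
        rw [this]; exact inv_mem hh)
    exact h2.trans (QuotientGroup.out_eq' C)
  · intro g _; group
  · intro h _; group

lemma card_dfin (b : G) :
    (Finset.univ.filter (fun g : G => DC H b g)).card = (cls H b).card * Nat.card H := by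
  classical
  have hset : (Finset.univ.filter (fun g : G => DC H b g))
      = (cls H b).biUnion (fun C => Finset.univ.filter (fun g : G => (g : G ⧸ H) = C)) := by
    ext g
    simp only [Finset.mem_filter, Finset.mem_univ, true_and, Finset.mem_biUnion]
    constructor
    · intro h; exact ⟨(g : G ⧸ H), mk_mem_cls.2 h, rfl⟩
    · rintro ⟨C, hC, hg⟩
      rw [← hg] at hC
      exact mk_mem_cls.1 hC
  have hdisj : ∀ C ∈ cls H b, ∀ D ∈ cls H b, C ≠ D →
      Disjoint (Finset.univ.filter (fun g : G => (g : G ⧸ H) = C))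
        (Finset.univ.filter (fun g : G => (g : G ⧸ H) = D)) := by
    intro C _ D _ hCD
    rw [Finset.disjoint_left]
    intro g hg hg'
    simp only [Finset.mem_filter] at hg hg'
    exact hCD (hg.2 ▸ hg'.2 ▸ rfl)
  rw [hset, Finset.card_biUnion hdisj,
    Finset.sum_congr rfl (fun C _ => card_fiber C), Finset.sum_const, smul_eq_mul]

lemma card_cls_inv (a : G) : (cls H a).card = (cls H a⁻¹).card := by
  classical
  have hbij : (Finset.univ.filter (fun g : G => DC H a g)).card
      = (Finset.univ.filter (fun g : G => DC H a⁻¹ g)).card := by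
    refine Finset.card_bij' (fun g _ => g⁻¹) (fun g _ => g⁻¹) ?_ ?_ ?_ ?_
    · intro g hg
      simp only [Finset.mem_filter, Finset.mem_univ, true_and] at hg ⊢
      exact dc_inv hg
    · intro g hg
      simp only [Finset.mem_filter, Finset.mem_univ, true_and] at hg ⊢
      have := dc_inv hg
      rwa [inv_inv] at this
    · intro g _; simp
    · intro g _; simp
  rw [card_dfin, card_dfin] at hbij
  have hpos : 0 < Nat.card H := Nat.card_pos
  exact Nat.eq_of_mul_eq_mul_right hpos hbij

end Counting

section ClassSpec

variable {G : Type*} [Group G] [Finite G] (H : Subgroup G)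

/-- the desired coherence property of a representative choice on a class-closed set `U` -/
def Spec (U : Finset (G ⧸ H)) (w : (G ⧸ H) → G) : Prop :=
  (∀ C ∈ U, ((w C : G) : G ⧸ H) = C ∧ (((w C)⁻¹ : G) : G ⧸ H) ∈ U ∧
      w (((w C)⁻¹ : G) : G ⧸ H) = (w C)⁻¹) ∧
    (((1 : G) : G ⧸ H) ∈ U → w ((1 : G) : G ⧸ H) = 1)

noncomputable def clspair (a : G) : Finset (G ⧸ H) := cls H a ∪ cls H a⁻¹

variable {H}

lemma self_mem_clspair {a : G} : ((a : G ⧸ H)) ∈ clspair H a :=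
  Finset.mem_union_left _ self_mem_cls

lemma class_spec
    (hinv : ∀ b : G, b ∉ H → DC H b b⁻¹ → Odd (cls H b).card →
      ∃ z : G, z * z = 1 ∧ ((z : G ⧸ H)) ∈ cls H b)
    (a : G) : ∃ w, Spec H (clspair H a) w := by
  classical
  by_cases ha : a ∈ H
  · -- identity class
    have hsingle : ∀ b : G, b ∈ H → cls H b = {((1 : G) : G ⧸ H)} := by
      intro b hb
      ext C
      simp only [Finset.mem_singleton]
      constructor
      · intro hC
        have hdc : DC H b C.out := mem_cls_out.1 hC
        have hout : C.out ∈ H := mem_of_dc (dc_symm hdc) hb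
        rw [← QuotientGroup.out_eq' C]
        rw [QuotientGroup.eq]
        simpa using inv_mem hout
      · intro hC
        rw [hC]
        exact one_mem_cls_iff.2 hb
    have hpair : clspair H a = {((1 : G) : G ⧸ H)} := by
      rw [clspair, hsingle a ha, hsingle a⁻¹ (inv_mem ha), Finset.union_self]
    refine ⟨fun _ => 1, ?_, fun _ => rfl⟩
    intro C hC
    rw [hpair, Finset.mem_singleton] at hC
    subst hC
    refine ⟨rfl, ?_, ?_⟩
    · rw [inv_one]; rw [hpair]; simp
    · rw [inv_one]
  · by_cases hsym : DC H a a⁻¹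
    · -- symmetric class
      have hcls : cls H a⁻¹ = cls H a := (cls_eq_of_dc hsym).symm
      have hpair : clspair H a = cls H a := by rw [clspair, hcls, Finset.union_self]
      have hone : ((1 : G) : G ⧸ H) ∉ cls H a := fun h => ha (one_mem_cls_iff.1 h)
      have hPany : ∀ C ∈ cls H a, ∀ C' ∈ cls H a,
          ∃ x : G, (x : G ⧸ H) = C ∧ ((x⁻¹ : G) : G ⧸ H) = C' := by
        intro C hC C' hC'
        have hu : DC H a C.out := mem_cls_out.1 hC
        have hv : DC H a C'.out := mem_cls_out.1 hC'
        have hdc : DC H C.out (C'.out)⁻¹ :=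
          dc_trans (dc_symm hu) (dc_trans hsym (dc_inv hv))
        obtain ⟨x, hx1, hx2⟩ := witness hdc
        exact ⟨x, by rw [hx1, QuotientGroup.out_eq'], by rw [hx2, QuotientGroup.out_eq']⟩
      rcases Nat.even_or_odd (cls H a).card with heven | hodd
      · obtain ⟨f, hf⟩ := exists_fpf (cls H a).card (cls H a) rfl heven
        obtain ⟨w, hw⟩ := build (cls H a) f (fun C hC => hf C hC)
          (fun C hC => hPany C hC (f C) (hf C hC).1)
        refine ⟨w, ?_, ?_⟩
        · rw [hpair]; exact hw
        · rw [hpair]; intro h; exact absurd h hone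
      · obtain ⟨z, hz, hzm⟩ := hinv a ha hsym hodd
        have hzinv : z⁻¹ = z := inv_eq_of_mul_eq_one_right hz
        have hcards : Even ((cls H a).erase ((z : G ⧸ H))).card := by
          rw [Finset.card_erase_of_mem hzm]
          rcases hodd with ⟨k, hk⟩
          exact ⟨k, by omega⟩
        obtain ⟨f, hf⟩ := exists_fpf _ ((cls H a).erase ((z : G ⧸ H))) rfl hcards
        have hsub : ∀ C ∈ (cls H a).erase ((z : G ⧸ H)), C ∈ cls H a :=
          fun C hC => Finset.mem_of_mem_erase hC
        obtain ⟨w', hw'⟩ := build _ f (fun C hC => hf C hC)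
          (fun C hC => hPany C (hsub C hC) (f C) (hsub _ (hf C hC).1))
        set w : (G ⧸ H) → G := fun C => if C = ((z : G ⧸ H)) then z else w' C with hwdef
        have hwz : w ((z : G ⧸ H)) = z := by rw [hwdef]; simp
        have hwother : ∀ C, C ≠ ((z : G ⧸ H)) → w C = w' C := by
          intro C h; rw [hwdef]; simp only [if_neg h]
        refine ⟨w, ?_, ?_⟩
        · rw [hpair]
          intro C hC
          by_cases hC0 : C = ((z : G ⧸ H))
          · subst hC0
            rw [hwz, hzinv]
            exact ⟨rfl, hzm, hwz⟩
          · have hCs : C ∈ (cls H a).erase ((z : G ⧸ H)) := Finset.mem_erase.mpr ⟨hC0, hC⟩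
            rw [hwother C hC0]
            obtain ⟨h1, h2, h3⟩ := hw' C hCs
            refine ⟨h1, hsub _ h2, ?_⟩
            rw [hwother _ (Finset.mem_erase.mp h2).1]
            exact h3
        · rw [hpair]; intro h; exact absurd h hone
    · -- asymmetric pair of classes
      have hdisj : Disjoint (cls H a) (cls H a⁻¹) := by
        rw [Finset.disjoint_left]
        intro C hC hC'
        exact hsym (dc_trans (mem_cls_out.1 hC) (dc_symm (mem_cls_out.1 hC')))
      have hcard : Fintype.card ↥(cls H a) = Fintype.card ↥(cls H a⁻¹) := by
        rw [Fintype.card_coe, Fintype.card_coe, card_cls_inv]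
      set e : ↥(cls H a) ≃ ↥(cls H a⁻¹) := Fintype.equivOfCardEq hcard with he
      set f : (G ⧸ H) → (G ⧸ H) := fun C =>
        if h : C ∈ cls H a then (e ⟨C, h⟩ : G ⧸ H)
        else if h' : C ∈ cls H a⁻¹ then ((e.symm ⟨C, h'⟩ : G ⧸ H)) else C with hfdef
      have hf1 : ∀ (C) (h : C ∈ cls H a), f C = (e ⟨C, h⟩ : G ⧸ H) := by
        intro C h; rw [hfdef]; simp only [dif_pos h]
      have hf2 : ∀ (C) (h : C ∈ cls H a⁻¹), f C = (e.symm ⟨C, h⟩ : G ⧸ H) := by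
        intro C h
        have hn : C ∉ cls H a := Finset.disjoint_right.mp hdisj h
        rw [hfdef]; simp only [dif_neg hn, dif_pos h]
      set U : Finset (G ⧸ H) := clspair H a with hU
      have hUdef : U = cls H a ∪ cls H a⁻¹ := rfl
      have hfprop : ∀ C ∈ U, f C ∈ U ∧ f C ≠ C ∧ f (f C) = C := by
        intro C hC
        rw [hUdef, Finset.mem_union] at hC
        rcases hC with h | h
        · have h1 := hf1 C h
          have hmem : f C ∈ cls H a⁻¹ := h1 ▸ (e ⟨C, h⟩).2
          refine ⟨Finset.mem_union_right _ hmem, ?_, ?_⟩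
          · intro hEq
            exact absurd (hEq ▸ hmem) (Finset.disjoint_left.mp hdisj h)
          · rw [hf2 (f C) hmem]
            have : (⟨f C, hmem⟩ : ↥(cls H a⁻¹)) = e ⟨C, h⟩ := Subtype.ext h1
            rw [this, Equiv.symm_apply_apply]
        · have h1 := hf2 C h
          have hmem : f C ∈ cls H a := h1 ▸ (e.symm ⟨C, h⟩).2
          refine ⟨Finset.mem_union_left _ hmem, ?_, ?_⟩
          · intro hEq
            exact absurd (hEq ▸ hmem) (Finset.disjoint_right.mp hdisj h)
          · rw [hf1 (f C) hmem]
            have : (⟨f C, hmem⟩ : ↥(cls H a)) = e.symm ⟨C, h⟩ := Subtype.ext h1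
            rw [this, Equiv.apply_symm_apply]
      have hP : ∀ C ∈ U, ∃ x : G, (x : G ⧸ H) = C ∧ ((x⁻¹ : G) : G ⧸ H) = f C := by
        intro C hC
        rw [hUdef, Finset.mem_union] at hC
        have hfm := hfprop C (by rw [hUdef, Finset.mem_union]; exact hC)
        rcases hC with h | h
        · have hmem : f C ∈ cls H a⁻¹ := by
            have h1 := hf1 C h
            exact h1 ▸ (e ⟨C, h⟩).2
          have hu : DC H a C.out := mem_cls_out.1 h
          have hv : DC H a⁻¹ (f C).out := mem_cls_out.1 hmem
          have hdc : DC H C.out ((f C).out)⁻¹ := by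
            have h2 := dc_inv hv
            rw [inv_inv] at h2
            exact dc_trans (dc_symm hu) h2
          obtain ⟨x, hx1, hx2⟩ := witness hdc
          exact ⟨x, by rw [hx1, QuotientGroup.out_eq'],
            by rw [hx2, QuotientGroup.out_eq']⟩
        · have hmem : f C ∈ cls H a := by
            have h1 := hf2 C h
            exact h1 ▸ (e.symm ⟨C, h⟩).2
          have hu : DC H a⁻¹ C.out := mem_cls_out.1 h
          have hv : DC H a (f C).out := mem_cls_out.1 hmem
          have hdc : DC H C.out ((f C).out)⁻¹ :=
            dc_trans (dc_symm hu) (dc_inv hv)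
          obtain ⟨x, hx1, hx2⟩ := witness hdc
          exact ⟨x, by rw [hx1, QuotientGroup.out_eq'],
            by rw [hx2, QuotientGroup.out_eq']⟩
      obtain ⟨w, hw⟩ := build U f hfprop hP
      refine ⟨w, hw, ?_⟩
      intro h
      rw [hUdef, Finset.mem_union] at h
      rcases h with h | h
      · exact absurd (one_mem_cls_iff.1 h) ha
      · exact absurd (by simpa using inv_mem (one_mem_cls_iff.1 h) : a ∈ H) ha

lemma clspair_eq_of_mem {a : G} {C : G ⧸ H} (h : C ∈ clspair H a) :
    clspair H (C.out) = clspair H a := by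
  rw [clspair, Finset.mem_union] at h
  rcases h with h | h
  · have hdc : DC H a C.out := mem_cls_out.1 h
    rw [clspair, clspair, cls_eq_of_dc (dc_symm hdc), cls_eq_of_dc (dc_symm (dc_inv hdc))]
  · have hdc : DC H a⁻¹ C.out := mem_cls_out.1 h
    have hdc2 : DC H a (C.out)⁻¹ := by
      have := dc_inv hdc; rwa [inv_inv] at this
    rw [clspair, clspair, cls_eq_of_dc (dc_symm hdc), cls_eq_of_dc (dc_symm hdc2),
      Finset.union_comm]

lemma self_mem_clspair_out (C : G ⧸ H) : C ∈ clspair H (C.out) := by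
  have h := self_mem_clspair (H := H) (a := C.out)
  rwa [QuotientGroup.out_eq'] at h

theorem perfectCode_of_inv
    (hinv : ∀ b : G, b ∉ H → DC H b b⁻¹ → Odd (cls H b).card →
      ∃ z : G, z * z = 1 ∧ ((z : G ⧸ H)) ∈ cls H b) :
    IsPerfectCode H := by
  classical
  set WS : Finset (G ⧸ H) → ((G ⧸ H) → G) :=
    fun U => if h : ∃ w, Spec H U w then Classical.choose h else fun _ => 1 with hWS
  have hWSspec : ∀ a : G, Spec H (clspair H a) (WS (clspair H a)) := by
    intro a
    have h : ∃ w, Spec H (clspair H a) w := class_spec hinv a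
    rw [hWS]
    simp only [dif_pos h]
    exact Classical.choose_spec h
  set r : (G ⧸ H) → G := fun C => WS (clspair H (C.out)) C with hr
  have hr1 : ∀ C : G ⧸ H, ((r C : G) : G ⧸ H) = C := by
    intro C
    exact ((hWSspec C.out).1 C (self_mem_clspair_out C)).1
  have hrpair : ∀ C : G ⧸ H, r ((((r C)⁻¹ : G) : G ⧸ H)) = (r C)⁻¹ := by
    intro C
    obtain ⟨_, h2, h3⟩ := (hWSspec C.out).1 C (self_mem_clspair_out C)
    have hstab := clspair_eq_of_mem h2
    rw [hr]
    show WS (clspair H ((((r C)⁻¹ : G) : G ⧸ H)).out) ((((r C)⁻¹ : G) : G ⧸ H)) = (r C)⁻¹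
    rw [hstab]
    exact h3
  have hrone : r ((1 : G) : G ⧸ H) = 1 := by
    exact (hWSspec (((1 : G) : G ⧸ H)).out).2 (self_mem_clspair_out _)
  refine ⟨Set.range r, ⟨((1 : G) : G ⧸ H), hrone⟩, ?_, ?_⟩
  · ext x
    rw [Set.mem_inv]
    constructor
    · rintro ⟨C, hC⟩
      refine ⟨(((r C)⁻¹ : G) : G ⧸ H), ?_⟩
      rw [hrpair C, hC, inv_inv]
    · rintro ⟨C, hC⟩
      refine ⟨(((r C)⁻¹ : G) : G ⧸ H), ?_⟩
      rw [hrpair C, ← hC]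
  · intro g
    refine ⟨r ((g : G ⧸ H)), ⟨Set.mem_range_self _, ?_⟩, ?_⟩
    · exact QuotientGroup.eq.mp (hr1 ((g : G ⧸ H))).symm
    · rintro y ⟨⟨C, rfl⟩, hy⟩
      have : ((g : G ⧸ H)) = ((r C : G) : G ⧸ H) := QuotientGroup.eq.mpr hy
      rw [hr1 C] at this
      rw [← this]

end ClassSpec

section GroupTheory

variable {G : Type*} [Group G] [Finite G] (H : Subgroup G)

/-- `H ∩ x H x⁻¹`. -/
def conjSub (x : G) : Subgroup G := H ⊓ Subgroup.comap ((MulAut.conj x⁻¹).toMonoidHom) H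

variable {H}

lemma mem_conjSub {x g : G} : g ∈ conjSub H x ↔ g ∈ H ∧ x⁻¹ * g * x ∈ H := by
  simp [conjSub, Subgroup.mem_inf, Subgroup.mem_comap, MulAut.conj_apply, mul_assoc]

/-- from a symmetric class, extract a representative whose square lies in `H` -/
lemma exists_sq {a : G} (hsym : DC H a a⁻¹) :
    ∃ x : G, DC H a x ∧ x * x ∈ H ∧ (a ∉ H → x ∉ H) := by
  obtain ⟨h₁, m₁, h₂, m₂, he⟩ := hsym
  refine ⟨a * h₂, ⟨1, one_mem _, h₂, m₂, by group⟩, ?_, ?_⟩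
  · have hx : a * h₂ = h₁⁻¹ * a⁻¹ := by rw [he]; group
    have h3 : (a * h₂) * (a * h₂) = (h₁⁻¹ * a⁻¹) * (a * h₂) := congrArg (· * (a * h₂)) hx
    have h4 : (h₁⁻¹ * a⁻¹) * (a * h₂) = h₁⁻¹ * h₂ := by group
    rw [h3, h4]
    exact mul_mem (inv_mem m₁) m₂
  · intro haH hxH
    apply haH
    have h5 : a = (a * h₂) * h₂⁻¹ := by group
    rw [h5]
    exact mul_mem hxH (inv_mem m₂)

/-- orbit–stabilizer, done by hand:
`|H| = (number of left cosets in the double coset of x) * |H ∩ xHx⁻¹|`. -/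
lemma card_H_decomp (x : G) :
    (cls H x).card * Nat.card (conjSub H x) = Nat.card H := by
  classical
  have h1 : (Finset.univ.filter (fun g : G => g ∈ H)).card = Nat.card H := by
    rw [Nat.card_eq_fintype_card]
    exact (Fintype.card_subtype _).symm
  have h2 : (Finset.univ.filter (fun g : G => g ∈ conjSub H x)).card
      = Nat.card (conjSub H x) := by
    rw [Nat.card_eq_fintype_card]
    exact (Fintype.card_subtype _).symm
  rw [← h1, ← h2]
  have hset : (Finset.univ.filter (fun g : G => g ∈ H))
      = (cls H x).biUnion
        (fun C => Finset.univ.filter (fun h : G => h ∈ H ∧ ((h * x : G) : G ⧸ H) = C)) := by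
    ext h
    simp only [Finset.mem_filter, Finset.mem_univ, true_and, Finset.mem_biUnion]
    constructor
    · intro hh
      exact ⟨((h * x : G) : G ⧸ H), mem_cls.2 ⟨h, hh, rfl⟩, hh, rfl⟩
    · rintro ⟨C, _, hh, _⟩
      exact hh
  have hdisj : ∀ C ∈ cls H x, ∀ D ∈ cls H x, C ≠ D →
      Disjoint (Finset.univ.filter (fun h : G => h ∈ H ∧ ((h * x : G) : G ⧸ H) = C))
        (Finset.univ.filter (fun h : G => h ∈ H ∧ ((h * x : G) : G ⧸ H) = D)) := by
    intro C _ D _ hCD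
    rw [Finset.disjoint_left]
    intro g hg hg'
    simp only [Finset.mem_filter] at hg hg'
    exact hCD (hg.2.2 ▸ hg'.2.2 ▸ rfl)
  rw [hset, Finset.card_biUnion hdisj]
  rw [Finset.sum_congr rfl ?_, Finset.sum_const, smul_eq_mul]
  intro C hC
  obtain ⟨h₀, hh₀, hmk⟩ := mem_cls.1 hC
  refine Finset.card_bij' (fun h _ => h₀⁻¹ * h) (fun k _ => h₀ * k) ?_ ?_ ?_ ?_
  · intro h hh
    simp only [Finset.mem_filter, Finset.mem_univ, true_and] at hh ⊢
    obtain ⟨hhH, hhc⟩ := hh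
    rw [mem_conjSub]
    refine ⟨mul_mem (inv_mem hh₀) hhH, ?_⟩
    have : ((h₀ * x : G) : G ⧸ H) = ((h * x : G) : G ⧸ H) := hmk.trans hhc.symm
    have hmem := QuotientGroup.eq.mp this
    have he : (h₀ * x)⁻¹ * (h * x) = x⁻¹ * (h₀⁻¹ * h) * x := by group
    rwa [he] at hmem
  · intro k hk
    simp only [Finset.mem_filter, Finset.mem_univ, true_and] at hk ⊢
    rw [mem_conjSub] at hk
    refine ⟨mul_mem hh₀ hk.1, ?_⟩
    rw [← hmk, QuotientGroup.eq]
    have he : (h₀ * k * x)⁻¹ * (h₀ * x) = x⁻¹ * k⁻¹ * x := by group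
    rw [he]
    have := inv_mem hk.2
    have he2 : (x⁻¹ * k * x)⁻¹ = x⁻¹ * k⁻¹ * x := by group
    rwa [he2] at this
  · intro h _; group
  · intro k _; group

/-- the conjugation-stability of `conjSub H x` when `x * x ∈ H` -/
lemma conjSub_conj {x : G} (hx2 : x * x ∈ H) :
    (∀ k ∈ conjSub H x, x * k * x⁻¹ ∈ conjSub H x) ∧
      (∀ k ∈ conjSub H x, x⁻¹ * k * x ∈ conjSub H x) := by
  constructor
  · intro k hk
    rw [mem_conjSub] at hk ⊢
    constructor
    · have he : x * k * x⁻¹ = (x * x) * (x⁻¹ * k * x) * (x * x)⁻¹ := by group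
      rw [he]
      exact mul_mem (mul_mem hx2 hk.2) (inv_mem hx2)
    · have he : x⁻¹ * (x * k * x⁻¹) * x = k := by group
      rw [he]
      exact hk.1
  · intro k hk
    rw [mem_conjSub] at hk ⊢
    refine ⟨hk.2, ?_⟩
    have he : x⁻¹ * (x⁻¹ * k * x) * x = (x * x)⁻¹ * k * (x * x) := by group
    rw [he]
    exact mul_mem (mul_mem (inv_mem hx2) hk.1) hx2

/-- odd index: there is no symmetric class outside `H` with an odd number of cosets -/
lemma no_bad_of_odd_index (hodd : Odd H.index) {b : G} (hb : b ∉ H)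
    (hsym : DC H b b⁻¹) (hcard : Odd (cls H b).card) : False := by
  obtain ⟨x, hdc, hx2, hxH'⟩ := exists_sq hsym
  have hxH := hxH' hb
  have hcls : cls H x = cls H b := (cls_eq_of_dc hdc).symm
  set K := conjSub H x with hK
  obtain ⟨hc1, hc2⟩ := conjSub_conj hx2
  have hxK : x ∉ K := fun h => hxH (mem_conjSub.1 h).1
  -- W = K ∪ xK is a subgroup
  set W : Subgroup G :=
    { carrier := {g | g ∈ K ∨ x⁻¹ * g ∈ K}
      one_mem' := Or.inl (one_mem K)
      mul_mem' := by
        rintro p q (hp | hp) (hq | hq)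
        · exact Or.inl (mul_mem hp hq)
        · refine Or.inr ?_
          have he : x⁻¹ * (p * q) = (x⁻¹ * p * x) * (x⁻¹ * q) := by group
          rw [he]
          exact mul_mem (hc2 p hp) hq
        · refine Or.inr ?_
          have he : x⁻¹ * (p * q) = (x⁻¹ * p) * q := by group
          rw [he]
          exact mul_mem hp hq
        · refine Or.inl ?_
          have he2 : p * q = (x * x) * (x⁻¹ * (x⁻¹ * p) * x) * (x⁻¹ * q) := by group
          rw [he2]
          have hxx : x * x ∈ K := by
            rw [mem_conjSub]
            refine ⟨hx2, ?_⟩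
            have : x⁻¹ * (x * x) * x = x * x := by group
            rw [this]; exact hx2
          exact mul_mem (mul_mem hxx (hc2 _ hp)) hq
      inv_mem' := by
        rintro p (hp | hp)
        · exact Or.inl (inv_mem hp)
        · refine Or.inr ?_
          have he : x⁻¹ * p⁻¹ = (x⁻¹ * (x⁻¹ * p)⁻¹ * x) * (x * x)⁻¹ := by group
          rw [he]
          exact mul_mem (hc2 _ (inv_mem hp)) (inv_mem (by
            rw [mem_conjSub]
            refine ⟨hx2, ?_⟩
            have : x⁻¹ * (x * x) * x = x * x := by group
            rw [this]; exact hx2)) } with hW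
  have hWcard : Nat.card W = 2 * Nat.card K := by
    have hWset : (W : Set G) = (K : Set G) ∪ (fun g => x * g) '' (K : Set G) := by
      ext g
      simp only [Set.mem_union, Set.mem_image, SetLike.mem_coe]
      constructor
      · rintro (h | h)
        · exact Or.inl h
        · exact Or.inr ⟨x⁻¹ * g, h, by group⟩
      · rintro (h | ⟨k, hk, rfl⟩)
        · exact Or.inl h
        · refine Or.inr ?_
          have : x⁻¹ * (x * k) = k := by group
          show x⁻¹ * (x * k) ∈ K
          rw [this]; exact hk
    have hdisjW : Disjoint (K : Set G) ((fun g => x * g) '' (K : Set G)) := by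
      rw [Set.disjoint_left]
      rintro g hg ⟨k, hk, rfl⟩
      exact hxK (by
        have : x = (x * k) * k⁻¹ := by group
        rw [this]
        exact mul_mem hg (inv_mem hk))
    calc Nat.card W = Nat.card (W : Set G) := rfl
      _ = ((W : Set G)).ncard := Nat.card_coe_set_eq _
      _ = ((K : Set G) ∪ (fun g => x * g) '' (K : Set G)).ncard := by rw [hWset]
      _ = (K : Set G).ncard + ((fun g => x * g) '' (K : Set G)).ncard :=
          Set.ncard_union_eq hdisjW (Set.toFinite _) (Set.toFinite _)
      _ = (K : Set G).ncard + (K : Set G).ncard := by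
          rw [Set.ncard_image_of_injective _ (mul_right_injective x)]
      _ = 2 * Nat.card K := by
          rw [← Nat.card_coe_set_eq]
          have : Nat.card (K : Set G) = Nat.card K := rfl
          rw [this]
          ring
  have hdvd : Nat.card W ∣ Nat.card G := Subgroup.card_subgroup_dvd_card W
  have hGcard : Nat.card G = Nat.card H * H.index := (Subgroup.card_mul_index H).symm
  have hHcard : Nat.card H = (cls H b).card * Nat.card K := by
    rw [← hcls, card_H_decomp]
  have hKpos : 0 < Nat.card K := Nat.card_pos
  have h2dvd : 2 ∣ (cls H b).card * H.index := by
    have h3 : Nat.card W ∣ Nat.card K * ((cls H b).card * H.index) := by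
      rw [hGcard, hHcard] at hdvd
      have he : (cls H b).card * Nat.card K * H.index
          = Nat.card K * ((cls H b).card * H.index) := by ring
      rwa [he] at hdvd
    rw [hWcard] at h3
    have h4 : Nat.card K * 2 ∣ Nat.card K * ((cls H b).card * H.index) := by
      rwa [mul_comm] at h3
    exact (Nat.mul_dvd_mul_iff_left hKpos).mp h4
  have hoddprod : Odd ((cls H b).card * H.index) := hcard.mul hodd
  rw [Nat.odd_iff] at hoddprod
  omega

/-- odd order: symmetric classes always contain an involution coset -/
lemma inv_of_odd_card (hodd : Odd (Nat.card H)) {b : G} (hb : b ∉ H)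
    (hsym : DC H b b⁻¹) :
    ∃ z : G, z * z = 1 ∧ ((z : G ⧸ H)) ∈ cls H b := by
  obtain ⟨x, hdc, hx2, _⟩ := exists_sq hsym
  set d := orderOf (x * x) with hd
  have hdvd : d ∣ Nat.card H := Subgroup.orderOf_dvd_natCard H hx2
  have hdodd : Odd d := by
    rcases Nat.even_or_odd d with he | ho
    · exfalso
      have h2 : (2 : ℕ) ∣ Nat.card H := dvd_trans he.two_dvd hdvd
      rw [Nat.odd_iff] at hodd
      omega
    · exact ho
  obtain ⟨k, hk⟩ := hdodd
  refine ⟨(x ^ d)⁻¹, ?_, ?_⟩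
  · have : (x ^ d)⁻¹ * (x ^ d)⁻¹ = (x ^ d * x ^ d)⁻¹ := by group
    rw [this]
    have h2 : x ^ d * x ^ d = (x * x) ^ d := by
      rw [← pow_add, ← two_mul, pow_mul, pow_two]
    rw [h2, pow_orderOf_eq_one, inv_one]
  · have hmem : x⁻¹ * (x ^ d)⁻¹ ∈ H := by
      have he : x⁻¹ * (x ^ d)⁻¹ = (x ^ (d + 1))⁻¹ := by
        rw [pow_succ]
        group
      have hdk : d + 1 = 2 * (k + 1) := by omega
      rw [he, hdk, pow_mul, pow_two]
      exact inv_mem (pow_mem hx2 _)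
    have hzq : ((x : G ⧸ H)) = (((x ^ d)⁻¹ : G) : G ⧸ H) := QuotientGroup.eq.mpr hmem
    exact mk_mem_cls.2 (dc_trans hdc (dc_of_mk_eq hzq))

/-- the 2-group case: an odd class must be a normalizer coset, then use the code in `N` -/
lemma inv_of_pgroup (hp : IsPGroup 2 H)
    (hPCN : IsPerfectCode (H.subgroupOf (Subgroup.normalizer (H : Set G)))) {b : G} (hb : b ∉ H)
    (hsym : DC H b b⁻¹) (hcard : Odd (cls H b).card) :
    ∃ z : G, z * z = 1 ∧ ((z : G ⧸ H)) ∈ cls H b := by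
  obtain ⟨x, hdc, hx2, hxH'⟩ := exists_sq hsym
  have hxH := hxH' hb
  have hcls : cls H x = cls H b := (cls_eq_of_dc hdc).symm
  haveI : Fact (Nat.Prime 2) := ⟨Nat.prime_two⟩
  obtain ⟨kk, hkk⟩ := IsPGroup.iff_card.1 hp
  have hdvd : (cls H b).card ∣ 2 ^ kk := by
    rw [← hkk]
    exact ⟨Nat.card (conjSub H x), by rw [← hcls]; exact (card_H_decomp x).symm⟩
  have hone : (cls H b).card = 1 := by
    obtain ⟨i, _, hie⟩ := (Nat.dvd_prime_pow Nat.prime_two).1 hdvd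
    rcases Nat.eq_zero_or_pos i with h0 | hipos
    · rw [hie, h0, pow_zero]
    · exfalso
      have h2 : (2 : ℕ) ∣ (cls H b).card := hie ▸ dvd_pow_self 2 hipos.ne'
      rw [Nat.odd_iff] at hcard
      omega
  have hsing : cls H x = {((x : G ⧸ H))} := by
    obtain ⟨Cc, hCc⟩ := Finset.card_eq_one.1 (hcls ▸ hone : (cls H x).card = 1)
    have hxm : ((x : G ⧸ H)) ∈ cls H x := self_mem_cls
    rw [hCc, Finset.mem_singleton] at hxm
    rw [hCc, hxm]
  have hconj : ∀ h ∈ H, x⁻¹ * h * x ∈ H := by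
    intro h hh
    have hmem : ((h * x : G) : G ⧸ H) ∈ cls H x := mem_cls.2 ⟨h, hh, rfl⟩
    rw [hsing, Finset.mem_singleton] at hmem
    have h3 := QuotientGroup.eq.mp hmem
    have he : ((h * x)⁻¹ * x)⁻¹ = x⁻¹ * h * x := by group
    rw [← he]
    exact inv_mem h3
  have hxn : x ∈ (Subgroup.normalizer (H : Set G)) := by
    rw [Subgroup.mem_normalizer_iff]
    have hinj : Function.Injective (fun h : ↥H => (⟨x⁻¹ * h * x, hconj h h.2⟩ : ↥H)) := by
      intro h1 h2 h12
      rw [Subtype.ext_iff] at h12 ⊢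
      simp only at h12
      have := mul_left_cancel (a := x⁻¹) (by
        have := mul_right_cancel (b := x) h12
        exact this)
      exact this
    have hbij := Finite.injective_iff_bijective.mp hinj
    intro h
    constructor
    · intro hh
      obtain ⟨⟨h', hh'⟩, heq⟩ := hbij.2 ⟨h, hh⟩
      rw [Subtype.ext_iff] at heq
      simp only at heq
      have : x * h * x⁻¹ = h' := by rw [← heq]; group
      rw [this]
      exact hh'
    · intro hh
      have := hconj _ hh
      have he : x⁻¹ * (x * h * x⁻¹) * x = h := by group
      rwa [he] at this
  obtain ⟨T, hT1, hTinv, hTu⟩ := hPCN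
  set x' : ↥(Subgroup.normalizer (H : Set G)) := ⟨x, hxn⟩ with hx'
  obtain ⟨t, ⟨htT, hth⟩, huniq⟩ := hTu x'
  have htinvT : t⁻¹ ∈ T := by
    rw [← hTinv, Set.mem_inv, inv_inv]
    exact htT
  have hx'2 : x' * x' ∈ H.subgroupOf (Subgroup.normalizer (H : Set G)) := by
    rw [Subgroup.mem_subgroupOf]
    simpa using hx2
  have hkey : (x')⁻¹ * t⁻¹ ∈ H.subgroupOf (Subgroup.normalizer (H : Set G)) := by
    have he : (x')⁻¹ * t⁻¹ = ((x')⁻¹ * ((x')⁻¹ * t)⁻¹ * ((x')⁻¹)⁻¹) * (x' * x')⁻¹ := by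
      group
    rw [he]
    exact mul_mem (Subgroup.Normal.conj_mem Subgroup.normal_in_normalizer _
      (inv_mem hth) _) (inv_mem hx'2)
  have htt : t⁻¹ = t := huniq t⁻¹ ⟨htinvT, hkey⟩
  refine ⟨(t : G), ?_, ?_⟩
  · have h1 : t * t = t * t⁻¹ := congrArg (t * ·) htt.symm
    have h2 : t * t = 1 := h1.trans (mul_inv_cancel t)
    calc (t : G) * (t : G) = ((t * t : ↥(Subgroup.normalizer (H : Set G))) : G) := rfl
      _ = ((1 : ↥(Subgroup.normalizer (H : Set G))) : G) := by rw [h2]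
      _ = 1 := rfl
  · rw [Subgroup.mem_subgroupOf] at hth
    have hxt : ((x : G ⧸ H)) = (((t : G)) : G ⧸ H) := by
      apply QuotientGroup.eq.mpr
      simpa using hth
    exact mk_mem_cls.2 (dc_trans hdc (dc_of_mk_eq hxt))

/-- forward direction: a perfect code of `G` restricts to the normalizer -/
lemma forward (h : IsPerfectCode H) : IsPerfectCode (H.subgroupOf (Subgroup.normalizer (H : Set G))) := by
  obtain ⟨T, h1, hinv, hu⟩ := h
  refine ⟨{t : ↥(Subgroup.normalizer (H : Set G)) | (t : G) ∈ T}, by simpa using h1, ?_, ?_⟩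
  · ext t
    simp only [Set.mem_inv, Set.mem_setOf_eq]
    have hcoe : ((t⁻¹ : ↥(Subgroup.normalizer (H : Set G))) : G) = (t : G)⁻¹ := rfl
    rw [hcoe, show ((t : G)⁻¹ ∈ T ↔ (t : G) ∈ T⁻¹) from (Set.mem_inv).symm, hinv]
  · intro g
    obtain ⟨t, ⟨htT, hth⟩, huniq⟩ := hu (g : G)
    have htN : t ∈ (Subgroup.normalizer (H : Set G)) := by
      have he : t = (g : G) * ((g : G)⁻¹ * t) := by group
      rw [he]
      exact mul_mem g.2 (Subgroup.le_normalizer hth)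
    refine ⟨⟨t, htN⟩, ⟨htT, ?_⟩, ?_⟩
    · rw [Subgroup.mem_subgroupOf]
      simpa using hth
    · rintro y ⟨hyT, hyh⟩
      rw [Subgroup.mem_subgroupOf] at hyh
      have : (y : G) = t := huniq y ⟨hyT, by simpa using hyh⟩
      exact Subtype.ext this

end GroupTheory

end PCProof

theorem perfect_code_iff_perfect_code_normalizer {G : Type*} [Group G] [Finite G]
    (H : Subgroup G)
    (hyp : IsPGroup 2 H ∨ Odd (Nat.card H) ∨ Odd H.index) :
    IsPerfectCode H ↔ IsPerfectCode (H.subgroupOf (Subgroup.normalizer (H : Set G))) := by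
  constructor
  · exact PCProof.forward
  · intro h
    apply PCProof.perfectCode_of_inv
    intro b hb hsym hodd
    rcases hyp with hp | hoddH | hoddI
    · exact PCProof.inv_of_pgroup hp h hb hsym hodd
    · exact PCProof.inv_of_odd_card hoddH hb hsym
    · exact (PCProof.no_bad_of_odd_index hoddI hb hsym hodd).elim
end

section
/- Let G be a finite group and H a subgroup of G such that either H is a 2-group, or |H| is odd, or |G : H| is odd. Then H is a perfect code of G if and only if for every x ∈ N_G(H) with x² ∈ H there exists h ∈ H with (xh)² = 1. -/
namespace PCwork

open MulAction

lemma helper2 {α : Type*} [DecidableEq α] (u v : Finset α) (hd : Disjoint u v)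
    (hc : u.card = v.card) :
    ∃ p : α → α, (∀ a ∈ u, p a ∈ v ∧ p (p a) = a) ∧ (∀ a ∈ v, p a ∈ u ∧ p (p a) = a) ∧
      (∀ a, a ∉ u → a ∉ v → p a = a) := by
  classical
  let e := Finset.equivOfCardEq hc
  refine ⟨fun a => if h : a ∈ u then (e ⟨a, h⟩ : α) else if h : a ∈ v then (e.symm ⟨a, h⟩ : α)
    else a, ?_, ?_, ?_⟩
  · intro a ha
    have h1 : (e ⟨a, ha⟩ : α) ∈ v := (e ⟨a, ha⟩).2
    have h2 : (e ⟨a, ha⟩ : α) ∉ u := fun hmem => (Finset.disjoint_left.mp hd) hmem h1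
    constructor
    · simp only [dif_pos ha]; exact h1
    · simp only [dif_pos ha, dif_neg h2, dif_pos h1]
      have : e.symm ⟨(e ⟨a, ha⟩ : α), h1⟩ = ⟨a, ha⟩ := by
        rw [show (⟨(e ⟨a, ha⟩ : α), h1⟩ : {x // x ∈ v}) = e ⟨a, ha⟩ from rfl, Equiv.symm_apply_apply]
      rw [this]
  · intro a ha
    have h2 : a ∉ u := fun hmem => (Finset.disjoint_left.mp hd) hmem ha
    have h1 : (e.symm ⟨a, ha⟩ : α) ∈ u := (e.symm ⟨a, ha⟩).2
    constructor
    · simp only [dif_neg h2, dif_pos ha]; exact h1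
    · simp only [dif_neg h2, dif_pos ha, dif_pos h1]
      have : e ⟨(e.symm ⟨a, ha⟩ : α), h1⟩ = ⟨a, ha⟩ := by
        rw [show (⟨(e.symm ⟨a, ha⟩ : α), h1⟩ : {x // x ∈ u}) = e.symm ⟨a, ha⟩ from rfl,
          Equiv.apply_symm_apply]
      rw [this]
  · intro a h1 h2; simp only [dif_neg h1, dif_neg h2]

lemma helper_split {α : Type*} [DecidableEq α] (s : Finset α) (h : Even s.card) :
    ∃ u v : Finset α, u ∪ v = s ∧ Disjoint u v ∧ u.card = v.card := by
  obtain ⟨n, hn⟩ := h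
  obtain ⟨u, hu, hcard⟩ := Finset.exists_subset_card_eq (show n ≤ s.card by omega)
  refine ⟨u, s \ u, Finset.union_sdiff_of_subset hu, Finset.disjoint_sdiff, ?_⟩
  rw [Finset.card_sdiff_of_subset hu, hcard, hn]; omega


variable {G : Type*} [Group G] (H : Subgroup G)

/-- double-coset-or-inverse relation -/
def dcr (g b : G) : Prop :=
  (∃ h₁ ∈ H, ∃ h₂ ∈ H, b = h₁ * g * h₂) ∨ (∃ h₁ ∈ H, ∃ h₂ ∈ H, b = h₁ * g⁻¹ * h₂)

lemma dcr_refl (g : G) : dcr H g g := Or.inl ⟨1, H.one_mem, 1, H.one_mem, by group⟩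

lemma dcr_inv (g : G) : dcr H g g⁻¹ := Or.inr ⟨1, H.one_mem, 1, H.one_mem, by group⟩

lemma dcr_symm {g b : G} (h : dcr H g b) : dcr H b g := by
  rcases h with ⟨h₁, m1, h₂, m2, rfl⟩ | ⟨h₁, m1, h₂, m2, rfl⟩
  · exact Or.inl ⟨h₁⁻¹, H.inv_mem m1, h₂⁻¹, H.inv_mem m2, by group⟩
  · exact Or.inr ⟨h₂, m2, h₁, m1, by group⟩

lemma dcr_trans {g b c : G} (h : dcr H g b) (h' : dcr H b c) : dcr H g c := by
  rcases h with ⟨h₁, m1, h₂, m2, rfl⟩ | ⟨h₁, m1, h₂, m2, rfl⟩ <;>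
    rcases h' with ⟨k₁, n1, k₂, n2, rfl⟩ | ⟨k₁, n1, k₂, n2, rfl⟩
  · exact Or.inl ⟨k₁ * h₁, H.mul_mem n1 m1, h₂ * k₂, H.mul_mem m2 n2, by group⟩
  · exact Or.inr ⟨k₁ * h₂⁻¹, H.mul_mem n1 (H.inv_mem m2), h₁⁻¹ * k₂,
      H.mul_mem (H.inv_mem m1) n2, by group⟩
  · exact Or.inr ⟨k₁ * h₁, H.mul_mem n1 m1, h₂ * k₂, H.mul_mem m2 n2, by group⟩
  · exact Or.inl ⟨k₁ * h₂⁻¹, H.mul_mem n1 (H.inv_mem m2), h₁⁻¹ * k₂,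
      H.mul_mem (H.inv_mem m1) n2, by group⟩

lemma dcr_mul_right {g b h : G} (hd : dcr H g b) (hh : h ∈ H) : dcr H g (b * h) := by
  rcases hd with ⟨h₁, m1, h₂, m2, rfl⟩ | ⟨h₁, m1, h₂, m2, rfl⟩
  · exact Or.inl ⟨h₁, m1, h₂ * h, H.mul_mem m2 hh, by group⟩
  · exact Or.inr ⟨h₁, m1, h₂ * h, H.mul_mem m2 hh, by group⟩

/-- if `dcr g b` and `b ∈ H` then `g ∈ H` -/
lemma dcr_mem_of_mem {g b : G} (hd : dcr H g b) (hb : b ∈ H) : g ∈ H := by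
  rcases hd with ⟨h₁, m1, h₂, m2, rfl⟩ | ⟨h₁, m1, h₂, m2, rfl⟩
  · have : h₁⁻¹ * (h₁ * g * h₂) * h₂⁻¹ ∈ H :=
      H.mul_mem (H.mul_mem (H.inv_mem m1) hb) (H.inv_mem m2)
    simpa [mul_assoc] using this
  · have : h₁⁻¹ * (h₁ * g⁻¹ * h₂) * h₂⁻¹ ∈ H :=
      H.mul_mem (H.mul_mem (H.inv_mem m1) hb) (H.inv_mem m2)
    have : g⁻¹ ∈ H := by simpa [mul_assoc] using this
    simpa using H.inv_mem this

lemma mem_orbit_iff' {b g : G} :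
    (QuotientGroup.mk b : G ⧸ H) ∈ orbit H (QuotientGroup.mk g : G ⧸ H) ↔
      ∃ h₁ ∈ H, ∃ h₂ ∈ H, b = h₁ * g * h₂ := by
  constructor
  · rintro ⟨⟨h, hh⟩, he⟩
    have he' : (QuotientGroup.mk (h * g) : G ⧸ H) = QuotientGroup.mk b := he
    have : (h * g)⁻¹ * b ∈ H := QuotientGroup.eq.mp he'
    exact ⟨h, hh, (h * g)⁻¹ * b, this, by group⟩
  · rintro ⟨h₁, m1, h₂, m2, rfl⟩
    refine ⟨⟨h₁, m1⟩, ?_⟩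
    show (QuotientGroup.mk (h₁ * g) : G ⧸ H) = QuotientGroup.mk (h₁ * g * h₂)
    exact (QuotientGroup.eq).mpr (by simpa [mul_assoc] using H.inv_mem m2)



lemma mk_out (C : G ⧸ H) : (QuotientGroup.mk (Quotient.out C) : G ⧸ H) = C := Quotient.out_eq C

/-- Lemma A : a common representative pair. -/
lemma exists_pair_rep {g : G} {C C' : G ⧸ H}
    (hC : C ∈ orbit H (QuotientGroup.mk g : G ⧸ H))
    (hC' : C' ∈ orbit H (QuotientGroup.mk g⁻¹ : G ⧸ H)) :
    ∃ t : G, (QuotientGroup.mk t : G ⧸ H) = C ∧ (QuotientGroup.mk t⁻¹ : G ⧸ H) = C' := by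
  obtain ⟨⟨h, hh⟩, he⟩ := hC
  obtain ⟨⟨k, hk⟩, he'⟩ := hC'
  refine ⟨h * g * k⁻¹, ?_, ?_⟩
  · rw [← he]
    show (QuotientGroup.mk (h * g * k⁻¹) : G ⧸ H) = QuotientGroup.mk (h * g)
    exact (QuotientGroup.eq).mpr (by simpa [mul_assoc] using hk)
  · rw [← he']
    show (QuotientGroup.mk (h * g * k⁻¹)⁻¹ : G ⧸ H) = QuotientGroup.mk (k * g⁻¹)
    refine (QuotientGroup.eq).mpr ?_
    have : (h * g * k⁻¹)⁻¹⁻¹ * (k * g⁻¹) = h := by group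
    rw [this]; exact hh


/-- K = H ∩ gHg⁻¹ -/
def Kg (g : G) : Subgroup G where
  carrier := {x | x ∈ H ∧ g⁻¹ * x * g ∈ H}
  one_mem' := ⟨H.one_mem, by simpa using H.one_mem⟩
  mul_mem' := by
    rintro a b ⟨ha1, ha2⟩ ⟨hb1, hb2⟩
    refine ⟨H.mul_mem ha1 hb1, ?_⟩
    have : (g⁻¹ * a * g) * (g⁻¹ * b * g) ∈ H := H.mul_mem ha2 hb2
    simpa [mul_assoc] using this
  inv_mem' := by
    rintro a ⟨ha1, ha2⟩
    refine ⟨H.inv_mem ha1, ?_⟩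
    have : (g⁻¹ * a * g)⁻¹ ∈ H := H.inv_mem ha2
    simpa [mul_assoc] using this

lemma mem_Kg {g x : G} : x ∈ Kg H g ↔ x ∈ H ∧ g⁻¹ * x * g ∈ H := Iff.rfl

/-- stabilizer of ⟦g⟧ in H -/
lemma stab_eq (g : G) :
    stabilizer H (QuotientGroup.mk g : G ⧸ H) = (Kg H g).subgroupOf H := by
  ext ⟨h, hh⟩
  simp only [mem_stabilizer_iff, Subgroup.mem_subgroupOf, mem_Kg]
  show (QuotientGroup.mk (h * g) : G ⧸ H) = QuotientGroup.mk g ↔ _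
  rw [QuotientGroup.eq]
  constructor
  · intro hm
    refine ⟨hh, ?_⟩
    have : ((h * g)⁻¹ * g)⁻¹ ∈ H := H.inv_mem hm
    simpa [mul_assoc] using this
  · rintro ⟨-, hm⟩
    have : (g⁻¹ * h * g)⁻¹ ∈ H := H.inv_mem hm
    simpa [mul_assoc] using this

lemma card_orbit_eq_index (g : G) :
    Nat.card (orbit H (QuotientGroup.mk g : G ⧸ H)) =
      ((Kg H g).subgroupOf H).index := by
  rw [Nat.card_congr (orbitEquivQuotientStabilizer H (QuotientGroup.mk g : G ⧸ H)), ← stab_eq]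
  rfl

/-- card of the two orbits agree -/
lemma card_orbit_inv (g : G) [Finite G] :
    Nat.card (orbit H (QuotientGroup.mk g : G ⧸ H)) =
      Nat.card (orbit H (QuotientGroup.mk g⁻¹ : G ⧸ H)) := by
  rw [card_orbit_eq_index, card_orbit_eq_index]
  have hcard : Nat.card (Kg H g) = Nat.card (Kg H g⁻¹) := by
    refine Nat.card_congr ⟨fun x => ⟨g⁻¹ * x * g, ?_, ?_⟩, fun y => ⟨g * y * g⁻¹, ?_, ?_⟩, ?_, ?_⟩
    · exact x.2.2
    · simpa [mul_assoc] using x.2.1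
    · simpa [mul_assoc] using y.2.2
    · simpa [mul_assoc] using y.2.1
    · rintro ⟨x, hx⟩; ext; simp [mul_assoc]
    · rintro ⟨y, hy⟩; ext; simp [mul_assoc]
  have h1 := Subgroup.card_mul_index ((Kg H g).subgroupOf H)
  have h2 := Subgroup.card_mul_index ((Kg H g⁻¹).subgroupOf H)
  have e1 : Nat.card ((Kg H g).subgroupOf H) = Nat.card (Kg H g) := by
    refine Nat.card_congr (Subgroup.subgroupOfEquivOfLe ?_).toEquiv
    exact fun x hx => ((mem_Kg H).mp hx).1
  have e2 : Nat.card ((Kg H g⁻¹).subgroupOf H) = Nat.card (Kg H g⁻¹) := by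
    refine Nat.card_congr (Subgroup.subgroupOfEquivOfLe ?_).toEquiv
    exact fun x hx => ((mem_Kg H).mp hx).1
  have hpos : 0 < Nat.card (Kg H g) := Nat.card_pos
  refine Nat.eq_of_mul_eq_mul_left hpos ?_
  calc Nat.card (Kg H g) * ((Kg H g).subgroupOf H).index
      = Nat.card H := by rw [← e1]; exact h1
    _ = Nat.card (Kg H g) * ((Kg H g⁻¹).subgroupOf H).index := by
        rw [hcard, ← e2]; exact h2.symm


section L
variable {H}

lemma Kg_conj (g : G) (hg2 : g ^ 2 ∈ H) {x : G} (hx : x ∈ Kg H g) : g⁻¹ * x * g ∈ Kg H g := by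
  obtain ⟨h1, h2⟩ := (mem_Kg H).mp hx
  refine (mem_Kg H).mpr ⟨h2, ?_⟩
  have : (g ^ 2)⁻¹ * x * g ^ 2 ∈ H := by
    have := H.mul_mem (H.mul_mem (H.inv_mem hg2) h1) hg2
    simpa [mul_assoc] using this
  simpa [pow_two, mul_assoc] using this

/-- L = K ∪ gK -/
def Lsub (g : G) (hg2 : g ^ 2 ∈ H) : Subgroup G where
  carrier := {x | x ∈ Kg H g ∨ g⁻¹ * x ∈ Kg H g}
  one_mem' := Or.inl (Kg H g).one_mem
  mul_mem' := by
    rintro a b (ha | ha) (hb | hb)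
    · exact Or.inl ((Kg H g).mul_mem ha hb)
    · refine Or.inr ?_
      have : (g⁻¹ * a * g) * (g⁻¹ * b) ∈ Kg H g := (Kg H g).mul_mem (Kg_conj g hg2 ha) hb
      simpa [mul_assoc] using this
    · refine Or.inr ?_
      have : (g⁻¹ * a) * b ∈ Kg H g := (Kg H g).mul_mem ha hb
      simpa [mul_assoc] using this
    · refine Or.inl ?_
      -- a*b = g²·(g⁻¹(g⁻¹a)g)·(g⁻¹b)
      have h2 : g ^ 2 ∈ Kg H g := by
        refine (mem_Kg H).mpr ⟨hg2, ?_⟩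
        have : g⁻¹ * g ^ 2 * g = g ^ 2 := by group
        rw [this]; exact hg2
      have : (g ^ 2) * ((g⁻¹ * (g⁻¹ * a) * g) * (g⁻¹ * b)) ∈ Kg H g :=
        (Kg H g).mul_mem h2 ((Kg H g).mul_mem (Kg_conj g hg2 ha) hb)
      have he : (g ^ 2) * ((g⁻¹ * (g⁻¹ * a) * g) * (g⁻¹ * b)) = a * b := by group
      rwa [he] at this
  inv_mem' := by
    rintro a (ha | ha)
    · exact Or.inl ((Kg H g).inv_mem ha)
    · refine Or.inr ?_
      have h2 : (g ^ 2)⁻¹ ∈ Kg H g := by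
        refine (Kg H g).inv_mem ((mem_Kg H).mpr ⟨hg2, ?_⟩)
        have : g⁻¹ * g ^ 2 * g = g ^ 2 := by group
        rw [this]; exact hg2
      have : (g⁻¹ * (g⁻¹ * a)⁻¹ * g) * (g ^ 2)⁻¹ ∈ Kg H g :=
        (Kg H g).mul_mem (Kg_conj g hg2 ((Kg H g).inv_mem ha)) h2
      have he : (g⁻¹ * (g⁻¹ * a)⁻¹ * g) * (g ^ 2)⁻¹ = g⁻¹ * a⁻¹ := by group
      rwa [he] at this

lemma mem_Lsub' {g : G} {hg2 : g ^ 2 ∈ H} {x : G} :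
    x ∈ Lsub g hg2 ↔ x ∈ Kg H g ∨ g⁻¹ * x ∈ Kg H g := Iff.rfl

lemma card_Lsub [Finite G] (g : G) (hg2 : g ^ 2 ∈ H) (hg : g ∉ H) : Nat.card (Lsub g hg2) = 2 * Nat.card (Kg H g) := by
  have hdisj : Disjoint ((Kg H g) : Set G) ((g * ·) '' ((Kg H g) : Set G)) := by
    rw [Set.disjoint_left]
    rintro x hx ⟨y, hy, rfl⟩
    -- g*y ∈ K and y ∈ K ⟹ g ∈ K ⟹ g ∈ H, contradiction
    have : (g * y) * y⁻¹ ∈ Kg H g := (Kg H g).mul_mem hx ((Kg H g).inv_mem hy)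
    simp only [mul_inv_cancel_right] at this
    exact hg ((mem_Kg H).mp this).1
  have hset : (Lsub g hg2 : Set G) = ((Kg H g) : Set G) ∪ ((g * ·) '' ((Kg H g) : Set G)) := by
    ext x
    simp only [Set.mem_union, Set.mem_image, SetLike.mem_coe]
    constructor
    · rintro (hx | hx)
      · exact Or.inl hx
      · exact Or.inr ⟨g⁻¹ * x, hx, by group⟩
    · rintro (hx | ⟨y, hy, rfl⟩)
      · exact Or.inl hx
      · exact Or.inr (by simpa using hy)
  have : Nat.card (Lsub g hg2) = ((Lsub g hg2 : Set G)).ncard := (Nat.card_coe_set_eq _)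
  rw [this, hset, Set.ncard_union_eq hdisj (Set.toFinite _) (Set.toFinite _),
    Set.ncard_image_of_injective _ (mul_right_injective g)]
  have : ((Kg H g) : Set G).ncard = Nat.card (Kg H g) := (Nat.card_coe_set_eq _).symm
  rw [this]; ring


lemma Kg_le (g : G) : Kg H g ≤ H := fun _ hx => ((mem_Kg H).mp hx).1

/-- Lemma B -/
lemma exists_involution [Finite G]
    (cond : ∀ x ∈ Subgroup.normalizer (H : Set G), x ^ 2 ∈ H → ∃ h ∈ H, (x * h) ^ 2 = 1)
    (hyp : IsPGroup 2 H ∨ Odd (Nat.card H) ∨ Odd H.index)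
    {g : G} (hg : g ∉ H) (hg2 : g ^ 2 ∈ H)
    (hodd : Odd (((Kg H g).subgroupOf H).index)) :
    ∃ τ : G, τ ^ 2 = 1 ∧ ∃ h₁ ∈ H, ∃ h₂ ∈ H, τ = h₁ * g * h₂ := by
  haveI : Fact (Nat.Prime 2) := ⟨Nat.prime_two⟩
  rcases hyp with hyp | hyp | hyp
  · -- 2-group case
    obtain ⟨n, hn⟩ := (IsPGroup.iff_card).mp hyp
    have hdvd : (((Kg H g).subgroupOf H).index) ∣ 2 ^ n := by
      rw [← hn]; exact Subgroup.index_dvd_card _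
    obtain ⟨k, hk, hek⟩ := (Nat.dvd_prime_pow Nat.prime_two).mp hdvd
    have hk0 : k = 0 := by
      by_contra hk0
      have : 2 ∣ ((Kg H g).subgroupOf H).index := by
        rw [hek]; exact dvd_pow_self 2 hk0
      exact (Nat.not_even_iff_odd.mpr hodd) (even_iff_two_dvd.mpr this)
    have hidx : ((Kg H g).subgroupOf H).index = 1 := by rw [hek, hk0, pow_zero]
    have htop : (Kg H g).subgroupOf H = ⊤ := Subgroup.index_eq_one.mp hidx
    have hKH : ∀ h ∈ H, g⁻¹ * h * g ∈ H := by
      intro h hh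
      have : (⟨h, hh⟩ : H) ∈ (Kg H g).subgroupOf H := htop ▸ Subgroup.mem_top _
      exact ((mem_Kg H).mp (Subgroup.mem_subgroupOf.mp this)).2
    have hnorm : g ∈ Subgroup.normalizer (H : Set G) := by
      rw [Subgroup.mem_normalizer_iff]
      intro h
      constructor
      · intro hh
        have h1 : g⁻¹ * h * g ∈ H := hKH h hh
        have : (g ^ 2) * (g⁻¹ * h * g) * (g ^ 2)⁻¹ ∈ H :=
          H.mul_mem (H.mul_mem hg2 h1) (H.inv_mem hg2)
        have he : (g ^ 2) * (g⁻¹ * h * g) * (g ^ 2)⁻¹ = g * h * g⁻¹ := by group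
        rwa [he] at this
      · intro hh
        have := hKH _ hh
        have he : g⁻¹ * (g * h * g⁻¹) * g = h := by group
        rwa [he] at this
    obtain ⟨h, hh, hsq⟩ := cond g hnorm hg2
    exact ⟨g * h, hsq, 1, H.one_mem, h, hh, by group⟩
  · -- |H| odd
    have hKodd : Odd (Nat.card (Kg H g)) :=
      hyp.of_dvd_nat (Subgroup.card_dvd_of_le (Kg_le g))
    haveI : Fintype (Lsub g hg2) := Fintype.ofFinite _
    have hdvd : 2 ∣ Fintype.card (Lsub g hg2) := by
      rw [← Nat.card_eq_fintype_card, card_Lsub g hg2 hg]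
      exact Dvd.intro _ rfl
    obtain ⟨x, hx⟩ := exists_prime_orderOf_dvd_card 2 hdvd
    have hx2 : x ^ 2 = 1 := by rw [← hx]; exact pow_orderOf_eq_one x
    have hx1 : x ≠ 1 := by
      intro h; rw [h, orderOf_one] at hx; norm_num at hx
    have hτ2 : (x : G) ^ 2 = 1 := by
      have : ((x ^ 2 : Lsub g hg2) : G) = 1 := by rw [hx2]; rfl
      simpa using this
    have hτ1 : (x : G) ≠ 1 := fun h => hx1 (Subtype.ext h)
    rcases mem_Lsub'.mp x.2 with hmem | hmem
    · exfalso
      have hy2 : (⟨(x : G), hmem⟩ : Kg H g) ^ 2 = 1 := Subtype.ext (by simpa using hτ2)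
      have hy1 : (⟨(x : G), hmem⟩ : Kg H g) ≠ 1 := fun h => hτ1 (congrArg Subtype.val h)
      have := orderOf_eq_prime hy2 hy1
      have h2dvd : 2 ∣ Nat.card (Kg H g) := this ▸ orderOf_dvd_natCard _
      exact (Nat.not_even_iff_odd.mpr hKodd) (even_iff_two_dvd.mpr h2dvd)
    · refine ⟨(x : G), hτ2, 1, H.one_mem, g⁻¹ * (x : G), ((mem_Kg H).mp hmem).1, by group⟩
  · -- index odd: contradiction
    exfalso
    have hrel : (Kg H g).relIndex H * H.index = (Kg H g).index :=
      Subgroup.relIndex_mul_index (Kg_le g)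
    have hKidx : Odd ((Kg H g).index) := by
      rw [← hrel]; exact hodd.mul hyp
    have hLd : Nat.card (Lsub g hg2) ∣ Nat.card G := Subgroup.card_subgroup_dvd_card _
    rw [card_Lsub g hg2 hg, ← Subgroup.card_mul_index (Kg H g)] at hLd
    have hpos : 0 < Nat.card (Kg H g) := Nat.card_pos
    have h2 : 2 ∣ (Kg H g).index := by
      rcases hLd with ⟨c, hc⟩
      refine ⟨c, ?_⟩
      have := hc
      rw [mul_comm 2 (Nat.card (Kg H g)), mul_assoc] at this
      exact Nat.eq_of_mul_eq_mul_left hpos this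
    exact (Nat.not_even_iff_odd.mpr hKidx) (even_iff_two_dvd.mpr h2)


end L

section AL
variable {H}

lemma assemble (g : G)
    (u v : Finset (G ⧸ H)) (p : (G ⧸ H) → (G ⧸ H)) (τ : G)
    (hu : ∀ C ∈ u, C ∈ orbit H (QuotientGroup.mk g : G ⧸ H) ∧
      p C ∈ orbit H (QuotientGroup.mk g⁻¹ : G ⧸ H))
    (hpu : ∀ C ∈ u, p C ∈ v ∧ p (p C) = C)
    (hpv : ∀ C ∈ v, p C ∈ u ∧ p (p C) = C)
    (hd : Disjoint u v)
    (hτ2 : τ * τ = 1)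
    (hτu : (QuotientGroup.mk τ : G ⧸ H) ∉ u)
    (hpτ : p (QuotientGroup.mk τ : G ⧸ H) ∉ u)
    (hcov : ∀ C : G ⧸ H, C ∈ orbit H (QuotientGroup.mk g : G ⧸ H) ∪
        orbit H (QuotientGroup.mk g⁻¹ : G ⧸ H) →
        C ∈ u ∨ C ∈ v ∨ C = (QuotientGroup.mk τ : G ⧸ H)) :
    ∃ fB : (G ⧸ H) → G, ∀ C : G ⧸ H,
      C ∈ orbit H (QuotientGroup.mk g : G ⧸ H) ∪ orbit H (QuotientGroup.mk g⁻¹ : G ⧸ H) →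
      (QuotientGroup.mk (fB C) : G ⧸ H) = C ∧
        (fB C)⁻¹ = fB (QuotientGroup.mk (fB C)⁻¹ : G ⧸ H) := by
  classical
  set tf : (G ⧸ H) → G := fun C =>
    if h : C ∈ u then Classical.choose (exists_pair_rep H (hu C h).1 (hu C h).2) else 1 with htf
  have htf1 : ∀ C (h : C ∈ u), (QuotientGroup.mk (tf C) : G ⧸ H) = C := by
    intro C h
    have := Classical.choose_spec (exists_pair_rep H (hu C h).1 (hu C h).2)
    rw [htf]; simp only [dif_pos h]; exact this.1
  have htf2 : ∀ C (h : C ∈ u), (QuotientGroup.mk (tf C)⁻¹ : G ⧸ H) = p C := by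
    intro C h
    have := Classical.choose_spec (exists_pair_rep H (hu C h).1 (hu C h).2)
    rw [htf]; simp only [dif_pos h]; exact this.2
  refine ⟨fun C => if C ∈ u then tf C else if p C ∈ u then (tf (p C))⁻¹ else τ, ?_⟩
  intro C hC
  rcases hcov C hC with hCu | hCv | hCτ
  · have hpCv : p C ∈ v := (hpu C hCu).1
    have hpCu : p C ∉ u := fun hmem => (Finset.disjoint_left.mp hd) hmem hpCv
    have hppC : p (p C) = C := (hpu C hCu).2
    simp only [if_pos hCu]
    refine ⟨htf1 C hCu, ?_⟩
    rw [htf2 C hCu]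
    rw [if_neg hpCu, if_pos (by rw [hppC]; exact hCu), hppC]
  · have hCu : C ∉ u := fun hmem => (Finset.disjoint_left.mp hd) hmem hCv
    have hpCu : p C ∈ u := (hpv C hCv).1
    have hppC : p (p C) = C := (hpv C hCv).2
    simp only [if_neg hCu, if_pos hpCu]
    constructor
    · rw [htf2 (p C) hpCu, hppC]
    · rw [inv_inv, htf1 (p C) hpCu, if_pos hpCu]
  · subst hCτ
    have hτinv : τ⁻¹ = τ := inv_eq_of_mul_eq_one_right hτ2
    simp only [if_neg hτu, if_neg hpτ, hτinv]
    exact ⟨trivial, trivial⟩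

end AL

/-- The per-block function. -/
lemma exists_block_fun [Finite G]
    (cond : ∀ x ∈ Subgroup.normalizer (H : Set G), x ^ 2 ∈ H → ∃ h ∈ H, (x * h) ^ 2 = 1)
    (hyp : IsPGroup 2 H ∨ Odd (Nat.card H) ∨ Odd H.index)
    (g : G) :
    ∃ fB : (G ⧸ H) → G,
      (∀ C : G ⧸ H, (∃ b, (QuotientGroup.mk b : G ⧸ H) = C ∧ dcr H g b) →
        (QuotientGroup.mk (fB C) : G ⧸ H) = C ∧
          (fB C)⁻¹ = fB (QuotientGroup.mk (fB C)⁻¹ : G ⧸ H)) ∧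
      (g ∈ H → fB (QuotientGroup.mk (1 : G) : G ⧸ H) = 1) := by
  classical
  haveI : Fintype (G ⧸ H) := Fintype.ofFinite _
  by_cases hgH : g ∈ H
  · refine ⟨fun _ => 1, ?_, fun _ => rfl⟩
    rintro C ⟨b, rfl, hb⟩
    have hbH : b ∈ H := by
      rcases hb with ⟨h₁, m1, h₂, m2, rfl⟩ | ⟨h₁, m1, h₂, m2, rfl⟩
      · exact H.mul_mem (H.mul_mem m1 hgH) m2
      · exact H.mul_mem (H.mul_mem m1 (H.inv_mem hgH)) m2
    constructor
    · exact QuotientGroup.eq.mpr (by simpa using hbH)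
    · simp
  · -- key facts about membership of 1
    have h1g : ∀ (a : G), a ∉ H → (QuotientGroup.mk (1:G) : G ⧸ H) ∉ orbit H (QuotientGroup.mk a : G ⧸ H) := by
      intro a ha hmem
      obtain ⟨h₁, m1, h₂, m2, he⟩ := (mem_orbit_iff' H).mp hmem
      apply ha
      have : h₁⁻¹ * (1:G) * h₂⁻¹ ∈ H := H.mul_mem (H.mul_mem (H.inv_mem m1) H.one_mem) (H.inv_mem m2)
      have he2 : h₁⁻¹ * (1:G) * h₂⁻¹ = a := by rw [he]; group
      rwa [he2] at this
    by_cases hself : (QuotientGroup.mk g⁻¹ : G ⧸ H) ∈ orbit H (QuotientGroup.mk g : G ⧸ H)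
    · -- self-paired double coset
      obtain ⟨h₁, m1, h₂, m2, hginv⟩ := (mem_orbit_iff' H).mp hself
      set x := g * h₁ with hxdef
      have hxg : (QuotientGroup.mk x : G ⧸ H) = QuotientGroup.mk g :=
        QuotientGroup.eq.mpr (by simpa [hxdef, mul_assoc] using H.inv_mem m1)
      have hx2 : x ^ 2 ∈ H := by
        have h1 : h₁ * g = g⁻¹ * h₂⁻¹ := by rw [hginv]; group
        have : x ^ 2 = g * (h₁ * g) * h₁ := by rw [hxdef, pow_two]; simp [mul_assoc]
        rw [this, h1]
        have he : g * (g⁻¹ * h₂⁻¹) * h₁ = h₂⁻¹ * h₁ := by group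
        rw [he]; exact H.mul_mem (H.inv_mem m2) m1
      have hxnotH : x ∉ H := by
        intro hmem
        apply hgH
        have : x * h₁⁻¹ ∈ H := H.mul_mem hmem (H.inv_mem m1)
        simpa [hxdef, mul_assoc] using this
      have hOeq : orbit H (QuotientGroup.mk g⁻¹ : G ⧸ H) = orbit H (QuotientGroup.mk g : G ⧸ H) :=
        orbit_eq_iff.mpr hself
      have hOx : orbit H (QuotientGroup.mk x : G ⧸ H) = orbit H (QuotientGroup.mk g : G ⧸ H) := by
        rw [hxg]
      set O := orbit H (QuotientGroup.mk g : G ⧸ H) with hO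
      set A : Finset (G ⧸ H) := (Set.toFinite O).toFinset with hA
      have hmemA : ∀ C, C ∈ A ↔ C ∈ O := fun C => Set.Finite.mem_toFinset _
      have hcardA : A.card = Nat.card O := by
        rw [hA, Set.Finite.card_toFinset, Nat.card_eq_fintype_card]
      have h1A : (QuotientGroup.mk (1:G) : G ⧸ H) ∉ A := by
        rw [hmemA]; exact h1g g hgH
      by_cases hpar : Even A.card
      · obtain ⟨u, v, huv, hd, hc⟩ := helper_split A hpar
        obtain ⟨p, hp1, hp2, hp3⟩ := helper2 u v hd hc
        have husub : ∀ C ∈ u, C ∈ A := fun C hC => huv ▸ Finset.mem_union_left v hC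
        have hvsub : ∀ C ∈ v, C ∈ A := fun C hC => huv ▸ Finset.mem_union_right u hC
        have h1u : (QuotientGroup.mk (1:G) : G ⧸ H) ∉ u := fun h => h1A (husub _ h)
        have h1v : (QuotientGroup.mk (1:G) : G ⧸ H) ∉ v := fun h => h1A (hvsub _ h)
        obtain ⟨fB, hfB⟩ := assemble g u v p 1
          (fun C hC => ⟨(hmemA C).mp (husub C hC), by
            rw [hOeq]; exact (hmemA _).mp (hvsub _ (hp1 C hC).1)⟩)
          hp1 hp2 hd (one_mul 1) h1u (by rw [hp3 _ h1u h1v]; exact h1u)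
          (fun C hC => by
            have hCA : C ∈ A := by
              rw [hmemA]; rcases hC with hC | hC
              · exact hC
              · rwa [hOeq] at hC
            rw [← huv] at hCA
            rcases Finset.mem_union.mp hCA with h | h
            · exact Or.inl h
            · exact Or.inr (Or.inl h))
        refine ⟨fB, fun C hC => hfB C ((?_ : _ ↔ _).mp hC), fun h => absurd h hgH⟩
        constructor
        · rintro ⟨b, rfl, hb | hb⟩
          · exact Or.inl ((mem_orbit_iff' H).mpr hb)
          · exact Or.inr ((mem_orbit_iff' H).mpr hb)
        · intro h
          exact ⟨C.out, mk_out H C, by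
            rcases h with h | h
            · exact Or.inl ((mem_orbit_iff' H).mp (by rwa [mk_out H C]))
            · exact Or.inr ((mem_orbit_iff' H).mp (by rwa [mk_out H C]))⟩
      · -- odd case: use the involution
        have hoddA : Odd A.card := Nat.not_even_iff_odd.mp hpar
        have hodd : Odd (((Kg H x).subgroupOf H).index) := by
          rw [← card_orbit_eq_index H x]
          have : orbit H (QuotientGroup.mk x : G ⧸ H) = O := hOx
          rw [this, ← hcardA]; exact hoddA
        obtain ⟨τ, hτ2, hτrep⟩ := exists_involution cond hyp hxnotH hx2 hodd
        have hτO : (QuotientGroup.mk τ : G ⧸ H) ∈ O := by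
          rw [← hOx]; exact (mem_orbit_iff' H).mpr hτrep
        have hτA : (QuotientGroup.mk τ : G ⧸ H) ∈ A := (hmemA _).mpr hτO
        set s : Finset (G ⧸ H) := A.erase (QuotientGroup.mk τ : G ⧸ H) with hs
        have hseven : Even s.card := by
          rw [hs, Finset.card_erase_of_mem hτA]
          obtain ⟨k, hk⟩ := hoddA
          exact ⟨k, by omega⟩
        obtain ⟨u, v, huv, hd, hc⟩ := helper_split s hseven
        obtain ⟨p, hp1, hp2, hp3⟩ := helper2 u v hd hc
        have husub : ∀ C ∈ u, C ∈ s := fun C hC => huv ▸ Finset.mem_union_left v hC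
        have hvsub : ∀ C ∈ v, C ∈ s := fun C hC => huv ▸ Finset.mem_union_right u hC
        have husubA : ∀ C ∈ u, C ∈ A := fun C hC => Finset.mem_of_mem_erase (husub C hC)
        have hvsubA : ∀ C ∈ v, C ∈ A := fun C hC => Finset.mem_of_mem_erase (hvsub C hC)
        have hτu : (QuotientGroup.mk τ : G ⧸ H) ∉ u :=
          fun h => (Finset.ne_of_mem_erase (husub _ h)) rfl
        have hτv : (QuotientGroup.mk τ : G ⧸ H) ∉ v :=
          fun h => (Finset.ne_of_mem_erase (hvsub _ h)) rfl
        have hττ : τ * τ = 1 := by rw [← pow_two]; exact hτ2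
        obtain ⟨fB, hfB⟩ := assemble g u v p τ
          (fun C hC => ⟨(hmemA C).mp (husubA C hC), by
            rw [hOeq]; exact (hmemA _).mp (hvsubA _ (hp1 C hC).1)⟩)
          hp1 hp2 hd hττ hτu (by rw [hp3 _ hτu hτv]; exact hτu)
          (fun C hC => by
            have hCA : C ∈ A := by
              rw [hmemA]; rcases hC with hC | hC
              · exact hC
              · rwa [hOeq] at hC
            by_cases hCτ : C = (QuotientGroup.mk τ : G ⧸ H)
            · exact Or.inr (Or.inr hCτ)
            · have hCs : C ∈ s := Finset.mem_erase.mpr ⟨hCτ, hCA⟩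
              rw [← huv] at hCs
              rcases Finset.mem_union.mp hCs with h | h
              · exact Or.inl h
              · exact Or.inr (Or.inl h))
        refine ⟨fB, fun C hC => hfB C ?_, fun h => absurd h hgH⟩
        rcases hC with ⟨b, rfl, hb | hb⟩
        · exact Or.inl ((mem_orbit_iff' H).mpr hb)
        · exact Or.inr ((mem_orbit_iff' H).mpr hb)
    · -- distinct paired double cosets
      have hdisj : ∀ C, C ∈ orbit H (QuotientGroup.mk g : G ⧸ H) →
          C ∈ orbit H (QuotientGroup.mk g⁻¹ : G ⧸ H) → False := by
        intro C hC hC'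
        apply hself
        have h1 : orbit H C = orbit H (QuotientGroup.mk g : G ⧸ H) := orbit_eq_iff.mpr hC
        have h2 : orbit H C = orbit H (QuotientGroup.mk g⁻¹ : G ⧸ H) := orbit_eq_iff.mpr hC'
        rw [← h1, h2]
        exact mem_orbit_self _
      set O := orbit H (QuotientGroup.mk g : G ⧸ H) with hO
      set O' := orbit H (QuotientGroup.mk g⁻¹ : G ⧸ H) with hO'
      set A : Finset (G ⧸ H) := (Set.toFinite O).toFinset with hA
      set B : Finset (G ⧸ H) := (Set.toFinite O').toFinset with hB
      have hmemA : ∀ C, C ∈ A ↔ C ∈ O := fun C => Set.Finite.mem_toFinset _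
      have hmemB : ∀ C, C ∈ B ↔ C ∈ O' := fun C => Set.Finite.mem_toFinset _
      have hd : Disjoint A B := by
        rw [Finset.disjoint_left]
        intro C hC hC'
        exact hdisj C ((hmemA C).mp hC) ((hmemB C).mp hC')
      have hc : A.card = B.card := by
        rw [hA, hB, Set.Finite.card_toFinset, Set.Finite.card_toFinset,
          ← Nat.card_eq_fintype_card, ← Nat.card_eq_fintype_card]
        exact card_orbit_inv H g
      obtain ⟨p, hp1, hp2, hp3⟩ := helper2 A B hd hc
      have h1A : (QuotientGroup.mk (1:G) : G ⧸ H) ∉ A := by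
        rw [hmemA]; exact h1g g hgH
      have h1B : (QuotientGroup.mk (1:G) : G ⧸ H) ∉ B := by
        rw [hmemB]; exact h1g g⁻¹ (fun h => hgH (by simpa using H.inv_mem h))
      obtain ⟨fB, hfB⟩ := assemble g A B p 1
        (fun C hC => ⟨(hmemA C).mp hC, (hmemB _).mp (hp1 C hC).1⟩)
        hp1 hp2 hd (one_mul 1) h1A (by rw [hp3 _ h1A h1B]; exact h1A)
        (fun C hC => by
          rcases hC with hC | hC
          · exact Or.inl ((hmemA C).mpr hC)
          · exact Or.inr (Or.inl ((hmemB C).mpr hC)))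
      refine ⟨fB, fun C hC => hfB C ?_, fun h => absurd h hgH⟩
      rcases hC with ⟨b, rfl, hb | hb⟩
      · exact Or.inl ((mem_orbit_iff' H).mpr hb)
      · exact Or.inr ((mem_orbit_iff' H).mpr hb)


def dcrSetoid : Setoid G := ⟨dcr H, ⟨dcr_refl H, fun h => dcr_symm H h, fun h h' => dcr_trans H h h'⟩⟩

noncomputable def blockRep : (G ⧸ H) → G :=
  fun C => (Quotient.mk (dcrSetoid H) (Quotient.out C)).out

lemma blockRep_dcr (C : G ⧸ H) : dcr H (blockRep H C) (Quotient.out C) :=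
  Quotient.mk_out (s := dcrSetoid H) (Quotient.out C)

lemma blockRep_eq {C C' : G ⧸ H} (h : dcr H (Quotient.out C) (Quotient.out C')) :
    blockRep H C = blockRep H C' :=
  congrArg Quotient.out (Quotient.sound (s := dcrSetoid H) h)

/-- relate dcr across a coset: if `mk b = C` then `dcr H (out C) b` -/
lemma dcr_out_of_mk {b : G} {C : G ⧸ H} (h : (QuotientGroup.mk b : G ⧸ H) = C) :
    dcr H (Quotient.out C) b := by
  have : (Quotient.out C)⁻¹ * b ∈ H := QuotientGroup.eq.mp ((mk_out H C).trans h.symm)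
  have he : b = (Quotient.out C) * ((Quotient.out C)⁻¹ * b) := by group
  rw [he]
  exact dcr_mul_right H (dcr_refl H _) this

variable {H}

theorem backward [Finite G]
    (hyp : IsPGroup 2 H ∨ Odd (Nat.card H) ∨ Odd H.index)
    (cond : ∀ x ∈ Subgroup.normalizer (H : Set G), x ^ 2 ∈ H → ∃ h ∈ H, (x * h) ^ 2 = 1) :
    IsPerfectCode H := by
  classical
  set F : (G ⧸ H) → G := fun C =>
    Classical.choose (exists_block_fun H cond hyp (blockRep H C)) C with hF
  -- P1
  have hP1 : ∀ C : G ⧸ H, (QuotientGroup.mk (F C) : G ⧸ H) = C := by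
    intro C
    have hspec := (Classical.choose_spec (exists_block_fun H cond hyp (blockRep H C))).1 C
      ⟨Quotient.out C, mk_out H C, blockRep_dcr H C⟩
    exact hspec.1
  -- P3
  have hP3 : ∀ C : G ⧸ H, (F C)⁻¹ = F (QuotientGroup.mk (F C)⁻¹ : G ⧸ H) := by
    intro C
    set C' : G ⧸ H := (QuotientGroup.mk (F C)⁻¹ : G ⧸ H) with hC'
    have hbr : blockRep H C' = blockRep H C := by
      refine blockRep_eq H ?_
      -- dcr (out C') (out C)
      have d1 : dcr H (Quotient.out C') ((F C)⁻¹) := dcr_out_of_mk H hC'.symm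
      have d2 : dcr H ((F C)⁻¹) (F C) := dcr_symm H (dcr_inv H _)
      have d3 : dcr H (F C) (Quotient.out C) := dcr_symm H (dcr_out_of_mk H (hP1 C))
      exact dcr_trans H (dcr_trans H d1 d2) d3
    have hspec := (Classical.choose_spec (exists_block_fun H cond hyp (blockRep H C))).1 C
      ⟨Quotient.out C, mk_out H C, blockRep_dcr H C⟩
    have hkey : F C' = Classical.choose (exists_block_fun H cond hyp (blockRep H C)) C' := by
      rw [← hbr]
    rw [hC'] at hkey ⊢
    rw [hkey]
    exact hspec.2
  -- P2
  have hP2 : F (QuotientGroup.mk (1 : G) : G ⧸ H) = 1 := by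
    set C := (QuotientGroup.mk (1 : G) : G ⧸ H) with hC
    have houtH : Quotient.out C ∈ H := by
      have h0 : (QuotientGroup.mk (Quotient.out C) : G ⧸ H) = QuotientGroup.mk (1 : G) :=
        mk_out H C
      simpa using H.inv_mem (QuotientGroup.eq.mp h0)
    have hbrH : blockRep H C ∈ H := dcr_mem_of_mem H (blockRep_dcr H C) houtH
    have hspec := (Classical.choose_spec (exists_block_fun H cond hyp (blockRep H C))).2 hbrH
    exact hspec
  refine ⟨Set.range F, ⟨_, hP2⟩, ?_, ?_⟩
  · ext y
    simp only [Set.mem_inv, Set.mem_range]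
    constructor
    · rintro ⟨C, hC⟩
      refine ⟨(QuotientGroup.mk (F C)⁻¹ : G ⧸ H), ?_⟩
      rw [← hP3 C, hC]; group
    · rintro ⟨C, rfl⟩
      exact ⟨(QuotientGroup.mk (F C)⁻¹ : G ⧸ H), by rw [← hP3 C]⟩
  · intro g
    refine ⟨F (QuotientGroup.mk g : G ⧸ H), ⟨⟨_, rfl⟩, ?_⟩, ?_⟩
    · exact QuotientGroup.eq.mp (hP1 (QuotientGroup.mk g : G ⧸ H)).symm
    · rintro t ⟨⟨C, rfl⟩, ht⟩
      have : (QuotientGroup.mk g : G ⧸ H) = QuotientGroup.mk (F C) := QuotientGroup.eq.mpr ht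
      rw [this, hP1 C]

theorem forward
    (hpc : IsPerfectCode H) :
    ∀ x ∈ Subgroup.normalizer (H : Set G), x ^ 2 ∈ H → ∃ h ∈ H, (x * h) ^ 2 = 1 := by
  obtain ⟨T, h1T, hTinv, hT⟩ := hpc
  intro x hx hx2
  obtain ⟨t, ⟨htT, htH⟩, huniq⟩ := hT x
  have htinvT : t⁻¹ ∈ T := by rw [← hTinv]; simpa using htT
  have htinvH : x⁻¹ * t⁻¹ ∈ H := by
    have hc : x⁻¹ * (x⁻¹ * t)⁻¹ * x ∈ H := by
      rw [Subgroup.mem_normalizer_iff] at hx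
      refine (hx _).mpr ?_
      have he : x * (x⁻¹ * (x⁻¹ * t)⁻¹ * x) * x⁻¹ = (x⁻¹ * t)⁻¹ := by group
      rw [he]
      exact H.inv_mem htH
    have hm : (x⁻¹ * (x⁻¹ * t)⁻¹ * x) * (x ^ 2)⁻¹ ∈ H := H.mul_mem hc (H.inv_mem hx2)
    have he2 : (x⁻¹ * (x⁻¹ * t)⁻¹ * x) * (x ^ 2)⁻¹ = x⁻¹ * t⁻¹ := by group
    rwa [he2] at hm
  have hteq : t⁻¹ = t := huniq t⁻¹ ⟨htinvT, htinvH⟩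
  refine ⟨x⁻¹ * t, htH, ?_⟩
  have hxt : x * (x⁻¹ * t) = t := by group
  rw [hxt, pow_two]
  nth_rewrite 1 [← hteq]
  group


end PCwork

theorem perfect_code_iff_normalizer_condition {G : Type*} [Group G] [Finite G]
    (H : Subgroup G)
    (hyp : IsPGroup 2 H ∨ Odd (Nat.card H) ∨ Odd H.index) :
    IsPerfectCode H ↔
      ∀ x ∈ Subgroup.normalizer (H : Set G), x ^ 2 ∈ H → ∃ h ∈ H, (x * h) ^ 2 = 1 :=
  ⟨PCwork.forward, fun cond => PCwork.backward hyp cond⟩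
end

section
/- Let G be a finite group and H a subgroup of G such that either H is a 2-group, or |H| is odd, or |G : H| is odd. Then H is a perfect code of G if and only if for every 2-element x ∈ N_G(H) with x² ∈ H there exists h ∈ H with (xh)² = 1. -/
namespace PerfectCodeAux

variable {G : Type*} [Group G]

/-! ### Double cosets -/

/-- The double coset `H g H` as a set. -/
def dc (H : Subgroup G) (g : G) : Set G := {x | ∃ h₁ ∈ H, ∃ h₂ ∈ H, x = h₁ * g * h₂}

variable {H : Subgroup G}

lemma self_mem_dc (g : G) : g ∈ dc H g := ⟨1, one_mem _, 1, one_mem _, by group⟩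

lemma dc_eq_of_mem {g x : G} (hx : x ∈ dc H g) : dc H x = dc H g := by
  obtain ⟨a, ha, b, hb, rfl⟩ := hx
  ext y
  constructor
  · rintro ⟨c, hc, d, hd, rfl⟩
    exact ⟨c * a, mul_mem hc ha, b * d, mul_mem hb hd, by group⟩
  · rintro ⟨c, hc, d, hd, rfl⟩
    exact ⟨c * a⁻¹, mul_mem hc (inv_mem ha), b⁻¹ * d, mul_mem (inv_mem hb) hd, by group⟩

lemma inv_mem_dc_inv {g x : G} (hx : x ∈ dc H g) : x⁻¹ ∈ dc H g⁻¹ := by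
  obtain ⟨a, ha, b, hb, rfl⟩ := hx
  exact ⟨b⁻¹, inv_mem hb, a⁻¹, inv_mem ha, by group⟩

lemma mem_dc_of_mk_eq {g x y : G} (hx : x ∈ dc H g)
    (h : (x : G ⧸ H) = (y : G ⧸ H)) : y ∈ dc H g := by
  obtain ⟨a, ha, b, hb, rfl⟩ := hx
  rw [QuotientGroup.eq] at h
  exact ⟨a, ha, b * ((a * g * b)⁻¹ * y), mul_mem hb h, by group⟩

/-- Key elementary fact: within a double coset, every left coset meets every right coset. -/
lemma pair_exists {g b c : G} (hb : b ∈ dc H g) (hc : c⁻¹ ∈ dc H g) :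
    ∃ t : G, (t : G ⧸ H) = (b : G ⧸ H) ∧ ((t⁻¹ : G) : G ⧸ H) = (c : G ⧸ H) := by
  obtain ⟨a₁, ha₁, a₂, ha₂, rfl⟩ := hb
  obtain ⟨a₃, ha₃, a₄, ha₄, hc⟩ := hc
  refine ⟨a₁ * g * a₄, ?_, ?_⟩
  · rw [QuotientGroup.eq]
    have h : (a₁ * g * a₄)⁻¹ * (a₁ * g * a₂) = a₄⁻¹ * a₂ := by group
    rw [h]; exact H.mul_mem (H.inv_mem ha₄) ha₂
  · rw [QuotientGroup.eq]
    have hceq : c = a₄⁻¹ * g⁻¹ * a₃⁻¹ := by rw [← inv_inv c, hc]; group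
    have h : ((a₁ * g * a₄)⁻¹)⁻¹ * (a₄⁻¹ * g⁻¹ * a₃⁻¹) = a₁ * a₃⁻¹ := by group
    rw [hceq, h]; exact H.mul_mem ha₁ (H.inv_mem ha₃)

/-! ### Counting left cosets in a double coset -/

/-- The conjugate subgroup `g H g⁻¹`. -/
def cj (H : Subgroup G) (g : G) : Subgroup G where
  carrier := {x | g⁻¹ * x * g ∈ H}
  mul_mem' := by
    intro a b ha hb
    have h : g⁻¹ * (a * b) * g = (g⁻¹ * a * g) * (g⁻¹ * b * g) := by group
    simpa [Set.mem_setOf_eq, h] using H.mul_mem ha hb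
  one_mem' := by simpa using H.one_mem
  inv_mem' := by
    intro a ha
    have h : g⁻¹ * a⁻¹ * g = (g⁻¹ * a * g)⁻¹ := by group
    simpa [Set.mem_setOf_eq, h] using H.inv_mem ha

lemma mem_cj {H : Subgroup G} {g x : G} : x ∈ cj H g ↔ g⁻¹ * x * g ∈ H := Iff.rfl

/-- `|H ∩ gHg⁻¹| = |H ∩ g⁻¹Hg|`. -/
lemma card_inf_cj_inv (g : G) :
    Nat.card (H ⊓ cj H g : Subgroup G) = Nat.card (H ⊓ cj H g⁻¹ : Subgroup G) := by
  apply Nat.card_congr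
  have m1 : ∀ x : G, x ∈ H ⊓ cj H g → g⁻¹ * x * g ∈ H ⊓ cj H g⁻¹ := by
    intro x hx
    rw [Subgroup.mem_inf] at hx ⊢
    refine ⟨hx.2, ?_⟩
    rw [mem_cj]
    have h : (g⁻¹)⁻¹ * (g⁻¹ * x * g) * g⁻¹ = x := by group
    rw [h]; exact hx.1
  have m2 : ∀ x : G, x ∈ H ⊓ cj H g⁻¹ → g * x * g⁻¹ ∈ H ⊓ cj H g := by
    intro x hx
    rw [Subgroup.mem_inf] at hx ⊢
    have hx2 : g * x * g⁻¹ ∈ H := by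
      have := hx.2; rw [mem_cj] at this
      have h : (g⁻¹)⁻¹ * x * g⁻¹ = g * x * g⁻¹ := by group
      rwa [h] at this
    refine ⟨hx2, ?_⟩
    rw [mem_cj]
    have h : g⁻¹ * (g * x * g⁻¹) * g = x := by group
    rw [h]; exact hx.1
  refine ⟨fun x => ⟨g⁻¹ * x * g, m1 x x.2⟩, fun x => ⟨g * x * g⁻¹, m2 x x.2⟩, ?_, ?_⟩
  · intro x; ext; show g * (g⁻¹ * x * g) * g⁻¹ = (x : G); group
  · intro x; ext; show g⁻¹ * (g * x * g⁻¹) * g = (x : G); group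

/-- The number of left cosets in the double coset `HgH` times `|H ∩ gHg⁻¹|` is `|H|`. -/
lemma card_cosets_dc [Finite G] (g : G) :
    Nat.card ((QuotientGroup.mk '' dc H g : Set (G ⧸ H))) *
      Nat.card (H ⊓ cj H g : Subgroup G) = Nat.card H := by
  set K : Subgroup G := H ⊓ cj H g with hK
  have hKle : K ≤ H := inf_le_left
  set K' : Subgroup H := K.subgroupOf H with hK'
  have resp : ∀ a b : H, (QuotientGroup.leftRel K') a b →
      (QuotientGroup.mk ((a : G) * g) : G ⧸ H) = QuotientGroup.mk ((b : G) * g) := by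
    intro a b hab
    rw [QuotientGroup.leftRel_apply] at hab
    rw [QuotientGroup.eq]
    have h2 : ((a⁻¹ * b : H) : G) ∈ cj H g := hab.2
    rw [mem_cj] at h2
    convert h2 using 1
    push_cast
    group
  let F : H ⧸ K' → G ⧸ H := fun q => Quotient.liftOn' q
    (fun a => (QuotientGroup.mk ((a : G) * g) : G ⧸ H)) resp
  have hmemdc : ∀ a : H, ((a : G) * g) ∈ dc H g :=
    fun a => ⟨a, a.2, 1, one_mem _, by group⟩
  have hFmem : ∀ q, F q ∈ (QuotientGroup.mk '' dc H g : Set (G ⧸ H)) := by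
    intro q
    induction q using Quotient.inductionOn'
    exact ⟨_, hmemdc _, rfl⟩
  have hinj : Function.Injective (fun q => (⟨F q, hFmem q⟩ :
      (QuotientGroup.mk '' dc H g : Set (G ⧸ H)))) := by
    intro q₁ q₂ h
    induction q₁ using Quotient.inductionOn' with
    | h a =>
    induction q₂ using Quotient.inductionOn' with
    | h b =>
    apply Quotient.sound'
    rw [QuotientGroup.leftRel_apply]
    have h' : (QuotientGroup.mk ((a : G) * g) : G ⧸ H) = QuotientGroup.mk ((b : G) * g) :=
      congrArg Subtype.val h
    rw [QuotientGroup.eq] at h'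
    rw [Subgroup.mem_subgroupOf, Subgroup.mem_inf]
    constructor
    · exact mul_mem (inv_mem a.2) b.2
    · rw [mem_cj]
      convert h' using 1
      push_cast
      group
  have hsurj : Function.Surjective (fun q => (⟨F q, hFmem q⟩ :
      (QuotientGroup.mk '' dc H g : Set (G ⧸ H)))) := by
    rintro ⟨q, x, ⟨a, ha, b, hb, rfl⟩, rfl⟩
    refine ⟨QuotientGroup.mk (⟨a, ha⟩ : H), ?_⟩
    apply Subtype.ext
    show (QuotientGroup.mk (a * g) : G ⧸ H) = _
    rw [QuotientGroup.eq]
    have h : (a * g)⁻¹ * (a * g * b) = b := by group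
    rw [h]; exact hb
  have e : Nat.card (H ⧸ K') = Nat.card ((QuotientGroup.mk '' dc H g : Set (G ⧸ H))) :=
    Nat.card_congr (Equiv.ofBijective _ ⟨hinj, hsurj⟩)
  have hcard : Nat.card H = Nat.card (H ⧸ K') * Nat.card K' :=
    Subgroup.card_eq_card_quotient_mul_card_subgroup K'
  have hcardK : Nat.card K' = Nat.card K :=
    Nat.card_congr (Subgroup.subgroupOfEquivOfLe hKle).toEquiv
  rw [← e, ← hcardK, hcard]

/-! ### Pairings on finite sets -/

lemma even_pairing {α : Type*} [DecidableEq α] : ∀ (s : Finset α), Even s.card →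
    ∃ σ : α → α, (∀ x ∉ s, σ x = x) ∧
      (∀ x ∈ s, σ x ∈ s ∧ σ (σ x) = x ∧ σ x ≠ x) := by
  intro s
  induction s using Finset.strongInduction with
  | _ s ih =>
  intro hs
  rcases s.eq_empty_or_nonempty with rfl | ⟨a, ha⟩
  · exact ⟨id, fun _ _ => rfl, by simp⟩
  have hc2 : 2 ≤ s.card := by
    have h1 : 1 ≤ s.card := Finset.card_pos.mpr ⟨a, ha⟩
    rcases hs with ⟨k, hk⟩; omega
  obtain ⟨b, hb⟩ : (s.erase a).Nonempty := by
    rw [← Finset.card_pos, Finset.card_erase_of_mem ha]; omega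
  have hba : b ≠ a := Finset.ne_of_mem_erase hb
  have hbs : b ∈ s := Finset.mem_of_mem_erase hb
  set s' : Finset α := (s.erase a).erase b with hs'
  have hsub : s' ⊂ s :=
    Finset.ssubset_of_subset_of_ssubset (Finset.erase_subset _ _) (Finset.erase_ssubset ha)
  have hcard : Even s'.card := by
    rw [hs', Finset.card_erase_of_mem hb, Finset.card_erase_of_mem ha]
    rcases hs with ⟨k, hk⟩
    exact ⟨k - 1, by omega⟩
  obtain ⟨σ', hσ'1, hσ'2⟩ := ih s' hsub hcard
  have has' : a ∉ s' := fun h => (Finset.notMem_erase a _) (Finset.mem_of_mem_erase h)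
  have hbs' : b ∉ s' := Finset.notMem_erase b _
  have hsub' : s' ⊆ s := hsub.subset
  classical
  set f : α → α := fun x => if x = a then b else if x = b then a else σ' x with hf
  have e1 : f a = b := by simp [hf]
  have e2 : f b = a := by simp [hf, hba]
  have e3 : ∀ x, x ≠ a → x ≠ b → f x = σ' x := by
    intro x h1 h2; simp [hf, h1, h2]
  refine ⟨f, ?_, ?_⟩
  · intro x hx
    have hxa : x ≠ a := fun h => hx (h ▸ ha)
    have hxb : x ≠ b := fun h => hx (h ▸ hbs)
    rw [e3 x hxa hxb]
    exact hσ'1 x (fun h => hx (hsub' h))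
  · intro x hx
    by_cases hxa : x = a
    · subst hxa
      rw [e1, e2]
      exact ⟨hbs, rfl, hba⟩
    by_cases hxb : x = b
    · subst hxb
      rw [e2, e1]
      exact ⟨ha, rfl, Ne.symm hba⟩
    have hxs' : x ∈ s' := Finset.mem_erase.mpr ⟨hxb, Finset.mem_erase.mpr ⟨hxa, hx⟩⟩
    obtain ⟨h1, h2, h3⟩ := hσ'2 x hxs'
    have h1a : σ' x ≠ a := fun h => has' (h ▸ h1)
    have h1b : σ' x ≠ b := fun h => hbs' (h ▸ h1)
    rw [e3 x hxa hxb, e3 _ h1a h1b, h2]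
    exact ⟨hsub' h1, rfl, h3⟩

lemma even_pairing_set {α : Type*} [Finite α] (A : Set α) (h : Even (Nat.card A)) :
    ∃ σ : α → α, (∀ x ∉ A, σ x = x) ∧
      (∀ x ∈ A, σ x ∈ A ∧ σ (σ x) = x ∧ σ x ≠ x) := by
  classical
  haveI := Fintype.ofFinite α
  have hc : Nat.card A = A.toFinset.card := by
    rw [Nat.card_coe_set_eq, Set.ncard_eq_toFinset_card']
  obtain ⟨σ, h1, h2⟩ := even_pairing A.toFinset (hc ▸ h)
  exact ⟨σ, fun x hx => h1 x (by simpa [Set.mem_toFinset] using hx),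
    fun x hx => by simpa [Set.mem_toFinset] using h2 x (Set.mem_toFinset.mpr hx)⟩

lemma odd_pairing_set {α : Type*} [Finite α] (A : Set α) (h : Odd (Nat.card A))
    {q₀ : α} (hq₀ : q₀ ∈ A) :
    ∃ σ : α → α, (∀ x ∉ A, σ x = x) ∧ (∀ x ∈ A, σ x ∈ A ∧ σ (σ x) = x) ∧
      σ q₀ = q₀ ∧ (∀ x ∈ A, σ x = x → x = q₀) := by
  have hcard : Nat.card (A \ {q₀} : Set α) = Nat.card A - 1 := by
    rw [Nat.card_coe_set_eq, Nat.card_coe_set_eq]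
    exact Set.ncard_diff_singleton_of_mem hq₀
  have heven : Even (Nat.card (A \ {q₀} : Set α)) := by
    rcases h with ⟨k, hk⟩
    rw [hcard, hk]
    exact ⟨k, by omega⟩
  obtain ⟨σ, h1, h2⟩ := even_pairing_set _ heven
  have hfix : σ q₀ = q₀ := h1 q₀ (fun hh => hh.2 rfl)
  refine ⟨σ, ?_, ?_, hfix, ?_⟩
  · intro x hx
    exact h1 x (fun hh => hx hh.1)
  · intro x hx
    by_cases hxq : x = q₀
    · subst hxq; exact ⟨by rw [hfix]; exact hq₀, by rw [hfix, hfix]⟩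
    · obtain ⟨ha, hb, _⟩ := h2 x ⟨hx, hxq⟩
      exact ⟨ha.1, hb⟩
  · intro x hx hfx
    by_contra hxq
    exact (h2 x ⟨hx, hxq⟩).2.2 hfx

end PerfectCodeAux

namespace PerfectCodeAux

variable {G : Type*} [Group G] [Finite G] {H : Subgroup G}

/-- The key lemma: under the hypothesis, if `t² ∈ H` and the double coset `HtH` consists of
an odd number of left cosets, then the coset `tH` contains an involution (or identity). -/
lemma key_lemma (hyp : IsPGroup 2 H ∨ Odd (Nat.card H) ∨ Odd H.index)
    (cond : ∀ x ∈ Subgroup.normalizer (H : Set G), (∃ n : ℕ, orderOf x = 2 ^ n) → x ^ 2 ∈ H →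
      ∃ h ∈ H, (x * h) ^ 2 = 1)
    (t : G) (ht : t * t ∈ H)
    (hodd : Odd (Nat.card ((QuotientGroup.mk '' dc H t : Set (G ⧸ H))))) :
    ∃ h ∈ H, (t * h) * (t * h) = 1 := by
  have hCL := card_cosets_dc (H := H) t
  set n : ℕ := Nat.card ((QuotientGroup.mk '' dc H t : Set (G ⧸ H))) with hn
  have hKpos : 0 < Nat.card (H ⊓ cj H t : Subgroup G) := Nat.card_pos
  rcases hyp with hpg | hoddH | hoddI
  · -- H is a 2-group
    haveI : Fact (Nat.Prime 2) := ⟨Nat.prime_two⟩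
    obtain ⟨k, hk⟩ := IsPGroup.iff_card.mp hpg
    have hdvd : n ∣ Nat.card H := ⟨_, hCL.symm⟩
    rw [hk] at hdvd
    obtain ⟨j, _, hj⟩ := (Nat.dvd_prime_pow Nat.prime_two).mp hdvd
    have hn1 : n = 1 := by
      rcases Nat.eq_zero_or_pos j with rfl | hjpos
      · simpa using hj
      · exfalso
        rw [hj, Nat.odd_iff] at hodd
        obtain ⟨m, hm⟩ := dvd_pow_self 2 hjpos.ne'
        omega
    -- |H ∩ tHt⁻¹| = |H| so H ≤ tHt⁻¹, hence (by cardinality) t normalises H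
    have hcards : Nat.card (H ⊓ cj H t : Subgroup G) = Nat.card H := by
      rw [← hCL, hn1, one_mul]
    have hle : H ≤ cj H t := by
      have h1 : Nat.card ((H ⊓ cj H t).subgroupOf H) = Nat.card H := by
        rw [Nat.card_congr (Subgroup.subgroupOfEquivOfLe
          (inf_le_left : H ⊓ cj H t ≤ H)).toEquiv, hcards]
      have h2 := Subgroup.eq_top_of_card_eq _ h1
      have h3 := Subgroup.subgroupOf_eq_top.mp h2
      exact le_trans h3 inf_le_right
    have hcardcj : Nat.card (cj H t : Subgroup G) = Nat.card H := by
      apply Nat.card_congr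
      refine ⟨fun x => ⟨t⁻¹ * x * t, x.2⟩,
        fun y => ⟨t * y * t⁻¹, by rw [mem_cj]; have h : t⁻¹ * (t * y * t⁻¹) * t = y := by group
                                  rw [h]; exact y.2⟩, ?_, ?_⟩
      · intro x; ext; show t * (t⁻¹ * x * t) * t⁻¹ = (x : G); group
      · intro y; ext; show t⁻¹ * (t * y * t⁻¹) * t = (y : G); group
    have heq : H = cj H t := by
      have h1 : Nat.card (H.subgroupOf (cj H t)) = Nat.card (cj H t : Subgroup G) := by
        rw [Nat.card_congr (Subgroup.subgroupOfEquivOfLe hle).toEquiv, hcardcj]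
      have h2 := Subgroup.eq_top_of_card_eq _ h1
      have h3 := Subgroup.subgroupOf_eq_top.mp h2
      exact le_antisymm hle h3
    have hnorm : t ∈ Subgroup.normalizer (H : Set G) := by
      have hinv : t⁻¹ ∈ Subgroup.normalizer (H : Set G) := by
        rw [Subgroup.mem_normalizer_iff]
        intro h
        constructor
        · intro hh
          have : h ∈ cj H t := heq ▸ hh
          rw [mem_cj] at this
          have he : t⁻¹ * h * t = t⁻¹ * h * (t⁻¹)⁻¹ := by group
          rwa [he] at this
        · intro hh
          have he : t⁻¹ * h * (t⁻¹)⁻¹ = t⁻¹ * h * t := by group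
          rw [he] at hh
          have : h ∈ cj H t := by rw [mem_cj]; exact hh
          rw [← heq] at this
          exact this
      simpa using inv_mem hinv
    -- t is a 2-element
    obtain ⟨j, hj⟩ := hpg ⟨t * t, ht⟩
    have hj' : (t * t) ^ (2 ^ j) = 1 := by
      have := congrArg (Subtype.val) hj
      push_cast at this
      exact this
    have hpow : t ^ (2 ^ (j + 1)) = 1 := by
      have : t ^ (2 ^ (j+1)) = (t * t) ^ (2 ^ j) := by
        rw [← pow_two, ← pow_mul, pow_succ, mul_comm (2^j) 2]
      rw [this, hj']
    have hdvd2 : orderOf t ∣ 2 ^ (j + 1) := orderOf_dvd_of_pow_eq_one hpow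
    obtain ⟨i, _, hi⟩ := (Nat.dvd_prime_pow Nat.prime_two).mp hdvd2
    obtain ⟨h, hh, hsq⟩ := cond t hnorm ⟨i, hi⟩ (by rw [pow_two]; exact ht)
    exact ⟨h, hh, by rw [← pow_two]; exact hsq⟩
  · -- |H| is odd
    set y : H := ⟨t * t, ht⟩ with hy
    set r : ℕ := orderOf y with hr
    have hrdvd : r ∣ Nat.card H := orderOf_dvd_natCard y
    have hrodd : Odd r := by
      by_contra hcon
      rw [Nat.not_odd_iff_even] at hcon
      obtain ⟨m, hm⟩ := hrdvd
      exact (Nat.not_even_iff_odd.mpr hoddH) (hm ▸ Nat.even_mul.mpr (Or.inl hcon))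
    have hrpos : 0 < r := by
      rw [hr]
      exact orderOf_pos y
    have hyr : (t * t) ^ r = 1 := by
      have := congrArg (Subtype.val) (pow_orderOf_eq_one y)
      push_cast at this
      exact this
    refine ⟨(t * t) ^ ((r - 1) / 2), pow_mem ht _, ?_⟩
    have hexp : t * (t * t) ^ ((r - 1) / 2) = t ^ r := by
      rw [← pow_two, ← pow_mul, ← pow_succ']
      congr 1
      rcases hrodd with ⟨m, hm⟩
      omega
    rw [hexp, ← pow_add]
    have h2 : r + r = 2 * r := by omega
    rw [h2, pow_mul, pow_two]
    exact hyr
  · -- |G : H| is odd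
    set M : Subgroup G := H ⊓ cj H t⁻¹ with hM
    have hMle : M ≤ H := inf_le_left
    have memM : ∀ x, x ∈ M ↔ (x ∈ H ∧ t * x * t⁻¹ ∈ H) := by
      intro x
      rw [hM, Subgroup.mem_inf, mem_cj]
      have e : (t⁻¹)⁻¹ * x * t⁻¹ = t * x * t⁻¹ := by group
      rw [e]
    have htt : t * t ∈ M := by
      rw [memM]
      refine ⟨ht, ?_⟩
      have e : t * (t * t) * t⁻¹ = t * t := by group
      rw [e]; exact ht
    have hconj : ∀ a ∈ M, t * a * t⁻¹ ∈ M := by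
      intro a ha
      rw [memM] at ha ⊢
      refine ⟨ha.2, ?_⟩
      have e : t * (t * a * t⁻¹) * t⁻¹ = (t * t) * a * (t * t)⁻¹ := by group
      rw [e]
      have := mul_mem (mul_mem ht ha.1) (inv_mem ht)
      exact this
    have hconjinv : ∀ a ∈ M, t⁻¹ * a * t ∈ M := by
      intro a ha
      rw [memM] at ha ⊢
      constructor
      · have e : t⁻¹ * a * t = (t * t)⁻¹ * (t * a * t⁻¹) * (t * t) := by group
        rw [e]
        exact mul_mem (mul_mem (inv_mem ht) ha.2) ht
      · have e : t * (t⁻¹ * a * t) * t⁻¹ = a := by group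
        rw [e]; exact ha.1
    have hcM : Nat.card (H ⊓ cj H t : Subgroup G) = Nat.card M := card_inf_cj_inv t
    have hMpos : 0 < Nat.card M := Nat.card_pos
    have hrel : Nat.card M * (M.subgroupOf H).index = Nat.card H := by
      have h1 : Nat.card (M.subgroupOf H) = Nat.card M :=
        Nat.card_congr (Subgroup.subgroupOfEquivOfLe hMle).toEquiv
      rw [← h1]
      exact Subgroup.card_mul_index (M.subgroupOf H)
    have hreln : (M.subgroupOf H).index = n := by
      apply Nat.eq_of_mul_eq_mul_left hMpos
      rw [hrel, ← hCL, hcM, mul_comm]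
    have hidx : Odd M.index := by
      rw [← Subgroup.relIndex_mul_index hMle]
      refine Odd.mul ?_ hoddI
      show Odd ((M.subgroupOf H).index)
      rw [hreln]
      exact hodd
    have htmem : t ∈ M := by
      by_contra htM
      set P : Subgroup G :=
        { carrier := (M : Set G) ∪ (fun x => t * x) '' (M : Set G)
          one_mem' := Or.inl M.one_mem
          mul_mem' := by
            rintro a b (ha | ⟨a', ha', rfl⟩) (hb | ⟨b', hb', rfl⟩)
            · exact Or.inl (mul_mem ha hb)
            · refine Or.inr ⟨(t⁻¹ * a * t) * b', mul_mem (hconjinv a ha) hb', by group⟩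
            · exact Or.inr ⟨a' * b, mul_mem ha' hb, by group⟩
            · refine Or.inl ?_
              have e : (t * a') * (t * b') = ((t * t) * (t⁻¹ * a' * t)) * b' := by group
              rw [e]
              exact mul_mem (mul_mem htt (hconjinv a' ha')) hb'
          inv_mem' := by
            rintro a (ha | ⟨a', ha', rfl⟩)
            · exact Or.inl (inv_mem ha)
            · refine Or.inr ⟨(t⁻¹ * a'⁻¹ * t) * (t * t)⁻¹,
                mul_mem (hconjinv _ (inv_mem ha')) (inv_mem htt), by group⟩ } with hP
      have hdisj : Disjoint (M : Set G) ((fun x => t * x) '' (M : Set G)) := by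
        rw [Set.disjoint_left]
        rintro x hx ⟨x', hx', rfl⟩
        apply htM
        have e : t = (t * x') * x'⁻¹ := by group
        rw [e]
        exact mul_mem hx (inv_mem hx')
      have hcardP : Nat.card P = 2 * Nat.card M := by
        have h1 : Nat.card P = ((M : Set G) ∪ (fun x => t * x) '' (M : Set G)).ncard := by
          rw [← Nat.card_coe_set_eq]
          exact Nat.card_congr ⟨fun x => ⟨x.1, x.2⟩, fun x => ⟨x.1, x.2⟩,
            fun _ => rfl, fun _ => rfl⟩
        have h2 : Nat.card M = ((M : Set G)).ncard := by
          rw [← Nat.card_coe_set_eq]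
          exact Nat.card_congr ⟨fun x => ⟨x.1, x.2⟩, fun x => ⟨x.1, x.2⟩,
            fun _ => rfl, fun _ => rfl⟩
        rw [h1, Set.ncard_union_eq hdisj (Set.toFinite _) (Set.toFinite _),
          Set.ncard_image_of_injective _ (mul_right_injective t), h2]
        omega
      have hdvdP := Subgroup.card_subgroup_dvd_card P
      rw [hcardP, ← Subgroup.card_mul_index M, mul_comm 2 (Nat.card M)] at hdvdP
      have h2dvd : 2 ∣ M.index := (Nat.mul_dvd_mul_iff_left hMpos).mp hdvdP
      rw [Nat.odd_iff] at hidx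
      omega
    exact ⟨t⁻¹, inv_mem (hMle htmem), by group⟩

end PerfectCodeAux

namespace PerfectCodeAux

variable {G : Type*} [Group G] {H : Subgroup G}

/-- A good pairing of a class `A` of left cosets. -/
def GoodPairing (H : Subgroup G) (A : Set (G ⧸ H)) (σ : G ⧸ H → G ⧸ H) : Prop :=
  (∀ q ∉ A, σ q = q) ∧ (∀ q ∈ A, σ q ∈ A) ∧ (∀ q, σ (σ q) = q) ∧
  (∀ q ∈ A, σ q = q → ∃ t : G, (t : G ⧸ H) = q ∧ t * t = 1) ∧
  (∀ q ∈ A, σ q ≠ q → ∃ t : G, (t : G ⧸ H) = q ∧ ((t⁻¹ : G) : G ⧸ H) = σ q)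

/-- The class of cosets associated to `g` : those contained in `HgH ∪ Hg⁻¹H`. -/
def cls (H : Subgroup G) (g : G) : Set (G ⧸ H) :=
  QuotientGroup.mk '' (dc H g ∪ dc H g⁻¹)

lemma mem_cls_self (g : G) : (g : G ⧸ H) ∈ cls H g :=
  ⟨g, Or.inl (self_mem_dc g), rfl⟩

lemma cls_eq_of_mem {g : G} {q : G ⧸ H} (hq : q ∈ cls H g) (x : G) (hx : (x : G ⧸ H) = q) :
    cls H x = cls H g := by
  obtain ⟨y, hy, rfl⟩ := hq
  have hxmem : x ∈ dc H g ∪ dc H g⁻¹ := by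
    rcases hy with hy | hy
    · exact Or.inl (mem_dc_of_mk_eq hy hx.symm)
    · exact Or.inr (mem_dc_of_mk_eq hy hx.symm)
  rcases hxmem with hx' | hx'
  · rw [cls, cls, dc_eq_of_mem hx', dc_eq_of_mem (inv_mem_dc_inv hx')]
  · rw [cls, cls, dc_eq_of_mem hx']
    have h2 : x⁻¹ ∈ dc H g := by
      have := inv_mem_dc_inv hx'
      rwa [inv_inv] at this
    rw [dc_eq_of_mem h2, Set.union_comm]

/-- Existence of a good pairing on each class. -/
lemma good_pairing_exists [Finite G] (g : G)
    (hanchor : dc H g⁻¹ = dc H g →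
      Odd (Nat.card ((QuotientGroup.mk '' dc H g : Set (G ⧸ H)))) →
      ∃ x : G, (x : G ⧸ H) = (g : G ⧸ H) ∧ x * x = 1) :
    ∃ σ, GoodPairing H (cls H g) σ := by
  by_cases hamb : dc H g⁻¹ = dc H g
  · -- ambivalent class : a single inverse-closed double coset
    have hA : cls H g = QuotientGroup.mk '' (dc H g) := by
      rw [cls, hamb, Set.union_self]
    -- any two cosets in the class can be paired
    have hpair : ∀ q ∈ cls H g, ∀ q' ∈ cls H g,
        ∃ t : G, (t : G ⧸ H) = q ∧ ((t⁻¹ : G) : G ⧸ H) = q' := by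
      rw [hA]
      rintro _ ⟨b, hb, rfl⟩ _ ⟨c, hc, rfl⟩
      refine pair_exists hb ?_
      rw [← hamb]
      have := inv_mem_dc_inv hc
      exact this
    rcases Nat.even_or_odd (Nat.card (cls H g)) with hev | hodd
    · obtain ⟨σ, h1, h2⟩ := even_pairing_set _ hev
      refine ⟨σ, h1, fun q hq => (h2 q hq).1, ?_, ?_, ?_⟩
      · intro q
        by_cases hq : q ∈ cls H g
        · exact (h2 q hq).2.1
        · rw [h1 q hq, h1 q hq]
      · intro q hq hfix
        exact absurd hfix (h2 q hq).2.2
      · intro q hq _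
        exact hpair q hq (σ q) ((h2 q hq).1)
    · -- odd: use the anchor
      have hodd' : Odd (Nat.card ((QuotientGroup.mk '' dc H g : Set (G ⧸ H)))) := by
        rwa [hA] at hodd
      obtain ⟨x, hx1, hx2⟩ := hanchor hamb hodd'
      have hq₀ : (g : G ⧸ H) ∈ cls H g := mem_cls_self g
      obtain ⟨σ, h1, h2, h3, h4⟩ := odd_pairing_set _ hodd hq₀
      refine ⟨σ, h1, fun q hq => (h2 q hq).1, ?_, ?_, ?_⟩
      · intro q
        by_cases hq : q ∈ cls H g
        · exact (h2 q hq).2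
        · rw [h1 q hq, h1 q hq]
      · intro q hq hfix
        have := h4 q hq hfix
        subst this
        exact ⟨x, hx1, hx2⟩
      · intro q hq _
        exact hpair q hq (σ q) ((h2 q hq).1)
  · -- split class : two distinct double cosets swapped by inversion
    set B : Set (G ⧸ H) := QuotientGroup.mk '' (dc H g) with hB
    set B' : Set (G ⧸ H) := QuotientGroup.mk '' (dc H g⁻¹) with hB'
    have hABB : cls H g = B ∪ B' := Set.image_union _ _ _
    have hdisj : ∀ q, q ∈ B → q ∈ B' → False := by
      rintro q ⟨b, hb, rfl⟩ ⟨c, hc, hcb⟩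
      apply hamb
      have hbmem : b ∈ dc H g⁻¹ := mem_dc_of_mk_eq hc hcb
      rw [← dc_eq_of_mem hbmem, dc_eq_of_mem hb]
    have hcards : Nat.card B = Nat.card B' := by
      have h1 := card_cosets_dc (H := H) g
      have h2 := card_cosets_dc (H := H) g⁻¹
      have h3 := card_inf_cj_inv (H := H) g
      have hpos : 0 < Nat.card (H ⊓ cj H g⁻¹ : Subgroup G) := Nat.card_pos
      rw [h3] at h1
      rw [← h2] at h1
      exact Nat.eq_of_mul_eq_mul_right hpos h1
    obtain ⟨e⟩ : Nonempty (B ≃ B') := Finite.card_eq.mp hcards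
    classical
    refine ⟨fun q => if hq : q ∈ B then (e ⟨q, hq⟩ : G ⧸ H)
      else if hq' : q ∈ B' then (e.symm ⟨q, hq'⟩ : G ⧸ H) else q, ?_, ?_, ?_, ?_, ?_⟩
    · intro q hq
      rw [hABB] at hq
      have h1 : q ∉ B := fun h => hq (Or.inl h)
      have h2 : q ∉ B' := fun h => hq (Or.inr h)
      simp [h1, h2]
    · intro q hq
      by_cases h1 : q ∈ B
      · simp only [dif_pos h1]
        rw [hABB]
        exact Or.inr (e ⟨q, h1⟩).2
      · rw [hABB] at hq
        have h2 : q ∈ B' := hq.resolve_left h1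
        simp only [dif_neg h1, dif_pos h2]
        rw [hABB]
        exact Or.inl (e.symm ⟨q, h2⟩).2
    · intro q
      by_cases h1 : q ∈ B
      · simp only [dif_pos h1]
        have h2 : ((e ⟨q, h1⟩ : B') : G ⧸ H) ∈ B' := (e ⟨q, h1⟩).2
        have h3 : ((e ⟨q, h1⟩ : B') : G ⧸ H) ∉ B := fun h => hdisj _ h h2
        simp only [dif_neg h3, dif_pos h2]
        have h4 : (⟨((e ⟨q, h1⟩ : B') : G ⧸ H), h2⟩ : B') = e ⟨q, h1⟩ := rfl
        rw [h4, Equiv.symm_apply_apply]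
      · by_cases h2 : q ∈ B'
        · simp only [dif_neg h1, dif_pos h2]
          have h3 : ((e.symm ⟨q, h2⟩ : B) : G ⧸ H) ∈ B := (e.symm ⟨q, h2⟩).2
          simp only [dif_pos h3]
          have h4 : (⟨((e.symm ⟨q, h2⟩ : B) : G ⧸ H), h3⟩ : B) = e.symm ⟨q, h2⟩ := rfl
          rw [h4, Equiv.apply_symm_apply]
        · simp [h1, h2]
    · intro q hq hfix
      exfalso
      by_cases h1 : q ∈ B
      · simp only [dif_pos h1] at hfix
        exact hdisj q h1 (hfix ▸ (e ⟨q, h1⟩).2)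
      · rw [hABB] at hq
        have h2 : q ∈ B' := hq.resolve_left h1
        simp only [dif_neg h1, dif_pos h2] at hfix
        exact hdisj q (hfix ▸ (e.symm ⟨q, h2⟩).2) h2
    · intro q hq _
      by_cases h1 : q ∈ B
      · simp only [dif_pos h1]
        obtain ⟨b, hb, hbq⟩ := h1
        obtain ⟨c, hc, hcq⟩ := (e ⟨q, ⟨b, hb, hbq⟩⟩).2
        have hc' : c⁻¹ ∈ dc H g := by
          have := inv_mem_dc_inv hc
          rwa [inv_inv] at this
        obtain ⟨u, hu1, hu2⟩ := pair_exists hb hc'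
        exact ⟨u, by rw [hu1, hbq], by rw [hu2, hcq]⟩
      · rw [hABB] at hq
        have h2 : q ∈ B' := hq.resolve_left h1
        simp only [dif_neg h1, dif_pos h2]
        obtain ⟨b, hb, hbq⟩ := h2
        obtain ⟨c, hc, hcq⟩ := (e.symm ⟨q, ⟨b, hb, hbq⟩⟩).2
        have hc' : c⁻¹ ∈ dc H g⁻¹ := inv_mem_dc_inv hc
        obtain ⟨u, hu1, hu2⟩ := pair_exists hb hc'
        exact ⟨u, by rw [hu1, hbq], by rw [hu2, hcq]⟩

end PerfectCodeAux

namespace PerfectCodeAux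

variable {G : Type*} [Group G] {H : Subgroup G}

lemma cls_of_mem_H {z : G} (hz : z ∈ H) : cls H z = {((1 : G) : G ⧸ H)} := by
  ext q
  constructor
  · rintro ⟨x, hx, rfl⟩
    have hxH : x ∈ H := by
      rcases hx with ⟨a, ha, b, hb, rfl⟩ | ⟨a, ha, b, hb, rfl⟩
      · exact mul_mem (mul_mem ha hz) hb
      · exact mul_mem (mul_mem ha (inv_mem hz)) hb
    have : (x : G ⧸ H) = ((1 : G) : G ⧸ H) := by
      rw [QuotientGroup.eq]
      simpa using inv_mem hxH
    simp [this]
  · rintro rfl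
    exact ⟨1, Or.inl ⟨z⁻¹, inv_mem hz, 1, one_mem _, by group⟩, rfl⟩

lemma exists_rep [Finite G] (H : Subgroup G)
    (hanchor : ∀ g : G, dc H g⁻¹ = dc H g →
      Odd (Nat.card ((QuotientGroup.mk '' dc H g : Set (G ⧸ H)))) →
      ∃ x : G, (x : G ⧸ H) = (g : G ⧸ H) ∧ x * x = 1) :
    ∃ rep : G ⧸ H → G, (∀ q, ((rep q : G) : G ⧸ H) = q) ∧
      (∀ q, rep (((rep q)⁻¹ : G) : G ⧸ H) = (rep q)⁻¹) ∧
      rep ((1 : G) : G ⧸ H) = 1 := by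
  classical
  -- a globally coherent good pairing
  set F : Set (G ⧸ H) → (G ⧸ H → G ⧸ H) :=
    fun A => if h : ∃ σ, GoodPairing H A σ then h.choose else id with hF
  set Cls : (G ⧸ H) → Set (G ⧸ H) := fun q => cls H (Quotient.out q) with hCls
  have hgood : ∀ q, GoodPairing H (Cls q) (F (Cls q)) := by
    intro q
    have hex : ∃ σ, GoodPairing H (Cls q) σ :=
      good_pairing_exists (Quotient.out q) (hanchor (Quotient.out q))
    rw [hF]
    simp only [dif_pos hex]
    exact hex.choose_spec
  set σ : G ⧸ H → G ⧸ H := fun q => F (Cls q) q with hσ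
  have hmemcls : ∀ q, q ∈ Cls q := by
    intro q
    have := mem_cls_self (H := H) (Quotient.out q)
    rwa [QuotientGroup.out_eq'] at this
  have hclseq : ∀ q q', q' ∈ Cls q → Cls q' = Cls q := by
    intro q q' h
    exact cls_eq_of_mem h (Quotient.out q') (QuotientGroup.out_eq' q')
  have hσmem : ∀ q, σ q ∈ Cls q := fun q => (hgood q).2.1 q (hmemcls q)
  have hσσ : ∀ q, σ (σ q) = q := by
    intro q
    show F (Cls (σ q)) (σ q) = q
    rw [hclseq q (σ q) (hσmem q)]
    exact (hgood q).2.2.1 q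
  have Hfix : ∀ q, σ q = q → ∃ t : G, (t : G ⧸ H) = q ∧ t * t = 1 :=
    fun q h => (hgood q).2.2.2.1 q (hmemcls q) h
  have Hpair : ∀ q, σ q ≠ q → ∃ t : G, (t : G ⧸ H) = q ∧ ((t⁻¹ : G) : G ⧸ H) = σ q :=
    fun q h => (hgood q).2.2.2.2 q (hmemcls q) h
  have hσ1 : σ ((1 : G) : G ⧸ H) = ((1 : G) : G ⧸ H) := by
    have h1 : Quotient.out ((1 : G) : G ⧸ H) ∈ H := by
      have := QuotientGroup.out_eq' ((1 : G) : G ⧸ H)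
      rw [QuotientGroup.eq] at this
      simpa using this
    have h2 : Cls ((1 : G) : G ⧸ H) = {((1 : G) : G ⧸ H)} := cls_of_mem_H h1
    have := hσmem ((1 : G) : G ⧸ H)
    rw [h2] at this
    simpa using this
  -- choose coset representatives
  have hu : ∀ q : G ⧸ H, ∃ t : G, ((t : G ⧸ H) = q) ∧
      (σ q = q → (q ≠ ((1 : G) : G ⧸ H) → t * t = 1) ∧ (q = ((1 : G) : G ⧸ H) → t = 1)) ∧
      (σ q ≠ q → ((t⁻¹ : G) : G ⧸ H) = σ q) := by
    intro q
    by_cases h : σ q = q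
    · by_cases h1 : q = ((1 : G) : G ⧸ H)
      · exact ⟨1, h1.symm, fun _ => ⟨fun hc => absurd h1 hc, fun _ => rfl⟩,
          fun hc => absurd h hc⟩
      · obtain ⟨t, ht1, ht2⟩ := Hfix q h
        exact ⟨t, ht1, fun _ => ⟨fun _ => ht2, fun hc => absurd hc h1⟩, fun hc => absurd h hc⟩
    · obtain ⟨t, ht1, ht2⟩ := Hpair q h
      exact ⟨t, ht1, fun hc => absurd hc h, fun _ => ht2⟩
  choose u hu1 hu2 hu3 using hu
  letI : LinearOrder (G ⧸ H) := IsWellOrder.linearOrder WellOrderingRel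
  set rep : G ⧸ H → G := fun q =>
    if σ q = q then u q else (if q < σ q then u q else (u (σ q))⁻¹) with hrep
  have hrepval : ∀ q, (σ q = q → rep q = u q) ∧
      (σ q ≠ q → q < σ q → rep q = u q) ∧
      (σ q ≠ q → ¬ q < σ q → rep q = (u (σ q))⁻¹) := by
    intro q
    refine ⟨fun h => by rw [hrep]; simp only [if_pos h],
      fun h hlt => by rw [hrep]; simp only [if_neg h, if_pos hlt],
      fun h hlt => by rw [hrep]; simp only [if_neg h, if_neg hlt]⟩
  have hR1 : ∀ q, ((rep q : G) : G ⧸ H) = q := by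
    intro q
    by_cases h : σ q = q
    · rw [(hrepval q).1 h]; exact hu1 q
    · by_cases hlt : q < σ q
      · rw [(hrepval q).2.1 h hlt]; exact hu1 q
      · rw [(hrepval q).2.2 h hlt]
        have hne : σ (σ q) ≠ σ q := by
          rw [hσσ q]; exact fun hc => h hc.symm
        have := hu3 (σ q) hne
        rw [hσσ q] at this
        exact this
  have hR4 : rep ((1 : G) : G ⧸ H) = 1 := by
    rw [(hrepval _).1 hσ1]
    exact (hu2 _ hσ1).2 rfl
  refine ⟨rep, hR1, ?_, hR4⟩
  intro q
  by_cases h : σ q = q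
  · by_cases h1 : q = ((1 : G) : G ⧸ H)
    · have he : rep q = 1 := by
        rw [(hrepval q).1 h]
        exact (hu2 q h).2 h1
      rw [he]
      have : (((1 : G)⁻¹ : G) : G ⧸ H) = ((1 : G) : G ⧸ H) := by simp
      rw [this, hR4]
      simp
    · have ht2 : u q * u q = 1 := (hu2 q h).1 h1
      have htinv : (u q)⁻¹ = u q := inv_eq_of_mul_eq_one_right ht2
      rw [(hrepval q).1 h, htinv, hu1 q]
      exact (hrepval q).1 h
  · have e := hσσ q
    have hne : σ (σ q) ≠ σ q := by
      rw [e]; exact fun hc => h hc.symm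
    by_cases hlt : q < σ q
    · rw [(hrepval q).2.1 h hlt]
      have hπ : (((u q)⁻¹ : G) : G ⧸ H) = σ q := hu3 q h
      rw [hπ]
      have hnlt : ¬ σ q < σ (σ q) := by
        rw [e]; exact lt_asymm hlt
      rw [(hrepval (σ q)).2.2 hne hnlt, e]
    · have hgt : σ q < q := lt_of_le_of_ne (not_lt.mp hlt) h
      rw [(hrepval q).2.2 h hlt]
      have hπ : (((u (σ q))⁻¹)⁻¹ : G) = u (σ q) := inv_inv _
      rw [hπ, hu1 (σ q)]
      have hlt' : σ q < σ (σ q) := by rw [e]; exact hgt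
      rw [(hrepval (σ q)).2.1 hne hlt']

end PerfectCodeAux

open PerfectCodeAux

theorem perfect_code_iff_normalizer_two_element_condition {G : Type*} [Group G] [Finite G]
    (H : Subgroup G)
    (hyp : IsPGroup 2 H ∨ Odd (Nat.card H) ∨ Odd H.index) :
    IsPerfectCode H ↔
      ∀ x ∈ Subgroup.normalizer (H : Set G), (∃ n : ℕ, orderOf x = 2 ^ n) → x ^ 2 ∈ H →
        ∃ h ∈ H, (x * h) ^ 2 = 1 := by
  constructor
  · -- a perfect code satisfies the condition (no hypothesis needed)
    rintro ⟨T, hT1, hTinv, hTtrans⟩ x hxN _ hx2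
    obtain ⟨t, ⟨htT, htH⟩, huniq⟩ := hTtrans x
    have htinvT : t⁻¹ ∈ T := by
      rw [← hTinv, Set.mem_inv, inv_inv]
      exact htT
    have hxinvH : x⁻¹ * t⁻¹ ∈ H := by
      have hmem1 : x⁻¹ * (x⁻¹ * t)⁻¹ * x ∈ H := by
        have hinv : x⁻¹ ∈ Subgroup.normalizer (H : Set G) := inv_mem hxN
        rw [Subgroup.mem_normalizer_iff] at hinv
        have := (hinv ((x⁻¹ * t)⁻¹)).mp (inv_mem htH)
        have e : x⁻¹ * (x⁻¹ * t)⁻¹ * x⁻¹⁻¹ = x⁻¹ * (x⁻¹ * t)⁻¹ * x := by group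
        rwa [e] at this
      have hmem2 : (x * x)⁻¹ ∈ H := by
        rw [pow_two] at hx2
        exact inv_mem hx2
      have e : x⁻¹ * t⁻¹ = (x⁻¹ * (x⁻¹ * t)⁻¹ * x) * (x * x)⁻¹ := by group
      rw [e]
      exact mul_mem hmem1 hmem2
    have htt : t⁻¹ = t := huniq t⁻¹ ⟨htinvT, hxinvH⟩
    refine ⟨x⁻¹ * t, htH, ?_⟩
    have hxt : x * (x⁻¹ * t) = t := by group
    rw [pow_two, hxt]
    exact mul_eq_one_iff_inv_eq.mpr htt
  · -- the condition implies being a perfect code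
    intro cond
    have hanchor : ∀ g : G, dc H g⁻¹ = dc H g →
        Odd (Nat.card ((QuotientGroup.mk '' dc H g : Set (G ⧸ H)))) →
        ∃ x : G, (x : G ⧸ H) = (g : G ⧸ H) ∧ x * x = 1 := by
      intro g hamb hodd
      have hg : g⁻¹ ∈ dc H g := by
        rw [← hamb]
        exact self_mem_dc g⁻¹
      obtain ⟨t, ht1, ht2⟩ := pair_exists (self_mem_dc g) hg
      have htt : t * t ∈ H := by
        have h := ht2.trans ht1.symm
        rw [QuotientGroup.eq, inv_inv] at h
        exact h
      have hdct : dc H t = dc H g := dc_eq_of_mem (mem_dc_of_mk_eq (self_mem_dc g) ht1.symm)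
      have hodd' : Odd (Nat.card ((QuotientGroup.mk '' dc H t : Set (G ⧸ H)))) := by
        rw [hdct]; exact hodd
      obtain ⟨h, hh, hsq⟩ := key_lemma hyp cond t htt hodd'
      refine ⟨t * h, ?_, hsq⟩
      rw [← ht1, QuotientGroup.eq]
      have e : (t * h)⁻¹ * t = h⁻¹ := by group
      rw [e]
      exact inv_mem hh
    obtain ⟨rep, hR1, hR3, hR4⟩ := exists_rep H hanchor
    refine ⟨Set.range rep, ⟨((1 : G) : G ⧸ H), hR4⟩, ?_, ?_⟩
    · ext x
      rw [Set.mem_inv]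
      constructor
      · rintro ⟨q, hq⟩
        exact ⟨(((rep q)⁻¹ : G) : G ⧸ H), by rw [hR3 q, hq, inv_inv]⟩
      · rintro ⟨q, hq⟩
        exact ⟨(((rep q)⁻¹ : G) : G ⧸ H), by rw [hR3 q, hq]⟩
    · intro g
      refine ⟨rep ((g : G) : G ⧸ H), ⟨⟨_, rfl⟩, ?_⟩, ?_⟩
      · exact QuotientGroup.eq.mp (hR1 ((g : G) : G ⧸ H)).symm
      · rintro t' ⟨⟨q, rfl⟩, ht'⟩
        have h : ((g : G) : G ⧸ H) = ((rep q : G) : G ⧸ H) := QuotientGroup.eq.mpr ht'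
        rw [hR1 q] at h
        rw [h]
end
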